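/- arXiv:2312.08121 — 7 statements merged into one kernel-verified Lean document; each statement's English description precedes it below -/
import Mathlib

section
/- Let x : ℤ → ℤ be any integer-valued sequence and let i ∈ ℤ. Then an integer j is a descendant of i under the record map R_x if and only if j < i and y_x(k,i) ≥ 0 for every integer k with j ≤ k < i. -/
/-!
If `R n ≠ n`, every tail sum `y(k, R n)` with `n ≤ k < R n` is nonnegative: for `k = n` by the
definition of `R`, and for `n < k` because minimality of `R n` forces `y(n, k) < 0`, so
`y(k, R n) = y(n, R n) - y(n, k) > 0`. This "weak record" property of a pair `j < i` is transitive
by additivity of `y`, which gives one direction by induction on the number of iterations.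
Conversely, if `(j, i)` is a weak record pair, then `i` is a candidate in the definition of `R j`,
so `j < R j ≤ i`, and `(R j, i)` is again a weak record pair unless `R j = i`; induct on `i - j`.
-/

attribute [local instance] Classical.propDecidable

/-- The record map of an integer sequence: `n` is sent to the least integer `j > n`
with `∑_{l=n}^{j-1} x l ≥ 0` if such `j` exists, and to `n` otherwise. -/
noncomputable def recordMap (x : ℤ → ℤ) (n : ℤ) : ℤ :=
  if ∃ j : ℤ, n < j ∧ 0 ≤ ∑ l ∈ Finset.Ico n j, x l then
    sInf {j : ℤ | n < j ∧ 0 ≤ ∑ l ∈ Finset.Ico n j, x l}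
  else n

theorem Finset.sum_Ico_add_sum_Ico {α M : Type*} [LinearOrder α] [LocallyFiniteOrder α]
    [AddCommMonoid M] (f : α → M) {a b c : α} (hab : a ≤ b) (hbc : b ≤ c) :
    ∑ l ∈ Ico a b, f l + ∑ l ∈ Ico b c, f l = ∑ l ∈ Ico a c, f l := by
  -- `convert` reconciles the classical `DecidableEq` instance of the union with the order's one
  convert (sum_union (Ico_disjoint_Ico_consecutive a b c)).symm using 2
  convert (Ico_union_Ico_eq_Ico hab hbc).symm

/-- For the walk `S` with increments `x`, the value `S i` is a weak maximum of `S` on `[j, i]`. -/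
def IsWeakRecord (x : ℤ → ℤ) (j i : ℤ) : Prop :=
  j < i ∧ ∀ k : ℤ, j ≤ k → k < i → 0 ≤ ∑ l ∈ Finset.Ico k i, x l

section

variable (x : ℤ → ℤ)

theorem IsWeakRecord.trans {j m i : ℤ} (hjm : IsWeakRecord x j m) (hmi : IsWeakRecord x m i) :
    IsWeakRecord x j i := by
  refine ⟨hjm.1.trans hmi.1, fun k hjk hki => ?_⟩
  rcases le_or_gt m k with hmk | hkm
  · exact hmi.2 k hmk hki
  · rw [← Finset.sum_Ico_add_sum_Ico x hkm.le hmi.1.le]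
    exact add_nonneg (hjm.2 k hjk hkm) (hmi.2 m le_rfl hmi.1)

theorem IsWeakRecord.of_le {j j' i : ℤ} (h : IsWeakRecord x j i) (hjj' : j ≤ j') (hj'i : j' < i) :
    IsWeakRecord x j' i :=
  ⟨hj'i, fun k hj'k => h.2 k (hjj'.trans hj'k)⟩

theorem recordMap_eq_self {n : ℤ} (h : ¬∃ j : ℤ, n < j ∧ 0 ≤ ∑ l ∈ Finset.Ico n j, x l) :
    recordMap x n = n :=
  if_neg h

theorem recordMap_le {n j : ℤ} (hnj : n < j) (hj : 0 ≤ ∑ l ∈ Finset.Ico n j, x l) :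
    recordMap x n ≤ j := by
  rw [recordMap, if_pos ⟨j, hnj, hj⟩]
  exact csInf_le ⟨n, fun _ hk => hk.1.le⟩ ⟨hnj, hj⟩

theorem isWeakRecord_recordMap {n : ℤ}
    (hex : ∃ j : ℤ, n < j ∧ 0 ≤ ∑ l ∈ Finset.Ico n j, x l) :
    IsWeakRecord x n (recordMap x n) := by
  obtain ⟨hlt, hsum⟩ : n < recordMap x n ∧ 0 ≤ ∑ l ∈ Finset.Ico n (recordMap x n), x l := by
    rw [recordMap, if_pos hex]
    exact Int.csInf_mem hex ⟨n, fun _ hk => hk.1.le⟩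
  refine ⟨hlt, fun k hnk hk => ?_⟩
  rcases hnk.eq_or_lt with rfl | hnk
  · exact hsum
  · have hneg : ∑ l ∈ Finset.Ico n k, x l < 0 := by
      by_contra! hk_cand
      exact (recordMap_le x hnk hk_cand).not_gt hk
    rw [← Finset.sum_Ico_add_sum_Ico x hnk.le hk.le] at hsum
    linarith

theorem eq_or_isWeakRecord_of_iterate_recordMap_eq (m : ℕ) {j i : ℤ}
    (h : (recordMap x)^[m] j = i) : j = i ∨ IsWeakRecord x j i := by
  induction m generalizing j with
  | zero => exact Or.inl h
  | succ m ih =>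
    rw [Function.iterate_succ_apply] at h
    by_cases hex : ∃ k : ℤ, j < k ∧ 0 ≤ ∑ l ∈ Finset.Ico j k, x l
    · have hstep := isWeakRecord_recordMap x hex
      rcases ih h with hfirst | hrest
      · exact Or.inr (hfirst ▸ hstep)
      · exact Or.inr (hstep.trans x hrest)
    · rw [recordMap_eq_self x hex] at h
      exact ih h

theorem exists_iterate_succ_recordMap_eq_of_isWeakRecord {j i : ℤ} (h : IsWeakRecord x j i) :
    ∃ m : ℕ, (recordMap x)^[m + 1] j = i := by
  have hi_cand : 0 ≤ ∑ l ∈ Finset.Ico j i, x l := h.2 j le_rfl h.1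
  have hstep := isWeakRecord_recordMap x ⟨i, h.1, hi_cand⟩
  rcases (recordMap_le x h.1 hi_cand).eq_or_lt with hfirst | hlt
  · exact ⟨0, hfirst⟩
  · obtain ⟨m, hm⟩ := exists_iterate_succ_recordMap_eq_of_isWeakRecord (h.of_le x hstep.1.le hlt)
    exact ⟨m + 1, by rwa [Function.iterate_succ_apply]⟩
termination_by (i - j).toNat
decreasing_by have := hstep.1; omega

end

/-- An integer `j` is a descendant of `i` under the record map iff `j < i` and
the sums `y_x(k,i)` are nonnegative for every `k` with `j ≤ k < i`. -/
theorem descendants_iff (x : ℤ → ℤ) (i j : ℤ) :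
    (j ≠ i ∧ ∃ m : ℕ, 1 ≤ m ∧ (recordMap x)^[m] j = i) ↔
      (j < i ∧ ∀ k : ℤ, j ≤ k → k < i → 0 ≤ ∑ l ∈ Finset.Ico k i, x l) := by
  constructor
  · rintro ⟨hne, m, -, hm⟩
    exact (eq_or_isWeakRecord_of_iterate_recordMap_eq x m hm).resolve_left hne
  · intro h
    obtain ⟨m, hm⟩ := exists_iterate_succ_recordMap_eq_of_isWeakRecord x h
    exact ⟨h.1.ne, m + 1, Nat.le_add_left 1 m, hm⟩
end

section
/- Let x : ℤ → ℤ satisfy x(n) ≥ −1 for all n ∈ ℤ, and let i ∈ ℤ be such that y_x(j,i) < 0 for some j < i. Then the set of children of i, {j ∈ ℤ : j < i and R_x(j) = i}, is finite and has exactly x(i−1) + 1 elements. -/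
attribute [local instance] Classical.propDecidable

private noncomputable def pSum (x : ℤ → ℤ) (i j : ℤ) : ℤ := ∑ l ∈ Finset.Ico j i, x l

private lemma pSum_def (x : ℤ → ℤ) (i j : ℤ) : pSum x i j = ∑ l ∈ Finset.Ico j i, x l := rfl

private lemma recordMap_eq_iff' (x : ℤ → ℤ) {i j : ℤ} (hj : j < i) :
    recordMap x j = i ↔
      0 ≤ ∑ l ∈ Finset.Ico j i, x l ∧
        ∀ k, j < k → k < i → ∑ l ∈ Finset.Ico j k, x l < 0 := by
  unfold recordMap
  constructor
  · intro h
    by_cases hex : ∃ k : ℤ, j < k ∧ 0 ≤ ∑ l ∈ Finset.Ico j k, x l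
    · rw [if_pos hex] at h
      have hbdd : BddBelow {k : ℤ | j < k ∧ 0 ≤ ∑ l ∈ Finset.Ico j k, x l} :=
        ⟨j, fun k hk => le_of_lt hk.1⟩
      have hmem : i ∈ {k : ℤ | j < k ∧ 0 ≤ ∑ l ∈ Finset.Ico j k, x l} := by
        have := Int.csInf_mem (s := {k : ℤ | j < k ∧ 0 ≤ ∑ l ∈ Finset.Ico j k, x l}) hex hbdd
        rwa [h] at this
      refine ⟨hmem.2, fun k hk1 hk2 => ?_⟩
      by_contra hcon
      push_neg at hcon
      have hle : sInf {k : ℤ | j < k ∧ 0 ≤ ∑ l ∈ Finset.Ico j k, x l} ≤ k :=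
        csInf_le hbdd ⟨hk1, hcon⟩
      omega
    · rw [if_neg hex] at h; omega
  · rintro ⟨h1, h2⟩
    have hiA : i ∈ {k : ℤ | j < k ∧ 0 ≤ ∑ l ∈ Finset.Ico j k, x l} := ⟨hj, h1⟩
    have hex : ∃ k : ℤ, j < k ∧ 0 ≤ ∑ l ∈ Finset.Ico j k, x l := ⟨i, hiA⟩
    rw [if_pos hex]
    refine le_antisymm (csInf_le ⟨j, fun k hk => le_of_lt hk.1⟩ hiA) ?_
    apply le_csInf hex
    intro k hk
    by_contra hlt
    push_neg at hlt
    exact absurd hk.2 (not_le.mpr (h2 k hk.1 hlt))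

/-- If `x n ≥ -1` for all `n` and some sum in the past of `i` is negative, then `i` has
exactly `x (i-1) + 1` children under the record map. -/
theorem children_count (x : ℤ → ℤ) (hx : ∀ n : ℤ, -1 ≤ x n) (i : ℤ)
    (h : ∃ j : ℤ, j < i ∧ (∑ l ∈ Finset.Ico j i, x l) < 0) :
    {j : ℤ | j < i ∧ recordMap x j = i}.Finite ∧
      ({j : ℤ | j < i ∧ recordMap x j = i}.ncard : ℤ) = x (i - 1) + 1 := by
  have hsplit : ∀ j k : ℤ, j ≤ k → k ≤ i →
      ∑ l ∈ Finset.Ico j k, x l + pSum x i k = pSum x i j := fun j k h1 h2 => by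
    simp only [pSum_def]
    rw [← Finset.sum_union (Finset.Ico_disjoint_Ico_consecutive j k i),
      Finset.Ico_union_Ico_eq_Ico h1 h2]
  have hSi1 : pSum x i (i - 1) = x (i - 1) := by
    have he : Finset.Ico (i - 1) i = {i - 1} := by
      ext l; simp only [Finset.mem_Ico, Finset.mem_singleton]; omega
    rw [pSum_def, he, Finset.sum_singleton]
  -- characterize the children set
  have hCeq : {j : ℤ | j < i ∧ recordMap x j = i} =
      {j : ℤ | j < i ∧ 0 ≤ pSum x i j ∧ ∀ k, j < k → k < i → pSum x i j < pSum x i k} := by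
    ext j
    simp only [Set.mem_setOf_eq]
    constructor
    · rintro ⟨hj, hr⟩
      obtain ⟨h1, h2⟩ := (recordMap_eq_iff' x hj).mp hr
      rw [← pSum_def] at h1
      refine ⟨hj, h1, fun k hk1 hk2 => ?_⟩
      have e1 := hsplit j k (le_of_lt hk1) (le_of_lt hk2)
      have e2 := h2 k hk1 hk2
      omega
    · rintro ⟨hj, h1, h2⟩
      rw [pSum_def] at h1
      refine ⟨hj, (recordMap_eq_iff' x hj).mpr ⟨h1, fun k hk1 hk2 => ?_⟩⟩
      have e1 := hsplit j k (le_of_lt hk1) (le_of_lt hk2)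
      have e2 := h2 k hk1 hk2
      simp only [pSum_def] at e1 e2
      omega
  set C : Set ℤ :=
    {j : ℤ | j < i ∧ 0 ≤ pSum x i j ∧ ∀ k, j < k → k < i → pSum x i j < pSum x i k} with hC
  rw [hCeq]
  have hmemC : ∀ j, j ∈ C ↔
      j < i ∧ 0 ≤ pSum x i j ∧ ∀ k, j < k → k < i → pSum x i j < pSum x i k := by
    intro j; rw [hC]; simp only [Set.mem_setOf_eq]
  -- pSum x i is injective on C
  have hinj : Set.InjOn (pSum x i) C := by
    intro a ha b hb hab
    rw [hmemC] at ha hb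
    by_contra hne
    rcases lt_or_gt_of_ne hne with hlt | hlt
    · have := ha.2.2 b hlt hb.1; omega
    · have := hb.2.2 a hlt ha.1; omega
  -- image of C under pSum x i is Icc 0 (x (i-1))
  have himg : (pSum x i) '' C = Set.Icc 0 (x (i - 1)) := by
    ext v
    simp only [Set.mem_image, Set.mem_Icc]
    constructor
    · rintro ⟨j, hj, rfl⟩
      rw [hmemC] at hj
      refine ⟨hj.2.1, ?_⟩
      rcases eq_or_lt_of_le (by omega : j ≤ i - 1) with heq | hlt
      · rw [heq, hSi1]
      · have := hj.2.2 (i - 1) hlt (by omega)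
        omega
    · rintro ⟨hv0, hv1⟩
      set T : Set ℤ := {j : ℤ | j < i ∧ pSum x i j ≤ v} with hT
      obtain ⟨j₀, hj₀, hj₀'⟩ := h
      rw [← pSum_def] at hj₀'
      have hTne : T.Nonempty := ⟨j₀, hj₀, by omega⟩
      have hTbdd : BddAbove T := ⟨i, fun k hk => le_of_lt hk.1⟩
      have hjsmem : sSup T ∈ T := Int.csSup_mem (s := T) hTne hTbdd
      obtain ⟨hjs1, hjs2⟩ := hjsmem
      set js := sSup T
      have hnot : ∀ k, js < k → k < i → v < pSum x i k := by
        intro k hk1 hk2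
        by_contra hcon
        push_neg at hcon
        have : k ≤ js := le_csSup hTbdd ⟨hk2, hcon⟩
        omega
      have hval : pSum x i js = v := by
        rcases eq_or_lt_of_le (by omega : js ≤ i - 1) with heq | hlt
        · rw [heq, hSi1]; rw [heq, hSi1] at hjs2; omega
        · have h1 : v < pSum x i (js + 1) := hnot (js + 1) (by omega) (by omega)
          have h2 : ∑ l ∈ Finset.Ico js (js + 1), x l + pSum x i (js + 1) = pSum x i js :=
            hsplit js (js + 1) (by omega) (by omega)
          have h3 : Finset.Ico js (js + 1) = {js} := by
            ext l; simp only [Finset.mem_Ico, Finset.mem_singleton]; omega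
          rw [h3, Finset.sum_singleton] at h2
          have := hx js
          omega
      refine ⟨js, (hmemC js).mpr ⟨hjs1, by omega, fun k hk1 hk2 => ?_⟩, hval⟩
      have := hnot k hk1 hk2
      omega
  have hfin : C.Finite := by
    refine Set.Finite.of_finite_image ?_ hinj
    rw [himg]; exact Set.finite_Icc _ _
  refine ⟨hfin, ?_⟩
  have hcard : C.ncard = (Set.Icc 0 (x (i - 1))).ncard := by
    rw [← himg, Set.ncard_image_of_injOn hinj]
  rw [hcard]
  rw [← Finset.coe_Icc, Set.ncard_coe_finset, Int.card_Icc]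
  have := hx (i - 1)
  omega
end

section
/- For all integers j, k with 0 ≤ j ≤ k, the probability that the skip-free walk ever reaches level j − k equals c^{k−j}; that is, P[∃ n ≥ 0, S_n = j − k] = c^{k−j}. -/
set_option linter.unusedSectionVars false

open MeasureTheory ProbabilityTheory

namespace SkipFreeAux

variable {Ω : Type*} [MeasureSpace Ω] [IsProbabilityMeasure (ℙ : Measure Ω)]
  (X : ℕ → Ω → ℤ)

/-- Event depending on coordinates `n, ..., n+p-1`. -/
def cylEvent (n p : ℕ) (P : (Fin p → ℤ) → Prop) : Set Ω :=
  {ω | P fun j : Fin p => X (n + (j : ℕ)) ω}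

variable {X}

lemma meas_cyl (hindep : iIndepFun X ℙ)
    (hident : ∀ n, IdentDistrib (X n) (X 0) ℙ ℙ)
    (n p : ℕ) (v : Fin p → ℤ) :
    ℙ (⋂ j : Fin p, X (n + (j : ℕ)) ⁻¹' {v j}) = ∏ j : Fin p, ℙ (X 0 ⁻¹' {v j}) := by
  classical
  set sets : ℕ → Set ℤ := fun i => ⋂ (j : Fin p) (_ : n + (j : ℕ) = i), {v j} with hsets
  have hs : ∀ j : Fin p, sets (n + (j : ℕ)) = {v j} := by
    intro j
    ext z
    simp only [hsets, Set.mem_iInter, Set.mem_singleton_iff]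
    constructor
    · intro h; exact h j rfl
    · rintro rfl j' hj'
      have : j' = j := Fin.ext (by omega)
      subst this; rfl
  have key := hindep.measure_inter_preimage_eq_mul
      (Finset.image (fun j : Fin p => n + (j : ℕ)) Finset.univ) (sets := sets)
      (fun i _ => trivial)
  rw [Finset.set_biInter_finset_image,
    Finset.prod_image (fun a _ b _ h => Fin.ext (by omega))] at key
  have hL : (⋂ j ∈ (Finset.univ : Finset (Fin p)), X (n + (j : ℕ)) ⁻¹' sets (n + (j : ℕ)))
      = ⋂ j : Fin p, X (n + (j : ℕ)) ⁻¹' {v j} := by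
    simp [hs]
  rw [hL] at key
  rw [key]
  exact Finset.prod_congr rfl fun j _ => by
    rw [hs j]
    exact (hident (n + (j : ℕ))).measure_mem_eq (measurableSet_singleton (v j))

lemma cylEvent_eq_iUnion (n p : ℕ) (P : (Fin p → ℤ) → Prop) :
    cylEvent X n p P
      = ⋃ v : {v : Fin p → ℤ // P v}, ⋂ j : Fin p, X (n + (j : ℕ)) ⁻¹' {v.1 j} := by
  ext ω
  simp only [cylEvent, Set.mem_setOf_eq, Set.mem_iUnion, Set.mem_iInter, Set.mem_preimage,
    Set.mem_singleton_iff]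
  constructor
  · intro h
    exact ⟨⟨fun j => X (n + (j : ℕ)) ω, h⟩, fun j => rfl⟩
  · rintro ⟨v, hv⟩
    have : (fun j : Fin p => X (n + (j : ℕ)) ω) = v.1 := funext hv
    rw [this]
    exact v.2

lemma meas_cylEvent (hmeas : ∀ n, Measurable (X n))
    (hindep : iIndepFun X ℙ)
    (hident : ∀ n, IdentDistrib (X n) (X 0) ℙ ℙ)
    (n p : ℕ) (P : (Fin p → ℤ) → Prop) :
    ℙ (cylEvent X n p P)
      = ∑' v : {v : Fin p → ℤ // P v}, ∏ j : Fin p, ℙ (X 0 ⁻¹' {v.1 j}) := by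
  rw [cylEvent_eq_iUnion]
  rw [measure_iUnion]
  · exact tsum_congr fun v => meas_cyl hindep hident n p v.1
  · intro v w hvw
    refine Set.disjoint_left.2 fun ω hv hw => hvw ?_
    simp only [Set.mem_iInter, Set.mem_preimage, Set.mem_singleton_iff] at hv hw
    exact Subtype.ext (funext fun j => (hv j).symm.trans (hw j))
  · intro v
    exact MeasurableSet.iInter fun j => (hmeas _) (measurableSet_singleton _)

lemma meas_cylEvent_shift (hmeas : ∀ n, Measurable (X n))
    (hindep : iIndepFun X ℙ)
    (hident : ∀ n, IdentDistrib (X n) (X 0) ℙ ℙ)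
    (n m p : ℕ) (P : (Fin p → ℤ) → Prop) :
    ℙ (cylEvent X n p P) = ℙ (cylEvent X m p P) := by
  rw [meas_cylEvent hmeas hindep hident, meas_cylEvent hmeas hindep hident]

/-- Independence of cylinder events over disjoint blocks of coordinates. -/
lemma meas_cylEvent_inter (hmeas : ∀ n, Measurable (X n))
    (hindep : iIndepFun X ℙ)
    (hident : ∀ n, IdentDistrib (X n) (X 0) ℙ ℙ)
    (n p : ℕ) (P : (Fin n → ℤ) → Prop) (Q : (Fin p → ℤ) → Prop) :
    ℙ (cylEvent X 0 n P ∩ cylEvent X n p Q)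
      = ℙ (cylEvent X 0 n P) * ℙ (cylEvent X n p Q) := by
  classical
  set R : (Fin (n + p) → ℤ) → Prop :=
    fun w => P (fun j => w (Fin.castAdd p j)) ∧ Q (fun j => w (Fin.natAdd n j)) with hR
  have hE : cylEvent X 0 n P ∩ cylEvent X n p Q = cylEvent X 0 (n + p) R := by
    ext ω
    simp only [cylEvent, Set.mem_inter_iff, Set.mem_setOf_eq, hR, Fin.coe_castAdd,
      Fin.coe_natAdd, zero_add]
  rw [hE, meas_cylEvent hmeas hindep hident, meas_cylEvent hmeas hindep hident,
    meas_cylEvent hmeas hindep hident]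
  set μa : ℤ → ENNReal := fun z => ℙ (X 0 ⁻¹' {z}) with hμa
  let e : {u : Fin n → ℤ // P u} × {v : Fin p → ℤ // Q v} ≃ {w : Fin (n + p) → ℤ // R w} :=
    { toFun := fun uv => ⟨Fin.append uv.1.1 uv.2.1, by
        refine ⟨?_, ?_⟩
        · have h1 : (fun j => Fin.append uv.1.1 uv.2.1 (Fin.castAdd p j)) = uv.1.1 :=
            funext fun j => Fin.append_left _ _ j
          show P fun j => Fin.append uv.1.1 uv.2.1 (Fin.castAdd p j)
          rw [h1]; exact uv.1.2
        · have h2 : (fun j => Fin.append uv.1.1 uv.2.1 (Fin.natAdd n j)) = uv.2.1 :=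
            funext fun j => Fin.append_right _ _ j
          show Q fun j => Fin.append uv.1.1 uv.2.1 (Fin.natAdd n j)
          rw [h2]; exact uv.2.2⟩
      invFun := fun w => (⟨fun j => w.1 (Fin.castAdd p j), w.2.1⟩,
                          ⟨fun j => w.1 (Fin.natAdd n j), w.2.2⟩)
      left_inv := by
        rintro ⟨⟨u, hu⟩, ⟨v, hv⟩⟩
        refine Prod.ext ?_ ?_
        · exact Subtype.ext (funext fun j => Fin.append_left _ _ j)
        · exact Subtype.ext (funext fun j => Fin.append_right _ _ j)
      right_inv := by
        rintro ⟨w, hw⟩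
        exact Subtype.ext Fin.append_castAdd_natAdd }
  rw [← Equiv.tsum_eq e (fun w => ∏ j : Fin (n + p), μa (w.1 j))]
  have hterm : ∀ uv : {u : Fin n → ℤ // P u} × {v : Fin p → ℤ // Q v},
      (∏ j : Fin (n + p), μa ((e uv).1 j))
        = (∏ j : Fin n, μa (uv.1.1 j)) * ∏ j : Fin p, μa (uv.2.1 j) := by
    intro uv
    show (∏ j : Fin (n + p), μa (Fin.append uv.1.1 uv.2.1 j)) = _
    rw [Fin.prod_univ_add]
    simp [Fin.append_left, Fin.append_right]
  calc (∑' uv : {u : Fin n → ℤ // P u} × {v : Fin p → ℤ // Q v},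
          ∏ j : Fin (n + p), μa ((e uv).1 j))
      = ∑' (u : {u : Fin n → ℤ // P u}) (v : {v : Fin p → ℤ // Q v}),
          (∏ j : Fin n, μa (u.1 j)) * ∏ j : Fin p, μa (v.1 j) := by
        rw [ENNReal.tsum_prod']
        exact tsum_congr fun u => tsum_congr fun v => hterm (u, v)
    _ = (∑' u : {u : Fin n → ℤ // P u}, ∏ j : Fin n, μa (u.1 j))
          * ∑' v : {v : Fin p → ℤ // Q v}, ∏ j : Fin p, μa (v.1 j) := by
        rw [← ENNReal.tsum_mul_right]
        exact tsum_congr fun u => ENNReal.tsum_mul_left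


/-! ### The walk layer -/

/-- partial sums of a finite tuple -/
def psum {q : ℕ} (u : Fin q → ℤ) (l : ℕ) : ℤ :=
  ∑ i ∈ Finset.range l, if h : i < q then u ⟨i, h⟩ else 0

lemma psum_restrict (ω : Ω) (n l : ℕ) (hl : l ≤ n) :
    psum (fun j : Fin n => X (0 + (j : ℕ)) ω) l = ∑ i ∈ Finset.range l, X i ω := by
  refine Finset.sum_congr rfl fun i hi => ?_
  have hin : i < n := lt_of_lt_of_le (Finset.mem_range.1 hi) hl
  rw [dif_pos hin]
  simp

lemma psum_restrict' (ω : Ω) (n p l : ℕ) (hl : l ≤ p) :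
    psum (fun j : Fin p => X (n + (j : ℕ)) ω) l = ∑ i ∈ Finset.range l, X (n + i) ω := by
  refine Finset.sum_congr rfl fun i hi => ?_
  have hin : i < p := lt_of_lt_of_le (Finset.mem_range.1 hi) hl
  rw [dif_pos hin]

/-- predicate for "first hit of `-m` at time `n`" -/
def PF (m n : ℕ) (u : Fin n → ℤ) : Prop :=
  psum u n = -(m : ℤ) ∧ ∀ l < n, psum u l ≠ -(m : ℤ)

/-- predicate for "hits `-1` within the first `p` steps" -/
def QA (p : ℕ) (v : Fin p → ℤ) : Prop :=
  ∃ q, 1 ≤ q ∧ q ≤ p ∧ psum v q = -1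

variable (X) in
lemma F_eq (m n : ℕ) :
    cylEvent X 0 n (PF m n)
      = {ω | (∑ i ∈ Finset.range n, X i ω) = -(m : ℤ)
          ∧ ∀ l < n, (∑ i ∈ Finset.range l, X i ω) ≠ -(m : ℤ)} := by
  ext ω
  simp only [cylEvent, Set.mem_setOf_eq, PF]
  constructor
  · rintro ⟨h1, h2⟩
    refine ⟨?_, fun l hl => ?_⟩
    · rw [← psum_restrict ω n n le_rfl]; exact h1
    · rw [← psum_restrict ω n l hl.le]; exact h2 l hl
  · rintro ⟨h1, h2⟩
    refine ⟨?_, fun l hl => ?_⟩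
    · rw [psum_restrict ω n n le_rfl]; exact h1
    · rw [psum_restrict ω n l hl.le]; exact h2 l hl

variable (X) in
lemma A_eq (n p : ℕ) :
    cylEvent X n p (QA p)
      = {ω | ∃ q, 1 ≤ q ∧ q ≤ p ∧ (∑ i ∈ Finset.range q, X (n + i) ω) = -1} := by
  ext ω
  simp only [cylEvent, Set.mem_setOf_eq, QA]
  constructor
  · rintro ⟨q, h1, h2, h3⟩
    exact ⟨q, h1, h2, by rw [← psum_restrict' ω n p q h2]; exact h3⟩
  · rintro ⟨q, h1, h2, h3⟩
    exact ⟨q, h1, h2, by rw [psum_restrict' ω n p q h2]; exact h3⟩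

lemma cylEvent_measurableSet (hmeas : ∀ n, Measurable (X n)) (n p : ℕ)
    (P : (Fin p → ℤ) → Prop) : MeasurableSet (cylEvent X n p P) := by
  rw [cylEvent_eq_iUnion]
  exact MeasurableSet.iUnion fun v => MeasurableSet.iInter fun j => (hmeas _) trivial

/-- discrete intermediate value theorem, downward skip-free version -/
lemma ivt_down {f : ℕ → ℤ} (hstep : ∀ i, f i - 1 ≤ f (i + 1)) :
    ∀ {N : ℕ} {a : ℤ}, f N ≤ a → a ≤ f 0 → ∃ i ≤ N, f i = a := by
  intro N
  induction N with
  | zero => intro a h1 h2; exact ⟨0, le_rfl, by omega⟩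
  | succ N ih =>
    intro a h1 h2
    by_cases h : f N ≤ a
    · obtain ⟨i, hi, he⟩ := ih h h2
      exact ⟨i, hi.trans (Nat.le_succ N), he⟩
    · have := hstep N
      exact ⟨N + 1, le_rfl, by omega⟩

/-- The key one-step lemma for the hitting probabilities. -/
lemma hit_step (hmeas : ∀ n, Measurable (X n))
    (hindep : iIndepFun X ℙ)
    (hident : ∀ n, IdentDistrib (X n) (X 0) ℙ ℙ)
    (hskip : ∀ᵐ ω ∂ℙ, -1 ≤ X 0 ω) (m : ℕ) :
    ℙ {ω | ∃ N, (∑ i ∈ Finset.range N, X i ω) = -((m : ℤ) + 1)}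
      = ℙ {ω | ∃ N, (∑ i ∈ Finset.range N, X i ω) = -(m : ℤ)}
        * ℙ {ω | ∃ q, 1 ≤ q ∧ (∑ i ∈ Finset.range q, X i ω) = -1} := by
  classical
  -- a.e. all steps are ≥ -1
  have hae : ∀ i, ℙ {ω | ¬ (-1 ≤ X i ω)} = 0 := fun i => by
    have h := (hident i).measure_mem_eq (s := {z : ℤ | ¬ (-1 ≤ z)}) trivial
    calc ℙ {ω | ¬ (-1 ≤ X i ω)} = ℙ (X i ⁻¹' {z | ¬ (-1 ≤ z)}) := rfl
      _ = ℙ (X 0 ⁻¹' {z | ¬ (-1 ≤ z)}) := h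
      _ = 0 := ae_iff.1 hskip
  have hskipall : ℙ {ω | ¬ ∀ i, -1 ≤ X i ω} = 0 := by
    refine measure_mono_null (fun ω hω => ?_) (measure_iUnion_null hae)
    push_neg at hω
    obtain ⟨i, hi⟩ := hω
    exact Set.mem_iUnion.2 ⟨i, by simp only [Set.mem_setOf_eq, not_le]; exact hi⟩
  set c := ℙ {ω | ∃ q, 1 ≤ q ∧ (∑ i ∈ Finset.range q, X i ω) = -1} with hc
  set F : ℕ → Set Ω := fun n => cylEvent X 0 n (PF m n) with hF
  set A : ℕ → Set Ω := fun n =>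
    {ω | ∃ q, 1 ≤ q ∧ (∑ i ∈ Finset.range q, X (n + i) ω) = -1} with hA
  have hAunion : ∀ n, A n = ⋃ p, cylEvent X n p (QA p) := by
    intro n
    ext ω
    simp only [hA, Set.mem_setOf_eq, Set.mem_iUnion, A_eq]
    constructor
    · rintro ⟨q, h1, h2⟩; exact ⟨q, q, h1, le_rfl, h2⟩
    · rintro ⟨p, q, h1, h2, h3⟩; exact ⟨q, h1, h3⟩
  have hAmono : ∀ n, Monotone fun p => cylEvent X n p (QA p) := by
    intro n p p' hpp'
    dsimp only
    rw [A_eq, A_eq]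
    rintro ω ⟨q, h1, h2, h3⟩
    exact ⟨q, h1, h2.trans hpp', h3⟩
  have hAshift : ∀ n, ℙ (A n) = c := by
    intro n
    rw [hAunion n, Directed.measure_iUnion ((hAmono n).directed_le)]
    have hcu : {ω | ∃ q, 1 ≤ q ∧ (∑ i ∈ Finset.range q, X i ω) = -1}
        = ⋃ p, cylEvent X 0 p (QA p) := by
      have h0 := hAunion 0
      simp only [hA, zero_add] at h0
      exact h0
    rw [hc, hcu, Directed.measure_iUnion ((hAmono 0).directed_le)]
    exact iSup_congr fun p => meas_cylEvent_shift hmeas hindep hident n 0 p _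
  have hFmeas : ∀ n, MeasurableSet (F n) := fun n => cylEvent_measurableSet hmeas _ _ _
  have hAmeas : ∀ n, MeasurableSet (A n) := fun n => by
    rw [hAunion n]; exact MeasurableSet.iUnion fun p => cylEvent_measurableSet hmeas _ _ _
  have hFchar : ∀ n, F n = {ω | (∑ i ∈ Finset.range n, X i ω) = -(m : ℤ)
      ∧ ∀ l < n, (∑ i ∈ Finset.range l, X i ω) ≠ -(m : ℤ)} := fun n => F_eq X m n
  have hFdisj : Pairwise (Function.onFun Disjoint F) := by
    intro a b hab
    wlog h : a < b generalizing a b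
    · exact (this (Ne.symm hab) (by omega)).symm
    refine Set.disjoint_left.2 fun ω ha hb => ?_
    rw [hFchar] at ha hb
    exact hb.2 a h ha.1
  have hHm : {ω | ∃ N, (∑ i ∈ Finset.range N, X i ω) = -(m : ℤ)} = ⋃ n, F n := by
    ext ω
    simp only [Set.mem_setOf_eq, Set.mem_iUnion, hFchar]
    constructor
    · intro h
      exact ⟨Nat.find h, Nat.find_spec h, fun l hl => Nat.find_min h hl⟩
    · rintro ⟨n, h1, _⟩; exact ⟨n, h1⟩
  have hkey : ∀ n, ℙ (F n ∩ A n) = ℙ (F n) * c := by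
    intro n
    have hiu : F n ∩ A n = ⋃ p, F n ∩ cylEvent X n p (QA p) := by
      rw [hAunion n, Set.inter_iUnion]
    rw [hiu, Directed.measure_iUnion
      (Monotone.directed_le fun p p' h => Set.inter_subset_inter_right _ (hAmono n h))]
    calc ⨆ p, ℙ (F n ∩ cylEvent X n p (QA p))
        = ⨆ p, ℙ (F n) * ℙ (cylEvent X n p (QA p)) :=
          iSup_congr fun p => meas_cylEvent_inter hmeas hindep hident n p (PF m n) (QA p)
      _ = ℙ (F n) * ⨆ p, ℙ (cylEvent X n p (QA p)) := (ENNReal.mul_iSup _ _).symm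
      _ = ℙ (F n) * ℙ (A n) := by
          rw [hAunion n, Directed.measure_iUnion ((hAmono n).directed_le)]
      _ = ℙ (F n) * c := by rw [hAshift n]
  have hsub1 : ∀ n, F n ∩ A n
      ⊆ {ω | ∃ N, (∑ i ∈ Finset.range N, X i ω) = -((m : ℤ) + 1)} := by
    intro n ω hω
    have hωF := hω.1
    rw [hFchar] at hωF
    obtain ⟨q, hq1, hq2⟩ := hω.2
    refine ⟨n + q, ?_⟩
    rw [Finset.sum_range_add, hωF.1, hq2]
    ring
  have hsub2 : ∀ ω, (∀ i, -1 ≤ X i ω) →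
      ω ∈ {ω | ∃ N, (∑ i ∈ Finset.range N, X i ω) = -((m : ℤ) + 1)} →
      ω ∈ ⋃ n, F n ∩ A n := by
    intro ω hG hω
    obtain ⟨N, hN⟩ := hω
    set f : ℕ → ℤ := fun l => ∑ i ∈ Finset.range l, X i ω with hf
    have hstep : ∀ i, f i - 1 ≤ f (i + 1) := by
      intro i
      have := hG i
      simp only [hf, Finset.sum_range_succ]
      linarith
    have h1 : f N ≤ -(m : ℤ) := by simp only [hf]; rw [hN]; omega
    have h2 : -(m : ℤ) ≤ f 0 := by simp [hf]
    obtain ⟨i, hiN, hfi⟩ := ivt_down hstep h1 h2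
    have hex : ∃ i, f i = -(m : ℤ) := ⟨i, hfi⟩
    have hnval : f (Nat.find hex) = -(m : ℤ) := Nat.find_spec hex
    have hnmin : ∀ l < Nat.find hex, f l ≠ -(m : ℤ) := fun l hl => Nat.find_min hex hl
    set n := Nat.find hex with hn
    have hni : n ≤ i := Nat.find_le hfi
    have hnN : n < N := by
      rcases lt_or_eq_of_le (hni.trans hiN) with h | h
      · exact h
      · exfalso
        simp only [hf] at hnval
        rw [h, hN] at hnval
        omega
    refine Set.mem_iUnion.2 ⟨n, ?_, ?_⟩
    · rw [hFchar]; exact ⟨hnval, hnmin⟩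
    · refine ⟨N - n, by omega, ?_⟩
      have hadd : f (n + (N - n)) = f n + ∑ x ∈ Finset.range (N - n), X (n + x) ω :=
        Finset.sum_range_add (fun i => X i ω) n (N - n)
      have hnN' : n + (N - n) = N := by omega
      simp only [hf] at hadd hnval
      rw [hnN', hN, hnval] at hadd
      linarith
  have hUmeas : ∀ n, MeasurableSet (F n ∩ A n) := fun n => (hFmeas n).inter (hAmeas n)
  have hUdisj : Pairwise (Function.onFun Disjoint fun n => F n ∩ A n) := fun a b hab =>
    (hFdisj hab).mono Set.inter_subset_left Set.inter_subset_left
  have hmain : ℙ {ω | ∃ N, (∑ i ∈ Finset.range N, X i ω) = -((m : ℤ) + 1)}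
      = ℙ (⋃ n, F n ∩ A n) := by
    refine le_antisymm ?_ (measure_mono (Set.iUnion_subset hsub1))
    calc ℙ {ω | ∃ N, (∑ i ∈ Finset.range N, X i ω) = -((m : ℤ) + 1)}
        ≤ ℙ ((⋃ n, F n ∩ A n) ∪ {ω | ¬ ∀ i, -1 ≤ X i ω}) := by
          refine measure_mono fun ω hω => ?_
          by_cases hg : ∀ i, -1 ≤ X i ω
          · exact Or.inl (hsub2 ω hg hω)
          · exact Or.inr hg
      _ ≤ ℙ (⋃ n, F n ∩ A n) + ℙ {ω | ¬ ∀ i, -1 ≤ X i ω} := measure_union_le _ _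
      _ = ℙ (⋃ n, F n ∩ A n) := by rw [hskipall, add_zero]
  rw [hmain, measure_iUnion hUdisj hUmeas, hHm, measure_iUnion hFdisj hFmeas,
    ← ENNReal.tsum_mul_right]
  exact tsum_congr hkey

lemma hit_pow (hmeas : ∀ n, Measurable (X n))
    (hindep : iIndepFun X ℙ)
    (hident : ∀ n, IdentDistrib (X n) (X 0) ℙ ℙ)
    (hskip : ∀ᵐ ω ∂ℙ, -1 ≤ X 0 ω) (m : ℕ) :
    ℙ {ω | ∃ N, (∑ i ∈ Finset.range N, X i ω) = -(m : ℤ)}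
      = (ℙ {ω | ∃ q, 1 ≤ q ∧ (∑ i ∈ Finset.range q, X i ω) = -1}) ^ m := by
  induction m with
  | zero =>
    have : {ω : Ω | ∃ N, (∑ i ∈ Finset.range N, X i ω) = -((0 : ℕ) : ℤ)} = Set.univ :=
      Set.eq_univ_of_forall fun ω => ⟨0, by simp⟩
    rw [this, measure_univ, pow_zero]
  | succ m ih =>
    have hcast : -(((m + 1 : ℕ)) : ℤ) = -((m : ℤ) + 1) := by push_cast; ring
    rw [hcast, hit_step hmeas hindep hident hskip m, ih, pow_succ]
end SkipFreeAux


/-- For a skip-free to the left random walk `S_n = X_0 + ⋯ + X_{n-1}` with i.i.d.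
increments, the probability of ever reaching level `j - k` (for `0 ≤ j ≤ k`) equals
`c^(k-j)`, where `c` is the probability of ever hitting `-1`. -/
theorem hitting_probability
    {Ω : Type*} [MeasureSpace Ω] [IsProbabilityMeasure (ℙ : Measure Ω)]
    (X : ℕ → Ω → ℤ) (hmeas : ∀ n, Measurable (X n))
    (hindep : iIndepFun X ℙ)
    (hident : ∀ n, IdentDistrib (X n) (X 0) ℙ ℙ)
    (hskip : ∀ᵐ ω ∂ℙ, -1 ≤ X 0 ω)
    (hneg : 0 < ℙ {ω | X 0 ω = -1})
    (hint : Integrable (fun ω => (X 0 ω : ℝ)) ℙ)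
    (j k : ℤ) (hj : 0 ≤ j) (hjk : j ≤ k) :
    ℙ {ω | ∃ n : ℕ, (∑ i ∈ Finset.range n, X i ω) = j - k} =
      (ℙ {ω | ∃ n : ℕ, 1 ≤ n ∧ (∑ i ∈ Finset.range n, X i ω) = -1}) ^ (k - j).toNat := by
  have hm : ((k - j).toNat : ℤ) = k - j := Int.toNat_of_nonneg (by omega)
  have hset : {ω : Ω | ∃ n : ℕ, (∑ i ∈ Finset.range n, X i ω) = j - k}
      = {ω | ∃ n : ℕ, (∑ i ∈ Finset.range n, X i ω) = -(((k - j).toNat : ℕ) : ℤ)} := by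
    have h : j - k = -(((k - j).toNat : ℕ) : ℤ) := by rw [hm]; ring
    rw [h]
  rw [hset]
  exact SkipFreeAux.hit_pow hmeas hindep hident hskip ((k - j).toNat)
end

section
/- For all integers j, k with 0 ≤ j ≤ k, the joint law of the first weak upper record height and its last increment satisfies P[∃ n ≥ 1 such that S_n = j, X_{n−1} = k, and S_m < 0 for all m with 1 ≤ m < n] = P[X_0 = k] · c^{k−j}. -/
open MeasureTheory ProbabilityTheory Finset
set_option linter.unusedSectionVars false
set_option maxHeartbeats 1000000

namespace RecordLaw

variable {Ω : Type*} [MeasureSpace Ω] [IsProbabilityMeasure (ℙ : Measure Ω)]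

/-- extended partial sums of a finite vector -/
def sumExt (N : ℕ) (x : Fin N → ℤ) (m : ℕ) : ℤ :=
  ∑ i ∈ Finset.range m, if h : i < N then x ⟨i, h⟩ else 0

lemma sumExt_eq (N : ℕ) (f : ℕ → ℤ) {m : ℕ} (h : m ≤ N) :
    sumExt N (fun i => f i) m = ∑ i ∈ Finset.range m, f i := by
  unfold sumExt
  refine Finset.sum_congr rfl fun i hi => ?_
  rw [dif_pos (lt_of_lt_of_le (Finset.mem_range.1 hi) h)]

/-- event that the vector of variables indexed by `g` lies in `T` -/
def Ev (X : ℕ → Ω → ℤ) {m : ℕ} (g : Fin m → ℕ) (T : Set (Fin m → ℤ)) : Set Ω :=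
  {ω | (fun i => X (g i) ω) ∈ T}

lemma measurable_vec (X : ℕ → Ω → ℤ) (hmeas : ∀ n, Measurable (X n)) {m : ℕ} (g : Fin m → ℕ) :
    Measurable (fun ω (i : Fin m) => X (g i) ω) :=
  measurable_pi_lambda _ fun i => hmeas (g i)

lemma measurableSet_ev (X : ℕ → Ω → ℤ) (hmeas : ∀ n, Measurable (X n)) {m : ℕ}
    (g : Fin m → ℕ) (T : Set (Fin m → ℤ)) : MeasurableSet (Ev X g T) :=
  measurable_vec X hmeas g (T.to_countable.measurableSet)

/-- Joint law of any injectively-indexed finite subfamily is the product of the common law. -/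
lemma joint_law (X : ℕ → Ω → ℤ) (hmeas : ∀ n, Measurable (X n))
    (hindep : iIndepFun X ℙ)
    (hident : ∀ n, IdentDistrib (X n) (X 0) ℙ ℙ)
    {m : ℕ} (g : Fin m → ℕ) (hg : Function.Injective g) :
    Measure.map (fun ω (i : Fin m) => X (g i) ω) ℙ
      = Measure.pi (fun _ => Measure.map (X 0) ℙ) := by
  classical
  haveI : IsProbabilityMeasure (Measure.map (X 0) ℙ) :=
    Measure.isProbabilityMeasure_map (hmeas 0).aemeasurable
  have hY : Measurable (fun ω (i : Fin m) => X (g i) ω) := measurable_vec X hmeas g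
  refine (Measure.pi_eq fun A hA => ?_).symm
  rw [Measure.map_apply hY (MeasurableSet.univ_pi hA)]
  have hpre : (fun ω (i : Fin m) => X (g i) ω) ⁻¹' Set.univ.pi A
      = ⋂ i, X (g i) ⁻¹' A i := by
    ext ω; simp [Set.mem_pi]
  set A' : ℕ → Set ℤ := fun n => if h : ∃ i, g i = n then A h.choose else Set.univ with hA'def
  have hA'g : ∀ i, A' (g i) = A i := by
    intro i
    have h : ∃ i', g i' = g i := ⟨i, rfl⟩
    simp only [hA'def, dif_pos h]
    exact congrArg A (hg h.choose_spec)
  have hbi := hindep.meas_biInter (S := Finset.image g Finset.univ)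
    (s := fun n => X n ⁻¹' A' n) (fun n _ => ⟨A' n, (Set.to_countable _).measurableSet, rfl⟩)
  have hset : (⋂ n ∈ Finset.image g Finset.univ, X n ⁻¹' A' n) = ⋂ i, X (g i) ⁻¹' A i := by
    ext ω
    simp only [Set.mem_iInter, Finset.mem_image, Finset.mem_univ, true_and, Set.mem_preimage]
    constructor
    · intro h i
      have := h (g i) ⟨i, rfl⟩
      rwa [hA'g] at this
    · rintro h n ⟨i, rfl⟩
      rw [hA'g]; exact h i
  have hprod : (∏ n ∈ Finset.image g Finset.univ, ℙ (X n ⁻¹' A' n))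
      = ∏ i : Fin m, ℙ (X (g i) ⁻¹' A i) := by
    rw [Finset.prod_image (fun a _ b _ hab => hg hab)]
    exact Finset.prod_congr rfl fun i _ => by rw [hA'g]
  rw [hpre, ← hset, hbi, hprod]
  refine Finset.prod_congr rfl fun i _ => ?_
  have h1 : ℙ (X (g i) ⁻¹' A i) = Measure.map (X (g i)) ℙ (A i) :=
    (Measure.map_apply (hmeas (g i)) ((Set.to_countable _).measurableSet)).symm
  rw [h1, (hident (g i)).map_eq]

/-- probability of an `Ev` event equals the product measure of its defining set -/
lemma prob_ev (X : ℕ → Ω → ℤ) (hmeas : ∀ n, Measurable (X n))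
    (hindep : iIndepFun X ℙ)
    (hident : ∀ n, IdentDistrib (X n) (X 0) ℙ ℙ)
    {m : ℕ} (g : Fin m → ℕ) (hg : Function.Injective g) (T : Set (Fin m → ℤ)) :
    ℙ (Ev X g T) = Measure.pi (fun _ : Fin m => Measure.map (X 0) ℙ) T := by
  rw [← joint_law X hmeas hindep hident g hg,
    Measure.map_apply (measurable_vec X hmeas g) (T.to_countable.measurableSet)]
  rfl

/-- independence of an initial-segment event and a shifted event -/
lemma indep_split (X : ℕ → Ω → ℤ) (hmeas : ∀ n, Measurable (X n))
    (hindep : iIndepFun X ℙ)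
    (t m : ℕ) (T1 : Set (Fin t → ℤ)) (T2 : Set (Fin m → ℤ)) :
    ℙ (Ev X (fun i : Fin t => (i : ℕ)) T1 ∩ Ev X (fun i : Fin m => t + i) T2)
      = ℙ (Ev X (fun i : Fin t => (i : ℕ)) T1) * ℙ (Ev X (fun i : Fin m => t + i) T2) := by
  have hdisj : Disjoint (Finset.range t) (Finset.Ico t (t + m)) := by
    simp only [Finset.disjoint_left, Finset.mem_range, Finset.mem_Ico]
    intro a ha h2
    omega
  have h := hindep.indepFun_finset (Finset.range t) (Finset.Ico t (t + m)) hdisj hmeas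
  have hφ : Measurable (fun (y : (i : Finset.range t) → ℤ) (i : Fin t) =>
      y ⟨(i : ℕ), Finset.mem_range.2 i.isLt⟩) :=
    measurable_pi_lambda _ fun i => measurable_pi_apply _
  have hψ : Measurable (fun (y : (i : Finset.Ico t (t + m)) → ℤ) (i : Fin m) =>
      y ⟨t + (i : ℕ), Finset.mem_Ico.2 ⟨Nat.le_add_right _ _, by omega⟩⟩) :=
    measurable_pi_lambda _ fun i => measurable_pi_apply _
  have h2 := h.comp hφ hψ
  have h3 := (indepFun_iff_measure_inter_preimage_eq_mul.1 h2) T1 T2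
    (T1.to_countable.measurableSet) (T2.to_countable.measurableSet)
  exact h3


/-- partial sums -/
def PS (X : ℕ → Ω → ℤ) (n : ℕ) (ω : Ω) : ℤ := ∑ i ∈ Finset.range n, X i ω

@[simp] lemma PS_zero (X : ℕ → Ω → ℤ) (ω : Ω) : PS X 0 ω = 0 := by simp [PS]

lemma PS_add (X : ℕ → Ω → ℤ) (N l : ℕ) (ω : Ω) :
    PS X (N + l) ω = PS X N ω + ∑ i ∈ Finset.range l, X (N + i) ω := by
  simp [PS, Finset.sum_range_add]

lemma rev_sum (X : ℕ → Ω → ℤ) {m N : ℕ} (h : m ≤ N) (ω : Ω) :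
    ∑ i ∈ Finset.range m, X (N - 1 - i) ω = PS X N ω - PS X (N - m) ω := by
  have h1 : ∑ i ∈ Finset.range m, X (N - 1 - i) ω
      = ∑ i ∈ Finset.range m, X (N - m + i) ω := by
    have := Finset.sum_range_reflect (fun i => X (N - m + i) ω) m
    rw [← this]
    refine Finset.sum_congr rfl fun i hi => ?_
    have hi' := Finset.mem_range.1 hi
    congr 1
    omega
  have h2 : ∑ i ∈ Finset.range m, X (N - m + i) ω = ∑ i ∈ Finset.Ico (N - m) N, X i ω := by
    rw [Finset.sum_Ico_eq_sum_range (fun i => X i ω) (N - m) N, Nat.sub_sub_self h]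
  rw [h1, h2, Finset.sum_Ico_eq_sub (fun i => X i ω) (Nat.sub_le N m)]
  rfl

/-- event sets in sequence space -/
def staySet (N : ℕ) (a : ℤ) : Set (Fin N → ℤ) :=
  {x | (∀ m, 1 ≤ m → m ≤ N → sumExt N x m < 0) ∧ sumExt N x N = a}

def fhSet (N : ℕ) (a : ℤ) : Set (Fin N → ℤ) :=
  {x | (∀ m, m < N → a < sumExt N x m) ∧ sumExt N x N = a}

def hitSet (m : ℕ) : Set (Fin m → ℤ) :=
  {x | ∃ l, 1 ≤ l ∧ l ≤ m ∧ sumExt m x l = -1}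

def lastSet (k : ℤ) : Set (Fin 1 → ℤ) := {x | x 0 = k}

/-- the events -/
def Aev (X : ℕ → Ω → ℤ) (N : ℕ) (a : ℤ) : Set Ω := Ev X (fun i : Fin N => (i : ℕ)) (staySet N a)
def Fev (X : ℕ → Ω → ℤ) (N : ℕ) (a : ℤ) : Set Ω := Ev X (fun i : Fin N => (i : ℕ)) (fhSet N a)
def SHm (X : ℕ → Ω → ℤ) (N m : ℕ) : Set Ω := Ev X (fun i : Fin m => N + (i : ℕ)) (hitSet m)
def Kev (X : ℕ → Ω → ℤ) (N : ℕ) (k : ℤ) : Set Ω := Ev X (fun i : Fin 1 => N + (i : ℕ)) (lastSet k)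

lemma mem_Aev (X : ℕ → Ω → ℤ) (N : ℕ) (a : ℤ) (ω : Ω) :
    ω ∈ Aev X N a ↔ (∀ m, 1 ≤ m → m ≤ N → PS X m ω < 0) ∧ PS X N ω = a := by
  simp only [Aev, Ev, staySet, Set.mem_setOf_eq]
  constructor
  · rintro ⟨h1, h2⟩
    refine ⟨fun m hm1 hm2 => ?_, ?_⟩
    · have := h1 m hm1 hm2
      rwa [sumExt_eq N (fun n => X n ω) hm2] at this
    · rwa [sumExt_eq N (fun n => X n ω) le_rfl] at h2
  · rintro ⟨h1, h2⟩
    refine ⟨fun m hm1 hm2 => ?_, ?_⟩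
    · rw [sumExt_eq N (fun n => X n ω) hm2]; exact h1 m hm1 hm2
    · rw [sumExt_eq N (fun n => X n ω) le_rfl]; exact h2

lemma mem_Fev (X : ℕ → Ω → ℤ) (N : ℕ) (a : ℤ) (ω : Ω) :
    ω ∈ Fev X N a ↔ (∀ m, m < N → a < PS X m ω) ∧ PS X N ω = a := by
  simp only [Fev, Ev, fhSet, Set.mem_setOf_eq]
  constructor
  · rintro ⟨h1, h2⟩
    refine ⟨fun m hm => ?_, ?_⟩
    · have := h1 m hm
      rwa [sumExt_eq N (fun n => X n ω) hm.le] at this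
    · rwa [sumExt_eq N (fun n => X n ω) le_rfl] at h2
  · rintro ⟨h1, h2⟩
    refine ⟨fun m hm => ?_, ?_⟩
    · rw [sumExt_eq N (fun n => X n ω) hm.le]; exact h1 m hm
    · rw [sumExt_eq N (fun n => X n ω) le_rfl]; exact h2

lemma mem_SHm (X : ℕ → Ω → ℤ) (N m : ℕ) (ω : Ω) :
    ω ∈ SHm X N m ↔ ∃ l, 1 ≤ l ∧ l ≤ m ∧ ∑ i ∈ Finset.range l, X (N + i) ω = -1 := by
  simp only [SHm, Ev, hitSet, Set.mem_setOf_eq]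
  constructor
  · rintro ⟨l, hl1, hl2, hl3⟩
    refine ⟨l, hl1, hl2, ?_⟩
    rwa [sumExt_eq m (fun n => X (N + n) ω) hl2] at hl3
  · rintro ⟨l, hl1, hl2, hl3⟩
    refine ⟨l, hl1, hl2, ?_⟩
    rwa [sumExt_eq m (fun n => X (N + n) ω) hl2]

lemma mem_Kev (X : ℕ → Ω → ℤ) (N : ℕ) (k : ℤ) (ω : Ω) :
    ω ∈ Kev X N k ↔ X N ω = k := by
  simp only [Kev, Ev, lastSet, Set.mem_setOf_eq]
  norm_num

/-- duality : the reversed stay-event equals the first-hit event -/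
lemma rev_stay_eq_fh (X : ℕ → Ω → ℤ) (N : ℕ) (a : ℤ) :
    Ev X (fun i : Fin N => N - 1 - (i : ℕ)) (staySet N a) = Fev X N a := by
  ext ω
  simp only [Ev, staySet, Set.mem_setOf_eq, mem_Fev]
  have key : ∀ m : ℕ, m ≤ N →
      sumExt N (fun i : Fin N => X (N - 1 - (i : ℕ)) ω) m = PS X N ω - PS X (N - m) ω := by
    intro m hm
    rw [sumExt_eq N (fun n => X (N - 1 - n) ω) hm]
    exact rev_sum X hm ω
  constructor
  · rintro ⟨h1, h2⟩
    rw [key N le_rfl] at h2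
    simp only [Nat.sub_self, PS_zero, sub_zero] at h2
    refine ⟨fun m hm => ?_, h2⟩
    have := h1 (N - m) (by omega) (by omega)
    rw [key (N - m) (by omega)] at this
    have hNm : N - (N - m) = m := by omega
    rw [hNm, h2] at this
    linarith
  · rintro ⟨h1, h2⟩
    constructor
    · intro m hm1 hm2
      rw [key m hm2, h2]
      have := h1 (N - m) (by omega)
      linarith
    · rw [key N le_rfl]
      simp only [Nat.sub_self, PS_zero, sub_zero]
      exact h2


/-! ### Main events in Ω -/

def Hit (X : ℕ → Ω → ℤ) (a : ℤ) : Set Ω := {ω | ∃ n : ℕ, 1 ≤ n ∧ PS X n ω = a}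

def Good (X : ℕ → Ω → ℤ) : Set Ω := {ω | ∀ n, -1 ≤ X n ω}

def SH (X : ℕ → Ω → ℤ) (N : ℕ) : Set Ω := ⋃ m, SHm X N m

lemma PS_succ (X : ℕ → Ω → ℤ) (N : ℕ) (ω : Ω) :
    PS X (N + 1) ω = PS X N ω + X N ω := Finset.sum_range_succ _ _

lemma good_compl_null (X : ℕ → Ω → ℤ) (hmeas : ∀ n, Measurable (X n))
    (hident : ∀ n, IdentDistrib (X n) (X 0) ℙ ℙ)
    (hskip : ∀ᵐ ω ∂ℙ, -1 ≤ X 0 ω) : ℙ (Good X)ᶜ = 0 := by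
  have h0 : ℙ (X 0 ⁻¹' {x : ℤ | x < -1}) = 0 := by
    have : {ω | ¬(-1 ≤ X 0 ω)} = X 0 ⁻¹' {x : ℤ | x < -1} := by
      ext ω; simp [not_le]
    rw [← this]
    exact hskip
  have hn : ∀ n, ℙ (X n ⁻¹' {x : ℤ | x < -1}) = 0 := by
    intro n
    have h1 : ℙ (X n ⁻¹' {x : ℤ | x < -1}) = Measure.map (X n) ℙ {x : ℤ | x < -1} :=
      (Measure.map_apply (hmeas n) ((Set.to_countable _).measurableSet)).symm
    rw [h1, (hident n).map_eq,
      Measure.map_apply (hmeas 0) ((Set.to_countable _).measurableSet)]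
    exact h0
  have : (Good X)ᶜ = ⋃ n, X n ⁻¹' {x : ℤ | x < -1} := by
    ext ω; simp [Good, not_le]
  rw [this]
  exact measure_iUnion_null hn

lemma prob_eq_of_null (U V W : Set Ω) (h1 : U ⊆ V) (h2 : V ⊆ U ∪ W) (hW : ℙ W = 0) :
    ℙ V = ℙ U := by
  refine le_antisymm ?_ (measure_mono h1)
  calc ℙ V ≤ ℙ (U ∪ W) := measure_mono h2
    _ ≤ ℙ U + ℙ W := measure_union_le _ _
    _ = ℙ U := by rw [hW, add_zero]

lemma fev_disjoint (X : ℕ → Ω → ℤ) (a : ℤ) :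
    Pairwise (Function.onFun Disjoint (fun N => Fev X N a)) := by
  have key : ∀ N N' : ℕ, N < N' → Disjoint (Fev X N a) (Fev X N' a) := by
    intro N N' h
    rw [Set.disjoint_left]
    intro ω h1 h2
    rw [mem_Fev] at h1 h2
    have := h2.1 N h
    rw [h1.2] at this
    exact lt_irrefl a this
  intro N N' hne
  rcases lt_or_gt_of_ne hne with h | h
  · exact key N N' h
  · exact (key N' N h).symm

lemma fev_subset_hit (X : ℕ → Ω → ℤ) {a : ℤ} (ha : a ≠ 0) (N : ℕ) :
    Fev X N a ⊆ Hit X a := by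
  intro ω h
  rw [mem_Fev] at h
  refine ⟨N, ?_, h.2⟩
  rcases Nat.eq_zero_or_pos N with rfl | h1
  · exfalso; apply ha; rw [← h.2]; simp
  · exact h1

/-- On the good set, hitting a level `a ≤ 0` implies a first hit of level `a`
(skip-free property), together with a subsequent relative hit of `-1` for levels below. -/
lemma first_hit_exists (X : ℕ → Ω → ℤ) {a : ℤ} (ha : a ≤ 0) {ω : Ω} (hg : ω ∈ Good X)
    {n : ℕ} (hn : PS X n ω ≤ a) :
    ∃ N, N ≤ n ∧ ω ∈ Fev X N a := by
  classical
  have hex : ∃ m, PS X m ω ≤ a := ⟨n, hn⟩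
  have hspec : PS X (Nat.find hex) ω ≤ a := Nat.find_spec hex
  have hmin : ∀ m, m < Nat.find hex → a < PS X m ω := by
    intro m hm
    have := Nat.find_min hex hm
    omega
  have hPS : PS X (Nat.find hex) ω = a := by
    rcases Nat.eq_zero_or_pos (Nat.find hex) with h0 | h1
    · rw [h0] at hspec ⊢
      simp only [PS_zero] at hspec ⊢
      omega
    · obtain ⟨M, hM⟩ : ∃ M, Nat.find hex = M + 1 := ⟨Nat.find hex - 1, by omega⟩
      have h2 : a < PS X M ω := hmin M (by omega)
      have h3 : -1 ≤ X M ω := hg M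
      have h4 := PS_succ X M ω
      rw [hM] at hspec ⊢
      omega
  exact ⟨Nat.find hex, Nat.find_le hn, (mem_Fev X _ a ω).2 ⟨hmin, hPS⟩⟩

lemma hit_subset (X : ℕ → Ω → ℤ) {a : ℤ} (ha : a < 0) :
    Hit X a ⊆ (⋃ N, Fev X N a) ∪ (Good X)ᶜ := by
  intro ω h
  by_cases hg : ω ∈ Good X
  · obtain ⟨n, hn1, hn2⟩ := h
    obtain ⟨N, _, hF⟩ := first_hit_exists X ha.le hg hn2.le
    exact Or.inl (Set.mem_iUnion.2 ⟨N, hF⟩)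
  · exact Or.inr hg

lemma prob_union_fev (X : ℕ → Ω → ℤ) (hmeas : ∀ n, Measurable (X n))
    (hident : ∀ n, IdentDistrib (X n) (X 0) ℙ ℙ)
    (hskip : ∀ᵐ ω ∂ℙ, -1 ≤ X 0 ω) {a : ℤ} (ha : a < 0) :
    ℙ (⋃ N, Fev X N a) = ℙ (Hit X a) :=
  (prob_eq_of_null _ _ _ (Set.iUnion_subset (fev_subset_hit X ha.ne))
    (hit_subset X ha) (good_compl_null X hmeas hident hskip)).symm

lemma sum_fev (X : ℕ → Ω → ℤ) (hmeas : ∀ n, Measurable (X n))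
    (hident : ∀ n, IdentDistrib (X n) (X 0) ℙ ℙ)
    (hskip : ∀ᵐ ω ∂ℙ, -1 ≤ X 0 ω) {a : ℤ} (ha : a < 0) :
    ∑' N, ℙ (Fev X N a) = ℙ (Hit X a) := by
  rw [← measure_iUnion (fev_disjoint X a) (fun N => measurableSet_ev X hmeas _ _)]
  exact prob_union_fev X hmeas hident hskip ha

lemma SHm_mono (X : ℕ → Ω → ℤ) (N : ℕ) : Monotone (fun m => SHm X N m) := by
  intro m m' hm ω h
  rw [mem_SHm] at h ⊢
  obtain ⟨l, h1, h2, h3⟩ := h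
  exact ⟨l, h1, h2.trans hm, h3⟩

lemma iUnion_SHm_zero (X : ℕ → Ω → ℤ) : (⋃ m, SHm X 0 m) = Hit X (-1) := by
  ext ω
  simp only [Set.mem_iUnion, mem_SHm, Hit, Set.mem_setOf_eq, zero_add]
  constructor
  · rintro ⟨m, l, h1, h2, h3⟩
    exact ⟨l, h1, h3⟩
  · rintro ⟨l, h1, h3⟩
    exact ⟨l, l, h1, le_rfl, h3⟩

lemma prob_fev_inter_SH (X : ℕ → Ω → ℤ) (hmeas : ∀ n, Measurable (X n))
    (hindep : iIndepFun X ℙ)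
    (hident : ∀ n, IdentDistrib (X n) (X 0) ℙ ℙ) (N : ℕ) (a : ℤ) :
    ℙ (Fev X N a ∩ SH X N) = ℙ (Fev X N a) * ℙ (Hit X (-1)) := by
  have hmono : Monotone (fun m => Fev X N a ∩ SHm X N m) := fun m m' h =>
    Set.inter_subset_inter_right _ (SHm_mono X N h)
  have h1 : Fev X N a ∩ SH X N = ⋃ m, (Fev X N a ∩ SHm X N m) := by
    rw [SH, Set.inter_iUnion]
  rw [h1, hmono.directed_le.measure_iUnion]
  have h2 : ∀ m, ℙ (Fev X N a ∩ SHm X N m) = ℙ (Fev X N a) * ℙ (SHm X 0 m) := by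
    intro m
    rw [Fev, SHm, indep_split X hmeas hindep N m (fhSet N a) (hitSet m)]
    congr 1
    rw [prob_ev X hmeas hindep hident _ (fun i i' h => by
        have h2 : N + (i : ℕ) = N + (i' : ℕ) := h
        exact Fin.ext (by omega)) (hitSet m),
      SHm, prob_ev X hmeas hindep hident _ (fun i i' h => by
        have h2 : 0 + (i : ℕ) = 0 + (i' : ℕ) := h
        exact Fin.ext (by omega)) (hitSet m)]
  simp only [h2]
  rw [← ENNReal.mul_iSup, ← (SHm_mono X 0).directed_le.measure_iUnion,
    iUnion_SHm_zero]

lemma hit_succ_subset (X : ℕ → Ω → ℤ) (d : ℕ) :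
    Hit X (-(d : ℤ) - 1) ⊆ (⋃ N, (Fev X N (-(d : ℤ)) ∩ SH X N)) ∪ (Good X)ᶜ := by
  intro ω h
  by_cases hg : ω ∈ Good X
  · obtain ⟨n, hn1, hn2⟩ := h
    have hle : PS X n ω ≤ -(d : ℤ) := by omega
    obtain ⟨N, hNn, hF⟩ := first_hit_exists X (by omega : -(d:ℤ) ≤ 0) hg hle
    have hPSN : PS X N ω = -(d : ℤ) := ((mem_Fev X N _ ω).1 hF).2
    have hne : N ≠ n := by
      intro h; rw [h, hn2] at hPSN; omega
    obtain ⟨l, rfl⟩ : ∃ l, n = N + l := ⟨n - N, by omega⟩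
    have hl : 1 ≤ l := by omega
    refine Or.inl (Set.mem_iUnion.2 ⟨N, hF, ?_⟩)
    refine Set.mem_iUnion.2 ⟨l, (mem_SHm X N l ω).2 ⟨l, hl, le_rfl, ?_⟩⟩
    have := PS_add X N l ω
    omega
  · exact Or.inr hg

lemma hit_succ_supset (X : ℕ → Ω → ℤ) (d : ℕ) :
    (⋃ N, (Fev X N (-(d : ℤ)) ∩ SH X N)) ⊆ Hit X (-(d : ℤ) - 1) := by
  intro ω h
  obtain ⟨N, hF, hS⟩ := Set.mem_iUnion.1 h
  obtain ⟨m, hm⟩ := Set.mem_iUnion.1 hS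
  obtain ⟨l, hl1, hl2, hl3⟩ := (mem_SHm X N m ω).1 hm
  refine ⟨N + l, by omega, ?_⟩
  have h1 := PS_add X N l ω
  have h2 : PS X N ω = -(d : ℤ) := ((mem_Fev X N _ ω).1 hF).2
  omega

lemma fev_inter_SH_disjoint (X : ℕ → Ω → ℤ) (a : ℤ) :
    Pairwise (Function.onFun Disjoint (fun N => Fev X N a ∩ SH X N)) := by
  intro N N' hne
  exact Set.disjoint_of_subset (Set.inter_subset_left) (Set.inter_subset_left)
    (fev_disjoint X a hne)

lemma hit_step (X : ℕ → Ω → ℤ) (hmeas : ∀ n, Measurable (X n))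
    (hindep : iIndepFun X ℙ)
    (hident : ∀ n, IdentDistrib (X n) (X 0) ℙ ℙ)
    (hskip : ∀ᵐ ω ∂ℙ, -1 ≤ X 0 ω) (d : ℕ) :
    ℙ (Hit X (-(d : ℤ) - 1)) = ℙ (⋃ N, Fev X N (-(d : ℤ))) * ℙ (Hit X (-1)) := by
  have hmeasSH : ∀ N, MeasurableSet (SH X N) :=
    fun N => MeasurableSet.iUnion (fun m => measurableSet_ev X hmeas _ _)
  have h1 : ℙ (Hit X (-(d : ℤ) - 1)) = ℙ (⋃ N, (Fev X N (-(d : ℤ)) ∩ SH X N)) :=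
    prob_eq_of_null _ _ _ (hit_succ_supset X d) (hit_succ_subset X d)
      (good_compl_null X hmeas hident hskip)
  rw [h1, measure_iUnion (fev_inter_SH_disjoint X _)
    (fun N => (measurableSet_ev X hmeas _ _).inter (hmeasSH N))]
  have h2 : ∀ N, ℙ (Fev X N (-(d : ℤ)) ∩ SH X N)
      = ℙ (Fev X N (-(d : ℤ))) * ℙ (Hit X (-1)) :=
    fun N => prob_fev_inter_SH X hmeas hindep hident N _
  simp only [h2]
  rw [ENNReal.tsum_mul_right,
    ← measure_iUnion (fev_disjoint X _) (fun N => measurableSet_ev X hmeas _ _)]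

lemma hit_pow (X : ℕ → Ω → ℤ) (hmeas : ∀ n, Measurable (X n))
    (hindep : iIndepFun X ℙ)
    (hident : ∀ n, IdentDistrib (X n) (X 0) ℙ ℙ)
    (hskip : ∀ᵐ ω ∂ℙ, -1 ≤ X 0 ω) (d : ℕ) :
    ℙ (Hit X (-(d : ℤ) - 1)) = ℙ (Hit X (-1)) ^ (d + 1) := by
  induction d with
  | zero =>
    rw [hit_step X hmeas hindep hident hskip 0]
    have h0 : (⋃ N, Fev X N (-(0 : ℕ) : ℤ)) = Set.univ := by
      rw [Set.eq_univ_iff_forall]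
      intro ω
      refine Set.mem_iUnion.2 ⟨0, (mem_Fev X 0 _ ω).2 ⟨fun m hm => absurd hm (by omega), ?_⟩⟩
      simp
    rw [h0]
    simp
  | succ e ih =>
    rw [hit_step X hmeas hindep hident hskip (e + 1),
      prob_union_fev X hmeas hident hskip (by push_cast; omega : (-(↑(e+1)) : ℤ) < 0)]
    have : (-(↑(e + 1)) : ℤ) = -(e : ℤ) - 1 := by push_cast; ring
    rw [this, ih]
    ring

/-! ### Assembly -/

lemma prob_AK (X : ℕ → Ω → ℤ) (hmeas : ∀ n, Measurable (X n))
    (hindep : iIndepFun X ℙ)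
    (hident : ∀ n, IdentDistrib (X n) (X 0) ℙ ℙ) (N : ℕ) (a k : ℤ) :
    ℙ (Aev X N a ∩ Kev X N k) = ℙ (Aev X N a) * ℙ {ω | X 0 ω = k} := by
  rw [Aev, Kev, indep_split X hmeas hindep N 1 (staySet N a) (lastSet k)]
  congr 1
  rw [prob_ev X hmeas hindep hident _ (fun i i' h => by
      have h2 : N + (i : ℕ) = N + (i' : ℕ) := h
      exact Fin.ext (by omega)) (lastSet k),
    ← prob_ev X hmeas hindep hident (fun i : Fin 1 => (i : ℕ)) Fin.val_injective (lastSet k)]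
  congr 1

lemma prob_Aev_eq_Fev (X : ℕ → Ω → ℤ) (hmeas : ∀ n, Measurable (X n))
    (hindep : iIndepFun X ℙ)
    (hident : ∀ n, IdentDistrib (X n) (X 0) ℙ ℙ) (N : ℕ) (a : ℤ) :
    ℙ (Aev X N a) = ℙ (Fev X N a) := by
  rw [Aev, prob_ev X hmeas hindep hident (fun i : Fin N => (i : ℕ))
      Fin.val_injective (staySet N a),
    ← prob_ev X hmeas hindep hident (fun i : Fin N => N - 1 - (i : ℕ)) (fun i i' h => by
      have h2 : N - 1 - (i : ℕ) = N - 1 - (i' : ℕ) := h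
      have := i.isLt
      have := i'.isLt
      exact Fin.ext (by omega)) (staySet N a),
    rev_stay_eq_fh]

lemma fev_zero_empty (X : ℕ → Ω → ℤ) {N : ℕ} (hN : N ≠ 0) : Fev X N 0 = ∅ := by
  ext ω
  simp only [mem_Fev, Set.mem_empty_iff_false, iff_false, not_and]
  intro h
  have := h 0 (by omega)
  simp at this

lemma fev_zero_univ (X : ℕ → Ω → ℤ) : Fev X 0 0 = Set.univ := by
  rw [Set.eq_univ_iff_forall]
  intro ω
  refine (mem_Fev X 0 0 ω).2 ⟨fun m hm => absurd hm (by omega), by simp⟩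

end RecordLaw

open RecordLaw in
/-- Joint law of the first weak upper record height and its last increment: for
`0 ≤ j ≤ k`, the probability that the first weak record occurs at height `j` with last
increment `k` equals `P[X_0 = k] · c^(k-j)`. -/
theorem record_height_increment_law
    {Ω : Type*} [MeasureSpace Ω] [IsProbabilityMeasure (ℙ : Measure Ω)]
    (X : ℕ → Ω → ℤ) (hmeas : ∀ n, Measurable (X n))
    (hindep : iIndepFun X ℙ)
    (hident : ∀ n, IdentDistrib (X n) (X 0) ℙ ℙ)
    (hskip : ∀ᵐ ω ∂ℙ, -1 ≤ X 0 ω)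
    (hneg : 0 < ℙ {ω | X 0 ω = -1})
    (hint : Integrable (fun ω => (X 0 ω : ℝ)) ℙ)
    (j k : ℤ) (hj : 0 ≤ j) (hjk : j ≤ k) :
    ℙ {ω | ∃ n : ℕ, 1 ≤ n ∧ (∑ i ∈ Finset.range n, X i ω) = j ∧ X (n - 1) ω = k ∧
        ∀ m : ℕ, 1 ≤ m → m < n → (∑ i ∈ Finset.range m, X i ω) < 0} =
      ℙ {ω | X 0 ω = k} *
        (ℙ {ω | ∃ n : ℕ, 1 ≤ n ∧ (∑ i ∈ Finset.range n, X i ω) = -1}) ^ (k - j).toNat := by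
  have hE : {ω | ∃ n : ℕ, 1 ≤ n ∧ (∑ i ∈ Finset.range n, X i ω) = j ∧ X (n - 1) ω = k ∧
        ∀ m : ℕ, 1 ≤ m → m < n → (∑ i ∈ Finset.range m, X i ω) < 0}
      = ⋃ N, (Aev X N (j - k) ∩ Kev X N k) := by
    ext ω
    simp only [Set.mem_setOf_eq, Set.mem_iUnion, Set.mem_inter_iff, mem_Aev, mem_Kev]
    constructor
    · rintro ⟨n, hn1, hsum, hX, hnegm⟩
      obtain ⟨N, rfl⟩ : ∃ N, n = N + 1 := ⟨n - 1, by omega⟩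
      have hXN : X N ω = k := by simpa using hX
      have hPS : PS X (N + 1) ω = j := hsum
      have hPSN : PS X N ω = j - k := by
        have := PS_succ X N ω
        omega
      exact ⟨N, ⟨fun m hm1 hm2 => hnegm m hm1 (by omega), hPSN⟩, hXN⟩
    · rintro ⟨N, ⟨h1, h2⟩, h3⟩
      refine ⟨N + 1, by omega, ?_, by simpa using h3, fun m hm1 hm2 => h1 m hm1 (by omega)⟩
      have := PS_succ X N ω
      show PS X (N + 1) ω = j
      omega
  have hc : {ω | ∃ n : ℕ, 1 ≤ n ∧ (∑ i ∈ Finset.range n, X i ω) = -1} = Hit X (-1) := rfl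
  have hdisj : Pairwise (Function.onFun Disjoint (fun N => Aev X N (j - k) ∩ Kev X N k)) := by
    have key : ∀ N N' : ℕ, N < N' →
        Disjoint (Aev X N (j - k) ∩ Kev X N k) (Aev X N' (j - k) ∩ Kev X N' k) := by
      intro N N' h
      rw [Set.disjoint_left]
      rintro ω ⟨hA, hK⟩ ⟨hA', _⟩
      rw [mem_Aev] at hA hA'
      rw [mem_Kev] at hK
      have h1 : PS X (N + 1) ω = j := by
        have := PS_succ X N ω
        omega
      have h2 : PS X (N + 1) ω < 0 := hA'.1 (N + 1) (by omega) (by omega)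
      omega
    intro N N' hne
    rcases lt_or_gt_of_ne hne with h | h
    · exact key N N' h
    · exact (key N' N h).symm
  rw [hE, hc, measure_iUnion hdisj (fun N =>
    (measurableSet_ev X hmeas _ _).inter (measurableSet_ev X hmeas _ _))]
  have hterm : ∀ N, ℙ (Aev X N (j - k) ∩ Kev X N k)
      = ℙ (Fev X N (j - k)) * ℙ {ω | X 0 ω = k} := by
    intro N
    rw [prob_AK X hmeas hindep hident N (j - k) k,
      prob_Aev_eq_Fev X hmeas hindep hident N (j - k)]
  simp only [hterm]
  rw [ENNReal.tsum_mul_right]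
  rcases eq_or_lt_of_le hjk with rfl | hlt
  · have h0 : (j - j) = (0 : ℤ) := by ring
    rw [h0]
    have hsum : ∑' N, ℙ (Fev X N (0 : ℤ)) = 1 := by
      rw [tsum_eq_single 0 (fun N hN => by rw [fev_zero_empty X hN]; simp)]
      rw [fev_zero_univ X]
      simp
    rw [hsum]
    simp [mul_comm]
  · obtain ⟨e, he⟩ : ∃ e : ℕ, (k - j).toNat = e + 1 := by
      refine ⟨(k - j).toNat - 1, ?_⟩
      have : 1 ≤ (k - j).toNat := by omega
      omega
    have hjk2 : j - k = -(e : ℤ) - 1 := by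
      have : (k - j) = ((e : ℤ) + 1) := by
        have := Int.toNat_of_nonneg (by omega : (0:ℤ) ≤ k - j)
        rw [he] at this
        push_cast at this
        omega
      omega
    rw [hjk2, sum_fev X hmeas hident hskip (by omega : (-(e:ℤ) - 1) < 0),
      hit_pow X hmeas hindep hident hskip e, he, mul_comm]
end

section
/- The hitting probability c is a fixed point of the shifted generating function of the step distribution: the series ∑_{k=−1}^{∞} P[X_0 = k] · c^{k+1} is summable and its sum equals c. Equivalently, ∑_{k=−1}^{∞} P[X_0 = k] · c^k = 1. -/
open MeasureTheory ProbabilityTheory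

namespace HPFP

variable {Ω : Type*} [MeasureSpace Ω] [IsProbabilityMeasure (ℙ : Measure Ω)]

lemma measure_eq_of_null {S U N : Set Ω} (hN : ℙ N = 0) (h1 : S ⊆ U ∪ N) (h2 : U ⊆ S) :
    ℙ S = ℙ U :=
  le_antisymm ((measure_mono h1).trans ((measure_union_le U N).trans (by simp [hN])))
    (measure_mono h2)

lemma sum_ite_eq_range (f : ℕ → ℤ) (L m : ℕ) (h : m ≤ L) :
    (∑ i : Fin L, if (i : ℕ) < m then f i else 0) = ∑ i ∈ Finset.range m, f i := by
  classical
  rw [Fin.sum_univ_eq_sum_range (fun i => if i < m then f i else 0) L, ← Finset.sum_filter]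
  congr 1
  ext i
  simp only [Finset.mem_filter, Finset.mem_range]
  omega

variable (X : ℕ → Ω → ℤ)

/-- The "block event": an event reading coordinates `t, t+1, ..., t+L-1`. -/
def BE (t L : ℕ) (cond : (Fin L → ℤ) → Prop) : Set Ω :=
  {ω | cond (fun i => X (t + (i : ℕ)) ω)}

lemma atom_meas (hmeas : ∀ n, Measurable (X n))
    (hindep : iIndepFun X ℙ)
    (hident : ∀ n, IdentDistrib (X n) (X 0) ℙ ℙ) (t L : ℕ) (x : Fin L → ℤ) :
    ℙ (⋂ i : Fin L, {ω | X (t + (i : ℕ)) ω = x i}) = ∏ i : Fin L, ℙ {ω | X 0 ω = x i} := by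
  classical
  set g : ℕ → Set ℤ := fun j => if h : j - t < L then {x ⟨j - t, h⟩} else Set.univ with hg
  have key : ∀ i : Fin L, g (t + (i : ℕ)) = {x i} := by
    intro i
    have h1 : t + (i : ℕ) - t < L := by simpa [Nat.add_sub_cancel_left] using i.isLt
    have h2 : (⟨t + (i : ℕ) - t, h1⟩ : Fin L) = i := by
      ext
      simp only [Fin.val_mk]
      omega
    rw [hg]
    simp only
    rw [dif_pos h1, h2]
  set S : Finset ℕ := Finset.image (fun i : Fin L => t + (i : ℕ)) Finset.univ with hS
  have hinj : Function.Injective (fun i : Fin L => t + (i : ℕ)) := by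
    intro a b hab
    simp only at hab
    exact Fin.ext (by omega)
  have hset : (⋂ i : Fin L, {ω | X (t + (i : ℕ)) ω = x i}) = ⋂ j ∈ S, X j ⁻¹' g j := by
    ext ω
    simp only [Set.mem_iInter, Set.mem_setOf_eq, hS, Finset.mem_image, Finset.mem_univ,
      true_and, Set.mem_preimage, forall_exists_index]
    constructor
    · rintro h j i rfl
      rw [key i]
      exact h i
    · intro h i
      have := h (t + (i : ℕ)) i rfl
      rwa [key i] at this
  rw [hset, hindep.measure_inter_preimage_eq_mul S (fun i _ => trivial), hS,
    Finset.prod_image (fun a _ b _ hab => hinj hab)]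
  refine Finset.prod_congr rfl fun i _ => ?_
  rw [key i]
  have := (hident (t + (i : ℕ))).measure_mem_eq (s := {x i}) trivial
  exact this

lemma block_meas (hmeas : ∀ n, Measurable (X n))
    (hindep : iIndepFun X ℙ)
    (hident : ∀ n, IdentDistrib (X n) (X 0) ℙ ℙ) (t L : ℕ) (cond : (Fin L → ℤ) → Prop) :
    ℙ (BE X t L cond) =
      ∑' x : {x : Fin L → ℤ // cond x}, ∏ i : Fin L, ℙ {ω | X 0 ω = x.1 i} := by
  have hset : BE X t L cond =
      ⋃ x : {x : Fin L → ℤ // cond x}, ⋂ i : Fin L, {ω | X (t + (i : ℕ)) ω = x.1 i} := by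
    ext ω
    simp only [BE, Set.mem_setOf_eq, Set.mem_iUnion, Set.mem_iInter]
    constructor
    · intro h
      exact ⟨⟨_, h⟩, fun i => rfl⟩
    · rintro ⟨x, hx⟩
      have hfun : (fun i : Fin L => X (t + (i : ℕ)) ω) = x.1 := funext hx
      rw [hfun]
      exact x.2
  have hdisj : Pairwise (Function.onFun Disjoint
      (fun x : {x : Fin L → ℤ // cond x} => ⋂ i : Fin L, {ω | X (t + (i : ℕ)) ω = x.1 i})) := by
    intro a b hab
    rw [Function.onFun, Set.disjoint_left]
    intro ω ha hb
    simp only [Set.mem_iInter, Set.mem_setOf_eq] at ha hb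
    exact hab (Subtype.ext (funext fun i => (ha i).symm.trans (hb i)))
  have hm : ∀ x : {x : Fin L → ℤ // cond x},
      MeasurableSet (⋂ i : Fin L, {ω | X (t + (i : ℕ)) ω = x.1 i}) := fun x =>
    MeasurableSet.iInter fun i => measurableSet_eq_fun (hmeas _) measurable_const
  rw [hset, measure_iUnion hdisj hm]
  exact tsum_congr fun x => atom_meas X hmeas hindep hident t L x.1

lemma block_shift (hmeas : ∀ n, Measurable (X n))
    (hindep : iIndepFun X ℙ)
    (hident : ∀ n, IdentDistrib (X n) (X 0) ℙ ℙ) (t L : ℕ) (cond : (Fin L → ℤ) → Prop) :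
    ℙ (BE X t L cond) = ℙ (BE X 0 L cond) := by
  rw [block_meas X hmeas hindep hident t L cond, block_meas X hmeas hindep hident 0 L cond]

def condEquiv {t M : ℕ} (cond1 : (Fin t → ℤ) → Prop) (cond2 : (Fin M → ℤ) → Prop) :
    ({x1 : Fin t → ℤ // cond1 x1} × {x2 : Fin M → ℤ // cond2 x2}) ≃
      {x : Fin (t + M) → ℤ //
        cond1 (fun i => x (Fin.castAdd M i)) ∧ cond2 (fun i => x (Fin.natAdd t i))} where
  toFun p := ⟨Fin.addCases p.1.1 p.2.1, by
    constructor
    · have h1 : (fun i => Fin.addCases (motive := fun _ => ℤ) p.1.1 p.2.1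
          (Fin.castAdd M i)) = p.1.1 := funext fun i => Fin.addCases_left i
      rw [h1]; exact p.1.2
    · have h2 : (fun i => Fin.addCases (motive := fun _ => ℤ) p.1.1 p.2.1
          (Fin.natAdd t i)) = p.2.1 := funext fun i => Fin.addCases_right i
      rw [h2]; exact p.2.2⟩
  invFun x := (⟨fun i => x.1 (Fin.castAdd M i), x.2.1⟩,
    ⟨fun i => x.1 (Fin.natAdd t i), x.2.2⟩)
  left_inv p := by
    refine Prod.ext (Subtype.ext (funext fun i => ?_)) (Subtype.ext (funext fun i => ?_))
    · simp [Fin.addCases_left]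
    · simp [Fin.addCases_right]
  right_inv x := Subtype.ext (funext fun j => by
    refine Fin.addCases (motive := fun j =>
      Fin.addCases (motive := fun _ => ℤ) (fun i => x.1 (Fin.castAdd M i))
        (fun i => x.1 (Fin.natAdd t i)) j = x.1 j) (fun i => ?_) (fun i => ?_) j
    · simp [Fin.addCases_left]
    · simp [Fin.addCases_right])


lemma block_mul (t M : ℕ)
    (cond1 : (Fin t → ℤ) → Prop) (cond2 : (Fin M → ℤ) → Prop)
    (block_meas : ∀ (t' L : ℕ) (cond : (Fin L → ℤ) → Prop),
      ℙ (BE X t' L cond) =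
        ∑' x : {x : Fin L → ℤ // cond x}, ∏ i : Fin L, ℙ {ω | X 0 ω = x.1 i}) :
    ℙ (BE X 0 t cond1 ∩ BE X t M cond2) = ℙ (BE X 0 t cond1) * ℙ (BE X t M cond2) := by
  classical
  set cond3 : (Fin (t + M) → ℤ) → Prop :=
    fun y => cond1 (fun i => y (Fin.castAdd M i)) ∧ cond2 (fun i => y (Fin.natAdd t i))
    with hcond3
  have hset : BE X 0 t cond1 ∩ BE X t M cond2 = BE X 0 (t + M) cond3 := by
    ext ω
    simp only [BE, Set.mem_inter_iff, Set.mem_setOf_eq, hcond3, Fin.coe_castAdd,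
      Fin.coe_natAdd, Nat.zero_add]
  have hval : ∀ p : {x1 : Fin t → ℤ // cond1 x1} × {x2 : Fin M → ℤ // cond2 x2},
      (condEquiv cond1 cond2 p).1 = Fin.addCases p.1.1 p.2.1 := fun p => rfl
  have hterm : ∀ p : {x1 : Fin t → ℤ // cond1 x1} × {x2 : Fin M → ℤ // cond2 x2},
      (∏ i : Fin (t + M), ℙ {ω | X 0 ω = (condEquiv cond1 cond2 p).1 i}) =
        (∏ i : Fin t, ℙ {ω | X 0 ω = p.1.1 i}) * ∏ i : Fin M, ℙ {ω | X 0 ω = p.2.1 i} := by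
    intro p
    rw [Fin.prod_univ_add]
    congr 1
    · refine Finset.prod_congr rfl fun i _ => ?_
      simp only [hval, Fin.addCases_left]
    · refine Finset.prod_congr rfl fun i _ => ?_
      simp only [hval, Fin.addCases_right]
  rw [hset, block_meas 0 (t + M) cond3,
    ← Equiv.tsum_eq (condEquiv cond1 cond2) (fun x =>
      ∏ i : Fin (t + M), ℙ {ω | X 0 ω = x.1 i}),
    tsum_congr hterm,
    ENNReal.tsum_prod (f := fun (x1 : {x1 : Fin t → ℤ // cond1 x1})
      (x2 : {x2 : Fin M → ℤ // cond2 x2}) =>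
      (∏ i : Fin t, ℙ {ω | X 0 ω = x1.1 i}) * ∏ i : Fin M, ℙ {ω | X 0 ω = x2.1 i}),
    block_meas 0 t cond1, block_meas t M cond2, ← ENNReal.tsum_mul_right]
  exact tsum_congr fun x1 => by rw [ENNReal.tsum_mul_left]

/-- partial sum -/
def Sm (n : ℕ) (ω : Ω) : ℤ := ∑ i ∈ Finset.range n, X i ω

/-- hitting event for the walk shifted by `t`: some partial sum of `X t, X (t+1), ...` equals `z` -/
def G (t : ℕ) (z : ℤ) : Set Ω :=
  {ω | ∃ m, 1 ≤ m ∧ ∑ i ∈ Finset.range m, X (t + i) ω = z}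

/-- truncated version of `G` -/
def GM (t : ℕ) (z : ℤ) (M : ℕ) : Set Ω :=
  {ω | ∃ m, 1 ≤ m ∧ m ≤ M ∧ ∑ i ∈ Finset.range m, X (t + i) ω = z}

/-- first hit of `-1` at time exactly `t` -/
def E (t : ℕ) : Set Ω := {ω | Sm X t ω = -1 ∧ ∀ m < t, Sm X m ω ≠ -1}

lemma Sm_meas (hmeas : ∀ n, Measurable (X n)) (n : ℕ) : Measurable (Sm X n) := by
  apply Finset.measurable_sum
  intro i _
  exact hmeas i

lemma E_meas (hmeas : ∀ n, Measurable (X n)) (t : ℕ) : MeasurableSet (E X t) := by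
  have h1 : E X t = {ω | Sm X t ω = -1} ∩ ⋂ m, ⋂ (_ : m < t), {ω | Sm X m ω ≠ -1} := by
    ext ω; simp [E]
  rw [h1]
  refine (measurableSet_eq_fun (Sm_meas X hmeas t) measurable_const).inter ?_
  refine MeasurableSet.iInter fun m => MeasurableSet.iInter fun _ => ?_
  exact (measurableSet_eq_fun (Sm_meas X hmeas m) measurable_const).compl

lemma G_meas (hmeas : ∀ n, Measurable (X n)) (t : ℕ) (z : ℤ) : MeasurableSet (G X t z) := by
  have h1 : G X t z = ⋃ m, ⋃ (_ : 1 ≤ m), {ω | ∑ i ∈ Finset.range m, X (t + i) ω = z} := by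
    ext ω; simp [G]
  rw [h1]
  refine MeasurableSet.iUnion fun m => MeasurableSet.iUnion fun _ => ?_
  exact measurableSet_eq_fun (Finset.measurable_sum _ fun i _ => hmeas (t + i)) measurable_const

lemma GM_mono (t : ℕ) (z : ℤ) : Monotone (GM X t z) := by
  intro M M' h ω
  rintro ⟨m, h1, h2, h3⟩
  exact ⟨m, h1, h2.trans h, h3⟩

lemma G_eq_iUnion (t : ℕ) (z : ℤ) : G X t z = ⋃ M, GM X t z M := by
  ext ω
  constructor
  · rintro ⟨m, h1, h3⟩
    exact Set.mem_iUnion.2 ⟨m, m, h1, le_refl m, h3⟩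
  · rintro h
    obtain ⟨M, m, h1, _, h3⟩ := Set.mem_iUnion.1 h
    exact ⟨m, h1, h3⟩

/-- `E X t` as a block event. -/
lemma E_eq_BE (t : ℕ) : E X t = BE X 0 t (fun y =>
    (∑ i : Fin t, if (i : ℕ) < t then y i else 0) = -1 ∧
    ∀ m < t, (∑ i : Fin t, if (i : ℕ) < m then y i else 0) ≠ -1) := by
  ext ω
  have hs : ∀ m, m ≤ t → (∑ i : Fin t, if (i : ℕ) < m then X (0 + (i : ℕ)) ω else 0)
      = Sm X m ω := by
    intro m hm
    rw [sum_ite_eq_range (fun i => X (0 + i) ω) t m hm]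
    simp only [Nat.zero_add]
    rfl
  simp only [E, BE, Set.mem_setOf_eq]
  constructor
  · rintro ⟨h1, h2⟩
    exact ⟨by rw [hs t le_rfl]; exact h1, fun m hm => by rw [hs m hm.le]; exact h2 m hm⟩
  · rintro ⟨h1, h2⟩
    rw [hs t le_rfl] at h1
    exact ⟨h1, fun m hm => by have := h2 m hm; rwa [hs m hm.le] at this⟩

/-- `GM X t z M` as a block event. -/
lemma GM_eq_BE (t : ℕ) (z : ℤ) (M : ℕ) : GM X t z M = BE X t M (fun y =>
    ∃ m, 1 ≤ m ∧ m ≤ M ∧ (∑ i : Fin M, if (i : ℕ) < m then y i else 0) = z) := by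
  ext ω
  simp only [GM, BE, Set.mem_setOf_eq]
  constructor
  · rintro ⟨m, h1, h2, h3⟩
    exact ⟨m, h1, h2, by rw [sum_ite_eq_range (fun i => X (t + i) ω) M m h2]; exact h3⟩
  · rintro ⟨m, h1, h2, h3⟩
    rw [sum_ite_eq_range (fun i => X (t + i) ω) M m h2] at h3
    exact ⟨m, h1, h2, h3⟩

/-- `{X 0 = j}` as a block event. -/
lemma X0_eq_BE (j : ℤ) : {ω : Ω | X 0 ω = j} = BE X 0 1 (fun y => y 0 = j) := by
  ext ω
  simp [BE]


lemma Sm_succ (m : ℕ) (ω : Ω) : Sm X (m + 1) ω = Sm X m ω + X m ω :=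
  Finset.sum_range_succ _ m

lemma first_hit (f : ℕ → ℤ) (h0 : f 0 = 0) (hstep : ∀ m, f m - 1 ≤ f (m + 1)) {n : ℕ} {z : ℤ}
    (hz : z ≤ -1) (hn : f n = z) :
    ∃ t, t ≤ n ∧ f t = -1 ∧ ∀ m < t, f m ≠ -1 := by
  have hex : ∃ t, f t ≤ -1 := ⟨n, by omega⟩
  set t0 := Nat.find hex with ht0def
  have ht0 : f t0 ≤ -1 := Nat.find_spec hex
  have ht0n : t0 ≤ n := Nat.find_le (by omega)
  have h1 : t0 ≠ 0 := by
    intro h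
    rw [h] at ht0
    omega
  have h2 : ¬ f (t0 - 1) ≤ -1 := Nat.find_min hex (by omega)
  have h3 : f t0 = -1 := by
    have hs := hstep (t0 - 1)
    rw [show t0 - 1 + 1 = t0 by omega] at hs
    omega
  have hex2 : ∃ t, f t = -1 := ⟨t0, h3⟩
  exact ⟨Nat.find hex2, (Nat.find_min' hex2 h3).trans ht0n, Nat.find_spec hex2,
    fun m hm => Nat.find_min hex2 hm⟩

lemma GM_prob_shift (hmeas : ∀ n, Measurable (X n))
    (hindep : iIndepFun X ℙ)
    (hident : ∀ n, IdentDistrib (X n) (X 0) ℙ ℙ) (t : ℕ) (z : ℤ) (M : ℕ) :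
    ℙ (GM X t z M) = ℙ (GM X 0 z M) := by
  rw [GM_eq_BE, GM_eq_BE, block_shift X hmeas hindep hident]

lemma G_prob_shift (hmeas : ∀ n, Measurable (X n))
    (hindep : iIndepFun X ℙ)
    (hident : ∀ n, IdentDistrib (X n) (X 0) ℙ ℙ) (t : ℕ) (z : ℤ) :
    ℙ (G X t z) = ℙ (G X 0 z) := by
  rw [G_eq_iUnion, G_eq_iUnion, Monotone.measure_iUnion (GM_mono X t z),
    Monotone.measure_iUnion (GM_mono X 0 z)]
  exact iSup_congr fun M => GM_prob_shift X hmeas hindep hident t z M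

lemma E_inter_G_prob (hmeas : ∀ n, Measurable (X n))
    (hindep : iIndepFun X ℙ)
    (hident : ∀ n, IdentDistrib (X n) (X 0) ℙ ℙ) (t : ℕ) (z : ℤ) :
    ℙ (E X t ∩ G X t z) = ℙ (E X t) * ℙ (G X 0 z) := by
  have h1 : E X t ∩ G X t z = ⋃ M, (E X t ∩ GM X t z M) := by
    rw [G_eq_iUnion, Set.inter_iUnion]
  have hmono : Monotone (fun M => E X t ∩ GM X t z M) := fun a b h =>
    Set.inter_subset_inter_right _ (GM_mono X t z h)
  have h2 : ∀ M, ℙ (E X t ∩ GM X t z M) = ℙ (E X t) * ℙ (GM X t z M) := by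
    intro M
    rw [E_eq_BE, GM_eq_BE,
      block_mul X t M _ _ (fun t' L cond => block_meas X hmeas hindep hident t' L cond),
      ← E_eq_BE, ← GM_eq_BE]
  calc ℙ (E X t ∩ G X t z) = ⨆ M, ℙ (E X t ∩ GM X t z M) := by
        rw [h1, Monotone.measure_iUnion hmono]
    _ = ⨆ M, ℙ (E X t) * ℙ (GM X t z M) := iSup_congr h2
    _ = ℙ (E X t) * ⨆ M, ℙ (GM X t z M) := by rw [ENNReal.mul_iSup]
    _ = ℙ (E X t) * ℙ (G X t z) := by
        rw [G_eq_iUnion, Monotone.measure_iUnion (GM_mono X t z)]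
    _ = ℙ (E X t) * ℙ (G X 0 z) := by rw [G_prob_shift X hmeas hindep hident]

lemma X0_inter_G_prob (hmeas : ∀ n, Measurable (X n))
    (hindep : iIndepFun X ℙ)
    (hident : ∀ n, IdentDistrib (X n) (X 0) ℙ ℙ) (j : ℤ) (z : ℤ) :
    ℙ ({ω | X 0 ω = j} ∩ G X 1 z) = ℙ {ω | X 0 ω = j} * ℙ (G X 0 z) := by
  have h1 : {ω : Ω | X 0 ω = j} ∩ G X 1 z = ⋃ M, ({ω | X 0 ω = j} ∩ GM X 1 z M) := by
    rw [G_eq_iUnion, Set.inter_iUnion]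
  have hmono : Monotone (fun M => {ω : Ω | X 0 ω = j} ∩ GM X 1 z M) := fun a b h =>
    Set.inter_subset_inter_right _ (GM_mono X 1 z h)
  have h2 : ∀ M, ℙ ({ω : Ω | X 0 ω = j} ∩ GM X 1 z M)
      = ℙ {ω : Ω | X 0 ω = j} * ℙ (GM X 1 z M) := by
    intro M
    rw [X0_eq_BE, GM_eq_BE,
      block_mul X 1 M _ _ (fun t' L cond => block_meas X hmeas hindep hident t' L cond),
      ← X0_eq_BE, ← GM_eq_BE]
  calc ℙ ({ω : Ω | X 0 ω = j} ∩ G X 1 z) = ⨆ M, ℙ ({ω : Ω | X 0 ω = j} ∩ GM X 1 z M) := by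
        rw [h1, Monotone.measure_iUnion hmono]
    _ = ⨆ M, ℙ {ω : Ω | X 0 ω = j} * ℙ (GM X 1 z M) := iSup_congr h2
    _ = ℙ {ω : Ω | X 0 ω = j} * ⨆ M, ℙ (GM X 1 z M) := by rw [ENNReal.mul_iSup]
    _ = ℙ {ω : Ω | X 0 ω = j} * ℙ (G X 1 z) := by
        rw [G_eq_iUnion, Monotone.measure_iUnion (GM_mono X 1 z)]
    _ = ℙ {ω : Ω | X 0 ω = j} * ℙ (G X 0 z) := by
        rw [G_prob_shift X hmeas hindep hident]

/-- the hitting event -/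
def Aev : Set Ω := {ω | ∃ n, 1 ≤ n ∧ Sm X n ω = -1}

lemma Aev_eq_iUnion : Aev X = ⋃ t, E X t := by
  ext ω
  constructor
  · rintro ⟨n, _, hn⟩
    have hex : ∃ t, Sm X t ω = -1 := ⟨n, hn⟩
    exact Set.mem_iUnion.2 ⟨Nat.find hex, Nat.find_spec hex, fun m hm => Nat.find_min hex hm⟩
  · intro h
    obtain ⟨t, ht⟩ := Set.mem_iUnion.1 h
    refine ⟨t, ?_, ht.1⟩
    rcases Nat.eq_zero_or_pos t with h0 | h0
    · exfalso
      have := ht.1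
      rw [h0] at this
      simp [Sm] at this
    · exact h0

lemma E_disj : Pairwise (Function.onFun Disjoint (E X)) := by
  intro a b hab
  rw [Function.onFun, Set.disjoint_left]
  intro ω ha hb
  rcases hab.lt_or_gt with h | h
  · exact hb.2 a h ha.1
  · exact ha.2 b h hb.1

lemma Aev_meas (hmeas : ∀ n, Measurable (X n)) : MeasurableSet (Aev X) := by
  rw [Aev_eq_iUnion]
  exact MeasurableSet.iUnion fun t => E_meas X hmeas t

lemma Aev_prob (hmeas : ∀ n, Measurable (X n)) : ℙ (Aev X) = ∑' t, ℙ (E X t) := by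
  rw [Aev_eq_iUnion, measure_iUnion (E_disj X) (fun t => E_meas X hmeas t)]

lemma X0_neg_null (hskip : ∀ᵐ ω ∂ℙ, -1 ≤ X 0 ω) : ℙ {ω : Ω | X 0 ω < -1} = 0 := by
  have hset : {ω : Ω | X 0 ω < -1} = {ω | ¬ (-1 ≤ X 0 ω)} := by
    ext ω
    simp [not_le]
  rw [hset]
  exact ae_iff.1 hskip

/-- the bad null set -/
def Nset : Set Ω := {ω | ∃ i, X i ω < -1}

lemma Nset_null (hident : ∀ n, IdentDistrib (X n) (X 0) ℙ ℙ)
    (hskip : ∀ᵐ ω ∂ℙ, -1 ≤ X 0 ω) : ℙ (Nset X) = 0 := by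
  have h1 : Nset X = ⋃ i, X i ⁻¹' {z : ℤ | z < -1} := by
    ext ω
    simp [Nset, Set.preimage]
  rw [h1]
  refine measure_iUnion_null fun i => ?_
  rw [(hident i).measure_mem_eq (s := {z : ℤ | z < -1}) trivial]
  exact X0_neg_null X hskip

lemma key_step (hmeas : ∀ n, Measurable (X n))
    (hindep : iIndepFun X ℙ)
    (hident : ∀ n, IdentDistrib (X n) (X 0) ℙ ℙ)
    (hskip : ∀ᵐ ω ∂ℙ, -1 ≤ X 0 ω) (z : ℤ) (hz : z ≤ -2) :
    ℙ (G X 0 z) = ℙ (Aev X) * ℙ (G X 0 (z + 1)) := by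
  have hsub1 : G X 0 z ⊆ (⋃ t, E X t ∩ G X t (z + 1)) ∪ Nset X := by
    intro ω hω
    by_cases hN : ω ∈ Nset X
    · exact Or.inr hN
    · left
      have hall : ∀ i, -1 ≤ X i ω := by
        intro i
        by_contra h
        exact hN ⟨i, lt_of_not_ge h⟩
      obtain ⟨n, hn1, hn⟩ := hω
      simp only [Nat.zero_add] at hn
      have hn' : Sm X n ω = z := hn
      obtain ⟨t, htn, ht1, ht2⟩ := first_hit (fun m => Sm X m ω) (by simp [Sm])
        (fun m => by show Sm X m ω - 1 ≤ Sm X (m + 1) ω; rw [Sm_succ]; have := hall m; omega) (by omega) hn'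
      have htln : t < n := by
        rcases eq_or_lt_of_le htn with h | h
        · exfalso
          rw [h] at ht1
          omega
        · exact h
      refine Set.mem_iUnion.2 ⟨t, ⟨⟨ht1, ht2⟩, n - t, by omega, ?_⟩⟩
      have hsplit := Finset.sum_range_add (fun i => X i ω) t (n - t)
      rw [show t + (n - t) = n by omega] at hsplit
      have e1 : Sm X n ω = Sm X t ω + ∑ i ∈ Finset.range (n - t), X (t + i) ω := hsplit
      omega
  have hsub2 : (⋃ t, E X t ∩ G X t (z + 1)) ⊆ G X 0 z := by
    intro ω h
    obtain ⟨t, hE, m, hm1, hm2⟩ := Set.mem_iUnion.1 h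
    refine ⟨t + m, by omega, ?_⟩
    simp only [Nat.zero_add]
    have hsplit := Finset.sum_range_add (fun i => X i ω) t m
    have e1 : Sm X t ω = -1 := hE.1
    have e2 : (∑ i ∈ Finset.range t, X i ω) = -1 := e1
    omega
  rw [measure_eq_of_null (Nset_null X hident hskip) hsub1 hsub2,
    measure_iUnion
      (fun a b hab => Disjoint.mono Set.inter_subset_left Set.inter_subset_left (E_disj X hab))
      (fun t => (E_meas X hmeas t).inter (G_meas X hmeas t (z + 1))),
    tsum_congr (fun t => E_inter_G_prob X hmeas hindep hident t (z + 1)),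
    ENNReal.tsum_mul_right, ← Aev_prob X hmeas]

lemma G_pow (hmeas : ∀ n, Measurable (X n))
    (hindep : iIndepFun X ℙ)
    (hident : ∀ n, IdentDistrib (X n) (X 0) ℙ ℙ)
    (hskip : ∀ᵐ ω ∂ℙ, -1 ≤ X 0 ω) (k : ℕ) :
    ℙ (G X 0 (-1 - (k : ℤ))) = ℙ (Aev X) ^ (k + 1) := by
  induction k with
  | zero =>
    have h1 : G X 0 (-1 - ((0 : ℕ) : ℤ)) = Aev X := by
      ext ω
      simp only [G, Aev, Sm, Set.mem_setOf_eq, Nat.zero_add, Nat.cast_zero, sub_zero]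
    rw [h1, pow_one]
  | succ k ih =>
    have hz : (-1 - ((k + 1 : ℕ) : ℤ)) ≤ -2 := by push_cast; omega
    rw [key_step X hmeas hindep hident hskip _ hz,
      show (-1 - ((k + 1 : ℕ) : ℤ)) + 1 = -1 - (k : ℤ) by push_cast; ring, ih, ← pow_succ']

lemma main_enn (hmeas : ∀ n, Measurable (X n))
    (hindep : iIndepFun X ℙ)
    (hident : ∀ n, IdentDistrib (X n) (X 0) ℙ ℙ)
    (hskip : ∀ᵐ ω ∂ℙ, -1 ≤ X 0 ω) :
    ℙ (Aev X) = ∑' k : ℕ, ℙ {ω | X 0 ω = (k : ℤ) - 1} * ℙ (Aev X) ^ k := by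
  have hpart : ℙ (Aev X) = ∑' k : ℕ, ℙ ({ω | X 0 ω = (k : ℤ) - 1} ∩ Aev X) := by
    have h1 : Aev X ⊆ (⋃ k : ℕ, {ω | X 0 ω = (k : ℤ) - 1} ∩ Aev X) ∪ {ω | X 0 ω < -1} := by
      intro ω hω
      by_cases h : X 0 ω < -1
      · exact Or.inr h
      · left
        refine Set.mem_iUnion.2 ⟨(X 0 ω + 1).toNat, ⟨?_, hω⟩⟩
        have h0 : (0 : ℤ) ≤ X 0 ω + 1 := by omega
        show X 0 ω = ((X 0 ω + 1).toNat : ℤ) - 1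
        rw [Int.toNat_of_nonneg h0]
        ring
    have h2 : (⋃ k : ℕ, {ω : Ω | X 0 ω = (k : ℤ) - 1} ∩ Aev X) ⊆ Aev X :=
      Set.iUnion_subset fun k => Set.inter_subset_right
    rw [measure_eq_of_null (X0_neg_null X hskip) h1 h2,
      measure_iUnion ?_ (fun k =>
        (measurableSet_eq_fun (hmeas 0) measurable_const).inter (Aev_meas X hmeas))]
    intro a b hab
    rw [Function.onFun, Set.disjoint_left]
    intro ω ha hb
    have e1 : X 0 ω = (a : ℤ) - 1 := ha.1
    have e2 : X 0 ω = (b : ℤ) - 1 := hb.1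
    exact hab (by omega)
  conv_lhs => rw [hpart]
  refine tsum_congr fun k => ?_
  cases k with
  | zero =>
    have hsub : {ω : Ω | X 0 ω = ((0 : ℕ) : ℤ) - 1} ⊆ Aev X := by
      intro ω h
      have h' : X 0 ω = -1 := by
        have := h
        simp only [Set.mem_setOf_eq, Nat.cast_zero, zero_sub] at this
        exact this
      refine ⟨1, le_rfl, ?_⟩
      show (∑ i ∈ Finset.range 1, X i ω) = -1
      rw [Finset.sum_range_one]
      exact h'
    rw [Set.inter_eq_self_of_subset_left hsub, pow_zero, mul_one]
  | succ j =>
    rw [show ((j + 1 : ℕ) : ℤ) - 1 = (j : ℤ) by push_cast; ring]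
    have hset : {ω : Ω | X 0 ω = (j : ℤ)} ∩ Aev X
        = {ω | X 0 ω = (j : ℤ)} ∩ G X 1 (-1 - (j : ℤ)) := by
      ext ω
      simp only [Set.mem_inter_iff, Set.mem_setOf_eq]
      constructor
      · rintro ⟨hx, n, hn1, hn⟩
        refine ⟨hx, ?_⟩
        have hn' : (∑ i ∈ Finset.range n, X i ω) = -1 := hn
        have hn2 : 2 ≤ n := by
          by_contra hc
          have hn1' : n = 1 := by omega
          rw [hn1', Finset.sum_range_one] at hn'
          omega
        refine ⟨n - 1, by omega, ?_⟩
        have hsplit := Finset.sum_range_add (fun i => X i ω) 1 (n - 1)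
        rw [show 1 + (n - 1) = n by omega, Finset.sum_range_one] at hsplit
        omega
      · rintro ⟨hx, m, hm1, hm⟩
        refine ⟨hx, 1 + m, by omega, ?_⟩
        have hsplit := Finset.sum_range_add (fun i => X i ω) 1 m
        rw [Finset.sum_range_one] at hsplit
        show (∑ i ∈ Finset.range (1 + m), X i ω) = -1
        omega
    rw [hset, X0_inter_G_prob X hmeas hindep hident (j : ℤ) (-1 - (j : ℤ)),
      G_pow X hmeas hindep hident hskip j]

end HPFP

open HPFP in
/-- The hitting probability `c = P[∃ n ≥ 1, S_n = -1]` is a fixed point of the shifted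
generating function of the step distribution: `∑_{k=-1}^∞ P[X_0 = k] · c^(k+1)` is
summable with sum `c`.  (Here the series is reindexed by `k ∈ ℕ`, with `k` standing for
the original index plus one.) -/
theorem hitting_probability_fixed_point
    {Ω : Type*} [MeasureSpace Ω] [IsProbabilityMeasure (ℙ : Measure Ω)]
    (X : ℕ → Ω → ℤ) (hmeas : ∀ n, Measurable (X n))
    (hindep : iIndepFun X ℙ)
    (hident : ∀ n, IdentDistrib (X n) (X 0) ℙ ℙ)
    (hskip : ∀ᵐ ω ∂ℙ, -1 ≤ X 0 ω)
    (hneg : 0 < ℙ {ω | X 0 ω = -1})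
    (hint : Integrable (fun ω => (X 0 ω : ℝ)) ℙ)
    (c : ℝ)
    (hc : c = (ℙ {ω | ∃ n : ℕ, 1 ≤ n ∧ (∑ i ∈ Finset.range n, X i ω) = -1}).toReal) :
    Summable (fun k : ℕ => (ℙ {ω | X 0 ω = (k : ℤ) - 1}).toReal * c ^ k) ∧
      (∑' k : ℕ, (ℙ {ω | X 0 ω = (k : ℤ) - 1}).toReal * c ^ k) = c := by
  have hAset : {ω : Ω | ∃ n : ℕ, 1 ≤ n ∧ (∑ i ∈ Finset.range n, X i ω) = -1} = Aev X := rfl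
  rw [hAset] at hc
  have hmain := main_enn X hmeas hindep hident hskip
  have hne : ∀ k : ℕ, ℙ {ω | X 0 ω = (k : ℤ) - 1} * ℙ (Aev X) ^ k ≠ ⊤ := fun k =>
    ENNReal.mul_ne_top (measure_ne_top _ _) (ENNReal.pow_ne_top (measure_ne_top _ _))
  have hsum_ne : (∑' k : ℕ, ℙ {ω | X 0 ω = (k : ℤ) - 1} * ℙ (Aev X) ^ k) ≠ ⊤ := by
    rw [← hmain]
    exact measure_ne_top _ _
  have hterm : ∀ k : ℕ, (ℙ {ω | X 0 ω = (k : ℤ) - 1} * ℙ (Aev X) ^ k).toReal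
      = (ℙ {ω | X 0 ω = (k : ℤ) - 1}).toReal * c ^ k := by
    intro k
    rw [ENNReal.toReal_mul, ENNReal.toReal_pow, ← hc]
  constructor
  · have hs := ENNReal.summable_toReal hsum_ne
    refine hs.congr fun k => hterm k
  · rw [← funext hterm, ← ENNReal.tsum_toReal_eq hne, ← hmain, ← hc]
end

section
/- (The walk conditioned to hit −1 is the stopped tilted walk.) Suppose moreover E[X_0] > 0. Let n ≥ 1 and let x_1, …, x_n be integers with x_i ≥ −1 for all i, x_1 + ⋯ + x_m ≥ 0 for all m < n, and x_1 + ⋯ + x_n ≥ −1. Then P[(X_0 = x_1, X_1 = x_2, …, X_{n−1} = x_n) and ∃ m ≥ 1 with S_m = −1] = c · ∏_{i=1}^n (P[X_0 = x_i] · c^{x_i}), where c^{x_i} denotes the integer power of c (c > 0). -/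
open MeasureTheory ProbabilityTheory

namespace CWT

/-- First-hitting paths of level `-k`: nonempty lists with entries `≥ -1`, total sum `-k`,
and all proper partial sums `> -k`. -/
def FH (k : ℕ) : Set (List ℤ) :=
  {l | l ≠ [] ∧ (∀ x ∈ l, -1 ≤ x) ∧ l.sum = -(k : ℤ) ∧
    ∀ m, m < l.length → -(k : ℤ) < (l.take m).sum}

noncomputable def Wt (p : ℤ → ENNReal) (l : List ℤ) : ENNReal := (l.map p).prod

lemma sum_getD (l : List ℤ) : l.sum = ∑ j ∈ Finset.range l.length, l.getD j 0 := by
  induction l with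
  | nil => simp
  | cons x t ih =>
    simp only [List.sum_cons, List.length_cons, Finset.sum_range_succ']
    simp [ih, add_comm]

lemma prod_getD (p : ℤ → ENNReal) (l : List ℤ) :
    Wt p l = ∏ j ∈ Finset.range l.length, p (l.getD j 0) := by
  induction l with
  | nil => simp [Wt]
  | cons x t ih =>
    simp only [Wt, List.map_cons, List.prod_cons, List.length_cons, Finset.prod_range_succ']
    rw [Wt] at ih
    simp [ih, mul_comm]

/-- Skip-free intermediate value: a partial-sum walk with steps `≥ -1` hits every
level between `0` and any value it goes (weakly) below. -/
lemma exists_take_sum_eq (l : List ℤ) (hl : ∀ x ∈ l, -1 ≤ x) (t : ℤ) (ht : t ≤ 0) :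
    ∀ m, (l.take m).sum ≤ t → ∃ m', m' ≤ m ∧ (l.take m').sum = t := by
  intro m
  induction m with
  | zero =>
    intro h
    simp only [List.take_zero, List.sum_nil] at h
    exact ⟨0, le_rfl, by simp; omega⟩
  | succ m ih =>
    intro h
    by_cases hlen : m < l.length
    · by_cases h' : (l.take m).sum ≤ t
      · obtain ⟨m', hm', he⟩ := ih h'
        exact ⟨m', hm'.trans (Nat.le_succ m), he⟩
      · have step : (l.take (m + 1)).sum = (l.take m).sum + l[m] :=
          List.sum_take_succ _ _ hlen
        have hx : -1 ≤ l[m] := hl _ (List.getElem_mem hlen)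
        exact ⟨m + 1, le_rfl, by omega⟩
    · have heq : l.take (m + 1) = l.take m := by
        rw [List.take_of_length_le (by omega), List.take_of_length_le (by omega)]
      rw [heq] at h
      obtain ⟨m', hm', he⟩ := ih h
      exact ⟨m', hm'.trans (Nat.le_succ m), he⟩

/-- Two first-hitting paths, one a pointwise prefix of the other, are equal. -/
lemma FH_prefix {k : ℕ} {l l' : List ℤ} (hl : l ∈ FH k) (hl' : l' ∈ FH k)
    (hlen : l.length ≤ l'.length)
    (hpre : ∀ j, j < l.length → l.getD j 0 = l'.getD j 0) : l = l' := by
  obtain ⟨-, -, hsum, -⟩ := hl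
  obtain ⟨-, -, hsum', hpart'⟩ := hl'
  have hteq : l = l'.take l.length := by
    apply List.ext_getElem
    · rw [List.length_take]; omega
    · intro i h1 h2
      have hi : i < l.length := h1
      have : l.getD i 0 = l'.getD i 0 := hpre i hi
      rw [List.getD_eq_getElem _ _ hi, List.getD_eq_getElem _ _ (by omega)] at this
      simpa [List.getElem_take] using this
  rcases eq_or_lt_of_le hlen with he | hlt
  · rw [hteq, he, List.take_length]
  · exfalso
    have := hpart' l.length hlt
    rw [← hteq, hsum] at this
    omega

lemma append_mem_FH {k : ℕ} (hk : 1 ≤ k) {l₁ l₂ : List ℤ}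
    (h1 : l₁ ∈ FH 1) (h2 : l₂ ∈ FH k) : (l₁ ++ l₂) ∈ FH (k + 1) := by
  obtain ⟨hne1, hge1, hsum1, hpart1⟩ := h1
  obtain ⟨hne2, hge2, hsum2, hpart2⟩ := h2
  refine ⟨by simp [hne1], ?_, ?_, ?_⟩
  · intro x hx
    rcases List.mem_append.mp hx with h | h
    · exact hge1 x h
    · exact hge2 x h
  · rw [List.sum_append, hsum1, hsum2]; push_cast; ring
  · intro m hm
    rw [List.length_append] at hm
    by_cases hm1 : m ≤ l₁.length
    · rw [List.take_append_of_le_length hm1]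
      rcases eq_or_lt_of_le hm1 with he | hlt
      · rw [he, List.take_length, hsum1]; push_cast; omega
      · have := hpart1 m hlt; push_cast; omega
    · have hrw : m = l₁.length + (m - l₁.length) := by omega
      rw [hrw, List.take_add, List.take_left, List.drop_left, List.sum_append, hsum1]
      have := hpart2 (m - l₁.length) (by omega)
      push_cast at this ⊢; omega

lemma split_FH {k : ℕ} (hk : 1 ≤ k) {l : List ℤ} (hl : l ∈ FH (k + 1)) :
    ∃ l₁ ∈ FH 1, ∃ l₂ ∈ FH k, l = l₁ ++ l₂ := by
  obtain ⟨hne, hge, hsum, hpart⟩ := hl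
  have hex : ∃ m, m ≤ l.length ∧ (l.take m).sum = -1 := by
    obtain ⟨m', hm', he⟩ := exists_take_sum_eq l hge (-1) (by omega) l.length
      (by rw [List.take_length, hsum]; push_cast; omega)
    exact ⟨m', hm', he⟩
  classical
  set m₀ := Nat.find hex with hm₀def
  obtain ⟨hm₀le, hspec⟩ : m₀ ≤ l.length ∧ (l.take m₀).sum = -1 := Nat.find_spec hex
  have hmin : ∀ m, m < m₀ → ¬(m ≤ l.length ∧ (l.take m).sum = -1) :=
    fun m hm => Nat.find_min hex hm
  have hm₀pos : 1 ≤ m₀ := by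
    rcases Nat.eq_zero_or_pos m₀ with h | h
    · rw [h] at hspec; simp at hspec
    · exact h
  have hm₀lt : m₀ < l.length := by
    rcases eq_or_lt_of_le hm₀le with h | h
    · exfalso
      rw [h, List.take_length, hsum] at hspec
      push_cast at hspec; omega
    · exact h
  have hpartpos : ∀ m, m < m₀ → -1 < (l.take m).sum := by
    intro m hm
    by_contra hcon
    push_neg at hcon
    obtain ⟨m', hm', he⟩ := exists_take_sum_eq l hge (-1) (by omega) m hcon
    exact hmin m' (by omega) ⟨by omega, he⟩
  have hsplitsum : (l.take m₀).sum + (l.drop m₀).sum = l.sum := by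
    rw [← List.sum_append, List.take_append_drop]
  refine ⟨l.take m₀, ⟨?_, ?_, ?_, ?_⟩, l.drop m₀, ⟨?_, ?_, ?_, ?_⟩,
    (List.take_append_drop m₀ l).symm⟩
  · intro h
    rw [h] at hspec; simp at hspec
  · intro x hx; exact hge x (List.mem_of_mem_take hx)
  · rw [hspec]; norm_num
  · intro m hm
    rw [List.length_take] at hm
    have hmlt : m < m₀ := by omega
    rw [List.take_take, min_eq_left hmlt.le]
    have := hpartpos m hmlt
    push_cast; omega
  · intro h
    have hld : l.length - m₀ = 0 := by rw [← List.length_drop, h]; simp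
    omega
  · intro x hx; exact hge x (List.mem_of_mem_drop hx)
  · rw [hspec, hsum] at hsplitsum
    push_cast at hsplitsum ⊢; omega
  · intro m hm
    rw [List.length_drop] at hm
    have key : (l.take (m₀ + m)).sum = (l.take m₀).sum + ((l.drop m₀).take m).sum := by
      rw [List.take_add, List.sum_append]
    have := hpart (m₀ + m) (by omega)
    rw [key, hspec] at this
    push_cast at this ⊢; omega
lemma Wt_append (p : ℤ → ENNReal) (l₁ l₂ : List ℤ) :
    Wt p (l₁ ++ l₂) = Wt p l₁ * Wt p l₂ := by simp [Wt]

noncomputable def F (p : ℤ → ENNReal) (k : ℕ) : ENNReal := ∑' l : FH k, Wt p l.1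

lemma F_succ (p : ℤ → ENNReal) {k : ℕ} (hk : 1 ≤ k) : F p (k + 1) = F p 1 * F p k := by
  classical
  set φ : FH 1 × FH k → FH (k + 1) := fun x =>
    ⟨x.1.1 ++ x.2.1, append_mem_FH hk x.1.2 x.2.2⟩ with hφ
  have hbij : Function.Bijective φ := by
    constructor
    · rintro ⟨⟨l₁, h1⟩, ⟨l₂, h2⟩⟩ ⟨⟨l₁', h1'⟩, ⟨l₂', h2'⟩⟩ heq
      simp only [hφ, Subtype.mk.injEq] at heq
      have hpre : ∀ (a b t t' : List ℤ), a ∈ FH 1 → b ∈ FH 1 → a.length ≤ b.length →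
          a ++ t = b ++ t' → a = b := by
        intro a b t t' hha hhb hlen he
        refine FH_prefix hha hhb hlen ?_
        intro j hj
        have h1j : (a ++ t).getD j 0 = a.getD j 0 := List.getD_append _ _ _ _ hj
        have h2j : (b ++ t').getD j 0 = b.getD j 0 := List.getD_append _ _ _ _ (by omega)
        rw [← h1j, ← h2j, he]
      have h11 : l₁ = l₁' := by
        rcases le_total l₁.length l₁'.length with h | h
        · exact hpre _ _ _ _ h1 h1' h heq
        · exact (hpre _ _ _ _ h1' h1 h heq.symm).symm
      subst h11
      have h22 : l₂ = l₂' := by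
        have := heq
        rwa [List.append_cancel_left_eq] at this
      simp [h22]
    · rintro ⟨l, hl⟩
      obtain ⟨l₁, h1, l₂, h2, he⟩ := split_FH hk hl
      exact ⟨(⟨l₁, h1⟩, ⟨l₂, h2⟩), by simp [hφ, ← he]⟩
  have := (Equiv.ofBijective φ hbij).tsum_eq (f := fun y : FH (k + 1) => Wt p y.1)
  rw [F, ← this]
  have hterm : ∀ x : FH 1 × FH k,
      Wt p ((Equiv.ofBijective φ hbij) x).1 = Wt p x.1.1 * Wt p x.2.1 := by
    intro x
    simp [Equiv.ofBijective, hφ, Wt_append]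
  rw [tsum_congr hterm, ENNReal.tsum_prod']
  have h1 : ∀ x : FH 1, ∑' y : FH k, Wt p x.1 * Wt p y.1 = Wt p x.1 * F p k := by
    intro x; rw [ENNReal.tsum_mul_left]; rfl
  rw [tsum_congr h1, ENNReal.tsum_mul_right]
  rfl

lemma F_pow (p : ℤ → ENNReal) : ∀ k : ℕ, 1 ≤ k → F p k = (F p 1) ^ k := by
  intro k
  induction k with
  | zero => omega
  | succ k ih =>
    intro _
    rcases Nat.eq_zero_or_pos k with h | h
    · subst h; simp
    · rw [F_succ p h, ih h, ← pow_succ']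

lemma ofFn_take_sum (f : ℕ → ℤ) (r : ℕ) :
    ∀ m, m ≤ r → ((List.ofFn fun j : Fin r => f j).take m).sum = ∑ j ∈ Finset.range m, f j := by
  intro m
  induction m with
  | zero => simp
  | succ m ih =>
    intro hm
    have hlt : m < (List.ofFn fun j : Fin r => f j).length := by simp; omega
    rw [List.sum_take_succ _ _ hlt, ih (by omega), Finset.sum_range_succ]
    congr 1
    simp

lemma ofFn_getD (f : ℕ → ℤ) (r j : ℕ) (hj : j < r) :
    (List.ofFn fun i : Fin r => f i).getD j 0 = f j := by
  rw [List.getD_eq_getElem _ _ (by simp; omega)]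
  simp
section Measure

variable {Ω : Type*} [MeasureSpace Ω] [IsProbabilityMeasure (ℙ : Measure Ω)]
  (X : ℕ → Ω → ℤ)

lemma cylinder_prob
    (hindep : iIndepFun X ℙ)
    (hident : ∀ n, IdentDistrib (X n) (X 0) ℙ ℙ)
    (b : ℕ → ℤ) (M : ℕ) :
    ℙ {ω | ∀ i, i < M → X i ω = b i} = ∏ i ∈ Finset.range M, ℙ {ω | X 0 ω = b i} := by
  have hset : {ω | ∀ i, i < M → X i ω = b i} = ⋂ i ∈ Finset.range M, X i ⁻¹' {b i} := by
    ext ω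
    simp [Set.mem_iInter, Finset.mem_range, Set.mem_preimage]
  rw [hset, hindep.measure_inter_preimage_eq_mul (Finset.range M)
    (sets := fun i => {b i}) (fun i _ => measurableSet_singleton (b i))]
  refine Finset.prod_congr rfl fun i _ => ?_
  have h := (hident i).measure_mem_eq (measurableSet_singleton (b i))
  have e1 : X i ⁻¹' {b i} = {ω | X i ω = b i} := rfl
  have e2 : X 0 ⁻¹' {b i} = {ω | X 0 ω = b i} := rfl
  rw [e1, e2] at h
  exact h

lemma bad_null (hident : ∀ n, IdentDistrib (X n) (X 0) ℙ ℙ)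
    (hskip : ∀ᵐ ω ∂ℙ, -1 ≤ X 0 ω) :
    ℙ (⋃ j, {ω | X j ω < -1}) = 0 := by
  apply measure_iUnion_null
  intro j
  have h0 : ℙ {ω | X 0 ω < -1} = 0 := by
    have he : {ω | X 0 ω < -1} = {ω | ¬(-1 ≤ X 0 ω)} := by ext ω; simp [not_le]
    rw [he]
    exact ae_iff.mp hskip
  have h := (hident j).measure_mem_eq (s := {z : ℤ | z < -1}) .of_discrete
  have e1 : X j ⁻¹' {z : ℤ | z < -1} = {ω | X j ω < -1} := rfl
  have e2 : X 0 ⁻¹' {z : ℤ | z < -1} = {ω | X 0 ω < -1} := rfl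
  rw [e1, e2] at h
  rw [h, h0]

lemma hit_decomp (hmeas : ∀ n, Measurable (X n))
    (hindep : iIndepFun X ℙ)
    (hident : ∀ n, IdentDistrib (X n) (X 0) ℙ ℙ)
    (hskip : ∀ᵐ ω ∂ℙ, -1 ≤ X 0 ω)
    (n : ℕ) (a : ℕ → ℤ) (k : ℕ) (hk : 1 ≤ k) :
    ℙ {ω | (∀ i, i < n → X i ω = a i) ∧
        ∃ m : ℕ, 1 ≤ m ∧ (∑ j ∈ Finset.range m, X (n + j) ω) = -(k : ℤ)} =
      (∏ i ∈ Finset.range n, ℙ {ω | X 0 ω = a i}) *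
        F (fun z => ℙ {ω | X 0 ω = z}) k := by
  classical
  set p : ℤ → ENNReal := fun z => ℙ {ω | X 0 ω = z} with hp
  set A : FH k → Set Ω := fun l =>
    {ω | (∀ i, i < n → X i ω = a i) ∧
      ∀ j, j < l.1.length → X (n + j) ω = l.1.getD j 0} with hA
  -- probability of each piece
  have hAprob : ∀ l : FH k,
      ℙ (A l) = (∏ i ∈ Finset.range n, p (a i)) * Wt p l.1 := by
    intro l
    have hset : A l = {ω | ∀ i, i < n + l.1.length →
        X i ω = (fun i => if i < n then a i else l.1.getD (i - n) 0) i} := by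
      ext ω
      constructor
      · rintro ⟨h1, h2⟩ i hi
        by_cases hin : i < n
        · simp only [if_pos hin]; exact h1 i hin
        · simp only [if_neg hin]
          have : i = n + (i - n) := by omega
          rw [this]
          have := h2 (i - n) (by omega)
          simpa using this
      · intro h
        constructor
        · intro i hi
          have := h i (by omega)
          simpa [if_pos hi] using this
        · intro j hj
          have := h (n + j) (by omega)
          simp only [if_neg (by omega : ¬ n + j < n)] at this
          simpa using this
    rw [hset, cylinder_prob X hindep hident, Finset.prod_range_add]
    congr 1
    · refine Finset.prod_congr rfl fun i hi => ?_
      rw [Finset.mem_range] at hi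
      simp [if_pos hi, hp]
    · rw [prod_getD p l.1]
      refine Finset.prod_congr rfl fun j hj => ?_
      simp [if_neg (by omega : ¬ n + j < n), hp]
  -- measurability
  have hAmeas : ∀ l : FH k, MeasurableSet (A l) := by
    intro l
    have hset : A l = (⋂ i ∈ Finset.range n, X i ⁻¹' {a i}) ∩
        ⋂ j ∈ Finset.range l.1.length, X (n + j) ⁻¹' {l.1.getD j 0} := by
      ext ω
      simp [hA, Set.mem_iInter, Set.mem_preimage]
    rw [hset]
    exact (Finset.measurableSet_biInter _ fun i _ =>
        (hmeas i) (measurableSet_singleton _)).inter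
      (Finset.measurableSet_biInter _ fun j _ =>
        (hmeas (n + j)) (measurableSet_singleton _))
  -- pairwise disjoint
  have hdisj : Pairwise (Function.onFun Disjoint A) := by
    intro l l' hne
    rw [Function.onFun, Set.disjoint_left]
    intro ω hω hω'
    have key : ∀ u v : FH k, u.1.length ≤ v.1.length → ω ∈ A u → ω ∈ A v →
        u.1 = v.1 := by
      rintro u v hlen ⟨-, hu⟩ ⟨-, hv⟩
      refine FH_prefix u.2 v.2 hlen fun j hj => ?_
      rw [← hu j hj, ← hv j (by omega)]
    apply hne
    apply Subtype.ext
    rcases le_total l.1.length l'.1.length with h | h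
    · exact key l l' h hω hω'
    · exact (key l' l h hω' hω).symm
  -- union inclusion, exact direction
  have hsub1 : (⋃ l : FH k, A l) ⊆ {ω | (∀ i, i < n → X i ω = a i) ∧
      ∃ m : ℕ, 1 ≤ m ∧ (∑ j ∈ Finset.range m, X (n + j) ω) = -(k : ℤ)} := by
    intro ω hω
    rw [Set.mem_iUnion] at hω
    obtain ⟨l, h1, h2⟩ := hω
    obtain ⟨hne, -, hsum, -⟩ := l.2
    refine ⟨h1, l.1.length, List.length_pos_iff.mpr hne, ?_⟩
    have : ∑ j ∈ Finset.range l.1.length, X (n + j) ω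
        = ∑ j ∈ Finset.range l.1.length, l.1.getD j 0 :=
      Finset.sum_congr rfl fun j hj => h2 j (Finset.mem_range.mp hj)
    rw [this, ← sum_getD, hsum]
  -- inclusion up to the null set
  have hsub2 : {ω | (∀ i, i < n → X i ω = a i) ∧
      ∃ m : ℕ, 1 ≤ m ∧ (∑ j ∈ Finset.range m, X (n + j) ω) = -(k : ℤ)}
      ⊆ (⋃ l : FH k, A l) ∪ ⋃ j, {ω | X j ω < -1} := by
    rintro ω ⟨h1, m, hm, hsum⟩
    by_cases hgood : ∀ j, -1 ≤ X j ω
    · left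
      have hQ : ∃ m, 1 ≤ m ∧ ∑ j ∈ Finset.range m, X (n + j) ω = -(k : ℤ) :=
        ⟨m, hm, hsum⟩
      set m₀ := Nat.find hQ with hm₀
      obtain ⟨hm₀pos, hm₀sum⟩ := Nat.find_spec hQ
      set l : List ℤ := List.ofFn (fun j : Fin m₀ => X (n + j) ω) with hldef
      have hlen : l.length = m₀ := by simp [hldef]
      have hentries : ∀ x ∈ l, -1 ≤ x := by
        intro x hx
        rw [hldef, List.mem_ofFn] at hx
        obtain ⟨j, rfl⟩ := hx
        exact hgood _
      have hlsum : l.sum = -(k : ℤ) := by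
        calc l.sum = (l.take m₀).sum := by rw [List.take_of_length_le hlen.le]
          _ = ∑ j ∈ Finset.range m₀, X (n + j) ω := by
              rw [hldef]; exact ofFn_take_sum (fun j => X (n + j) ω) m₀ m₀ le_rfl
          _ = -(k : ℤ) := hm₀sum
      have hlmem : l ∈ FH k := by
        refine ⟨by intro h; rw [h] at hlen; simp at hlen; omega, hentries, hlsum, ?_⟩
        intro m' hm'
        rw [hlen] at hm'
        by_contra hcon
        push_neg at hcon
        obtain ⟨m'', hm''le, he⟩ := exists_take_sum_eq l hentries (-(k : ℤ))
          (by push_cast; omega) m' hcon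
        have hm''pos : 1 ≤ m'' := by
          rcases Nat.eq_zero_or_pos m'' with h | h
          · rw [h] at he; simp at he; omega
          · exact h
        have : ∑ j ∈ Finset.range m'', X (n + j) ω = -(k : ℤ) := by
          rw [← ofFn_take_sum (fun j => X (n + j) ω) m₀ m'' (by omega), ← hldef, he]
        exact Nat.find_min hQ (by omega) ⟨hm''pos, this⟩
      rw [Set.mem_iUnion]
      refine ⟨⟨l, hlmem⟩, h1, ?_⟩
      intro j hj
      rw [hlen] at hj
      have hgd : l.getD j 0 = X (n + j) ω := by
        rw [hldef]; exact ofFn_getD (fun j => X (n + j) ω) m₀ j hj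
      exact hgd.symm
    · right
      push_neg at hgood
      obtain ⟨j, hj⟩ := hgood
      exact Set.mem_iUnion.mpr ⟨j, by simpa using hj⟩
  -- conclude
  have hU : ℙ (⋃ l : FH k, A l) = ∑' l : FH k, ℙ (A l) :=
    measure_iUnion hdisj hAmeas
  have hEeq : ℙ {ω | (∀ i, i < n → X i ω = a i) ∧
      ∃ m : ℕ, 1 ≤ m ∧ (∑ j ∈ Finset.range m, X (n + j) ω) = -(k : ℤ)}
      = ℙ (⋃ l : FH k, A l) := by
    refine le_antisymm ?_ (measure_mono hsub1)
    calc ℙ {ω | (∀ i, i < n → X i ω = a i) ∧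
        ∃ m : ℕ, 1 ≤ m ∧ (∑ j ∈ Finset.range m, X (n + j) ω) = -(k : ℤ)}
        ≤ ℙ ((⋃ l : FH k, A l) ∪ ⋃ j, {ω | X j ω < -1}) := measure_mono hsub2
      _ ≤ ℙ (⋃ l : FH k, A l) + ℙ (⋃ j, {ω | X j ω < -1}) := measure_union_le _ _
      _ = ℙ (⋃ l : FH k, A l) := by rw [bad_null X hident hskip, add_zero]
  rw [hEeq, hU, tsum_congr hAprob, ENNReal.tsum_mul_left]
  rfl

end Measure

lemma prod_zpow_sum (c : ℝ) (hc : c ≠ 0) (n : ℕ) (a : ℕ → ℤ) :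
    ∏ i ∈ Finset.range n, c ^ (a i) = c ^ (∑ i ∈ Finset.range n, a i) := by
  induction n with
  | zero => simp
  | succ m ih => rw [Finset.prod_range_succ, Finset.sum_range_succ, ih, zpow_add₀ hc]

end CWT

/-- The walk conditioned to hit `-1` is the stopped tilted walk: if `E[X_0] > 0`, then
for any admissible initial trajectory `a 0, …, a (n-1)` (all steps `≥ -1`, partial sums
nonnegative before time `n`, total sum `≥ -1`), the probability of following this
trajectory and eventually hitting `-1` equals `c · ∏_{i<n} (P[X_0 = a i] · c^(a i))`. -/
theorem conditioned_walk_is_tilted_walk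
    {Ω : Type*} [MeasureSpace Ω] [IsProbabilityMeasure (ℙ : Measure Ω)]
    (X : ℕ → Ω → ℤ) (hmeas : ∀ n, Measurable (X n))
    (hindep : iIndepFun X ℙ)
    (hident : ∀ n, IdentDistrib (X n) (X 0) ℙ ℙ)
    (hskip : ∀ᵐ ω ∂ℙ, -1 ≤ X 0 ω)
    (hneg : 0 < ℙ {ω | X 0 ω = -1})
    (hint : Integrable (fun ω => (X 0 ω : ℝ)) ℙ)
    (hmean : 0 < ∫ ω, (X 0 ω : ℝ) ∂ℙ)
    (c : ℝ)
    (hc : c = (ℙ {ω | ∃ n : ℕ, 1 ≤ n ∧ (∑ i ∈ Finset.range n, X i ω) = -1}).toReal)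
    (n : ℕ) (hn : 1 ≤ n) (a : ℕ → ℤ)
    (ha : ∀ i : ℕ, i < n → -1 ≤ a i)
    (hpartial : ∀ m : ℕ, m < n → 0 ≤ ∑ i ∈ Finset.range m, a i)
    (htotal : -1 ≤ ∑ i ∈ Finset.range n, a i) :
    (ℙ {ω | (∀ i : ℕ, i < n → X i ω = a i) ∧
        ∃ m : ℕ, 1 ≤ m ∧ (∑ i ∈ Finset.range m, X i ω) = -1}).toReal =
      c * ∏ i ∈ Finset.range n, ((ℙ {ω | X 0 ω = a i}).toReal * c ^ (a i)) := by
  classical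
  set s : ℤ := ∑ i ∈ Finset.range n, a i with hs
  -- positivity of c
  have hHsub : {ω | X 0 ω = (-1 : ℤ)} ⊆
      {ω | ∃ m : ℕ, 1 ≤ m ∧ (∑ i ∈ Finset.range m, X i ω) = -1} := by
    intro ω hω
    exact ⟨1, le_rfl, by simpa [Finset.sum_range_one] using hω⟩
  have hHpos : 0 < ℙ {ω | ∃ m : ℕ, 1 ≤ m ∧ (∑ i ∈ Finset.range m, X i ω) = -1} :=
    lt_of_lt_of_le hneg (measure_mono hHsub)
  have hcpos : 0 < c := by
    rw [hc]
    exact ENNReal.toReal_pos hHpos.ne' (measure_ne_top _ _)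
  have hcne : c ≠ 0 := hcpos.ne'
  -- identify the hitting probability with F 1
  have hH : ℙ {ω | ∃ m : ℕ, 1 ≤ m ∧ (∑ i ∈ Finset.range m, X i ω) = -1}
      = CWT.F (fun z => ℙ {ω | X 0 ω = z}) 1 := by
    have hd := CWT.hit_decomp X hmeas hindep hident hskip 0 a 1 le_rfl
    simp only [Finset.range_zero, Finset.prod_empty, one_mul, Nat.cast_one] at hd
    rw [← hd]
    congr 1
    ext ω
    simp
  have hcEq : c = (CWT.F (fun z => ℙ {ω | X 0 ω = z}) 1).toReal := by
    rw [hc, hH]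
  -- rewriting the right-hand side
  have hprodR : ∏ i ∈ Finset.range n, ((ℙ {ω | X 0 ω = a i}).toReal * c ^ (a i))
      = (∏ i ∈ Finset.range n, (ℙ {ω | X 0 ω = a i}).toReal) * c ^ s := by
    rw [Finset.prod_mul_distrib, CWT.prod_zpow_sum c hcne, ← hs]
  rcases (by omega : s = -1 ∨ 0 ≤ s) with hcase | hcase
  · -- total sum is exactly -1 : the trajectory itself hits -1 at time n
    have hEset : {ω | (∀ i : ℕ, i < n → X i ω = a i) ∧
        ∃ m : ℕ, 1 ≤ m ∧ (∑ i ∈ Finset.range m, X i ω) = -1}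
        = {ω | ∀ i, i < n → X i ω = a i} := by
      ext ω
      constructor
      · exact fun h => h.1
      · intro h
        refine ⟨h, n, hn, ?_⟩
        rw [Finset.sum_congr rfl fun i hi => h i (Finset.mem_range.mp hi), ← hs, hcase]
    rw [hEset, CWT.cylinder_prob X hindep hident a n, ENNReal.toReal_prod, hprodR,
      hcase, zpow_neg_one]
    field_simp
  · -- total sum s ≥ 0 : must hit -(s+1) after time n
    set k : ℕ := (s + 1).toNat with hkdef
    have hkz : (k : ℤ) = s + 1 := Int.toNat_of_nonneg (by omega)
    have hk1 : 1 ≤ k := by omega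
    have hEset : {ω | (∀ i : ℕ, i < n → X i ω = a i) ∧
        ∃ m : ℕ, 1 ≤ m ∧ (∑ i ∈ Finset.range m, X i ω) = -1}
        = {ω | (∀ i, i < n → X i ω = a i) ∧
            ∃ m : ℕ, 1 ≤ m ∧ (∑ j ∈ Finset.range m, X (n + j) ω) = -(k : ℤ)} := by
      ext ω
      constructor
      · rintro ⟨h1, m, hm1, hsum⟩
        have hstep : ∀ m', m' ≤ n → ∑ i ∈ Finset.range m', X i ω
            = ∑ i ∈ Finset.range m', a i := by
          intro m' hm'
          refine Finset.sum_congr rfl fun i hi => ?_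
          exact h1 i (by have := Finset.mem_range.mp hi; omega)
        have hmn : n < m := by
          by_contra hcon
          push_neg at hcon
          rw [hstep m hcon] at hsum
          rcases eq_or_lt_of_le hcon with he | hlt
          · rw [he, ← hs] at hsum; omega
          · have := hpartial m hlt; omega
        refine ⟨h1, m - n, by omega, ?_⟩
        have hsplitm := Finset.sum_range_add (fun i => X i ω) n (m - n)
        rw [show n + (m - n) = m by omega] at hsplitm
        have hfirst : ∑ i ∈ Finset.range n, X i ω = s := by
          rw [hstep n le_rfl, hs]
        rw [hsum, hfirst] at hsplitm
        omega
      · rintro ⟨h1, r, hr, hsum⟩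
        refine ⟨h1, n + r, by omega, ?_⟩
        rw [Finset.sum_range_add]
        have hfirst : ∑ i ∈ Finset.range n, X i ω = s := by
          rw [Finset.sum_congr rfl fun i hi => h1 i (Finset.mem_range.mp hi), hs]
        omega
    rw [hEset, CWT.hit_decomp X hmeas hindep hident hskip n a k hk1,
      CWT.F_pow _ k hk1, ENNReal.toReal_mul, ENNReal.toReal_pow, ENNReal.toReal_prod,
      ← hcEq, hprodR]
    have hck : (c : ℝ) ^ (k : ℕ) = c * c ^ s := by
      rw [← zpow_natCast c k, hkz, zpow_add₀ hcne, zpow_one]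
      ring
    rw [hck]
    ring
end

section
/- Suppose moreover 0 < E[X_0]. Then the tilted step distribution k ↦ P[X_0 = k]·c^k (k ≥ −1) has strictly negative mean: the series ∑_{k=0}^{∞} k · P[X_0 = k] · c^k is summable and ∑_{k=0}^{∞} k · P[X_0 = k] · c^k < P[X_0 = −1] / c. -/
open MeasureTheory ProbabilityTheory
open scoped ENNReal NNReal
set_option linter.unusedSectionVars false

namespace TiltedWalkAux

variable {Ω : Type*} [MeasureSpace Ω] [IsProbabilityMeasure (ℙ : Measure Ω)]
variable (X : ℕ → Ω → ℤ)

/-- Partial sum of the walk shifted by `t`. -/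
def S (t n : ℕ) (ω : Ω) : ℤ := ∑ i ∈ Finset.range n, X (t + i) ω

/-- The event that the walk shifted by `t` hits `-m`. -/
def Hit (t m : ℕ) : Set Ω := {ω | ∃ n, 1 ≤ n ∧ S X t n ω = -(m : ℤ)}

/-- Truncated hitting event. -/
def HitLe (t m N : ℕ) : Set Ω := {ω | ∃ n, 1 ≤ n ∧ n ≤ N ∧ S X t n ω = -(m : ℤ)}

/-- The tuple of `N` steps starting at time `t`. -/
def tup (t N : ℕ) (ω : Ω) : Fin N → ℤ := fun j => X (t + j) ω

/-- partial sums of a finite tuple -/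
def psum {N : ℕ} (u : Fin N → ℤ) (n : ℕ) : ℤ := ∑ j : Fin N, if (j : ℕ) < n then u j else 0

variable {X}

omit [MeasureSpace Ω] [IsProbabilityMeasure (ℙ : Measure Ω)] in
lemma mpsum {N : ℕ} (n : ℕ) : Measurable (fun u : Fin N → ℤ => psum u n) := by
  apply Finset.measurable_sum
  intro j _
  by_cases h : (j : ℕ) < n <;> simp [h, measurable_pi_apply]

section Meas

variable (hmeas : ∀ n, Measurable (X n))
include hmeas

lemma mS (t n : ℕ) : Measurable (S X t n) := by
  apply Finset.measurable_sum
  intro i _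
  exact hmeas _

lemma mHit (t m : ℕ) : MeasurableSet (Hit X t m) := by
  have : Hit X t m = ⋃ n, ⋃ _h : 1 ≤ n, {ω | S X t n ω = -(m : ℤ)} := by
    ext ω; simp [Hit]
  rw [this]
  exact MeasurableSet.iUnion fun n => MeasurableSet.iUnion fun _ =>
    (mS hmeas t n) (measurableSet_singleton _)

lemma mHitLe (t m N : ℕ) : MeasurableSet (HitLe X t m N) := by
  have : HitLe X t m N = ⋃ n, ⋃ _h : 1 ≤ n ∧ n ≤ N, {ω | S X t n ω = -(m : ℤ)} := by
    ext ω; simp [HitLe]; tauto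
  rw [this]
  exact MeasurableSet.iUnion fun n => MeasurableSet.iUnion fun _ =>
    (mS hmeas t n) (measurableSet_singleton _)

lemma mtup (t N : ℕ) : Measurable (tup X t N) :=
  measurable_pi_lambda _ fun j => hmeas _

end Meas

lemma psum_tup {t N n : ℕ} (hn : n ≤ N) (ω : Ω) :
    psum (tup X t N ω) n = S X t n ω := by
  unfold psum tup S
  rw [Fin.sum_univ_eq_sum_range (fun j => if j < n then X (t + j) ω else 0) N]
  rw [← Finset.sum_subset (Finset.range_subset_range.2 hn) (fun x _ hx => if_neg (by simpa using hx))]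
  exact Finset.sum_congr rfl fun x hx => if_pos (Finset.mem_range.1 hx)

section Law

variable (hmeas : ∀ n, Measurable (X n))
variable (hindep : iIndepFun X ℙ)
variable (hident : ∀ n, IdentDistrib (X n) (X 0) ℙ ℙ)
include hmeas hindep hident

lemma meas_singleton_eq (i : ℕ) (a : ℤ) :
    ℙ {ω | X i ω = a} = ℙ {ω | X 0 ω = a} := by
  have h1 : {ω | X i ω = a} = X i ⁻¹' {a} := rfl
  have h2 : {ω | X 0 ω = a} = X 0 ⁻¹' {a} := rfl
  rw [h1, h2, ← Measure.map_apply (hmeas i) (measurableSet_singleton a),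
    ← Measure.map_apply (hmeas 0) (measurableSet_singleton a), (hident i).map_eq]

lemma law_tup (t N : ℕ) :
    Measure.map (tup X t N) ℙ = Measure.map (tup X 0 N) ℙ := by
  apply Measure.ext_of_singleton
  intro v
  have key : ∀ s : ℕ, ℙ (tup X s N ⁻¹' {v})
      = ∏ j ∈ Finset.range N, ℙ {ω | X 0 ω = (if h : j < N then v ⟨j, h⟩ else 0)} := by
    intro s
    have hset : tup X s N ⁻¹' {v}
        = ⋂ i ∈ Finset.Ico s (s + N), X i ⁻¹' {(if h : i - s < N then v ⟨i - s, h⟩ else 0)} := by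
      ext ω
      simp only [Set.mem_preimage, Set.mem_singleton_iff, Set.mem_iInter, Finset.mem_Ico, funext_iff]
      constructor
      · rintro h i ⟨hi1, hi2⟩
        have hlt : i - s < N := by omega
        rw [dif_pos hlt]
        have : s + (⟨i - s, hlt⟩ : Fin N) = i := by simp; omega
        simpa [tup, this] using h ⟨i - s, hlt⟩
      · intro h j
        have := h (s + j) ⟨by omega, by omega⟩
        have hlt : s + (j : ℕ) - s < N := by omega
        rw [dif_pos hlt] at this
        have hj : (⟨s + (j : ℕ) - s, hlt⟩ : Fin N) = j := by
          ext; simp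
        rw [hj] at this
        exact this
    rw [hset, hindep.meas_biInter (fun i _ => ⟨{(if h : i - s < N then v ⟨i - s, h⟩ else 0)},
      measurableSet_singleton _, rfl⟩)]
    rw [Finset.prod_Ico_eq_prod_range]
    simp only [Nat.add_sub_cancel_left, Nat.add_sub_cancel]
    apply Finset.prod_congr rfl
    intro j hj
    have hlt : j < N := by simpa using hj
    rw [dif_pos hlt]
    exact meas_singleton_eq hmeas hindep hident _ _
  rw [Measure.map_apply (mtup hmeas t N) (measurableSet_singleton v),
    Measure.map_apply (mtup hmeas 0 N) (measurableSet_singleton v), key t, key 0]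

lemma measure_tup_preimage (t N : ℕ) {B : Set (Fin N → ℤ)} (hB : MeasurableSet B) :
    ℙ (tup X t N ⁻¹' B) = ℙ (tup X 0 N ⁻¹' B) := by
  rw [← Measure.map_apply (mtup hmeas t N) hB, ← Measure.map_apply (mtup hmeas 0 N) hB,
    law_tup hmeas hindep hident]

lemma indep_tup (t N : ℕ) : IndepFun (tup X 0 t) (tup X t N) ℙ := by
  have h := hindep.indepFun_finset (Finset.range t) (Finset.Ico t (t + N))
    (by simp [Finset.disjoint_left]; omega) hmeas
  have hφ : Measurable (fun (u : (i : (Finset.range t : Finset ℕ)) → ℤ) (j : Fin t) =>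
      u ⟨j, Finset.mem_range.2 j.2⟩) :=
    measurable_pi_lambda _ fun j => measurable_pi_apply _
  have hψ : Measurable (fun (u : (i : (Finset.Ico t (t + N) : Finset ℕ)) → ℤ) (j : Fin N) =>
      u ⟨t + j, Finset.mem_Ico.2 ⟨by omega, by omega⟩⟩) :=
    measurable_pi_lambda _ fun j => measurable_pi_apply _
  have e1 : tup X 0 t = (fun (u : (i : (Finset.range t : Finset ℕ)) → ℤ) (j : Fin t) =>
      u ⟨j, Finset.mem_range.2 j.2⟩) ∘ (fun a (i : (Finset.range t : Finset ℕ)) => X i a) := by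
    funext ω j; simp [tup]
  have e2 : tup X t N = (fun (u : (i : (Finset.Ico t (t + N) : Finset ℕ)) → ℤ) (j : Fin N) =>
      u ⟨t + j, Finset.mem_Ico.2 ⟨by omega, by omega⟩⟩) ∘
      (fun a (i : (Finset.Ico t (t + N) : Finset ℕ)) => X i a) := by
    funext ω j; simp [tup]
  rw [e1, e2]
  exact h.comp hφ hψ

lemma indep_event_tup (t N : ℕ) {A : Set (Fin t → ℤ)} {B : Set (Fin N → ℤ)}
    (hA : MeasurableSet A) (hB : MeasurableSet B) :
    ℙ (tup X 0 t ⁻¹' A ∩ tup X t N ⁻¹' B) = ℙ (tup X 0 t ⁻¹' A) * ℙ (tup X t N ⁻¹' B) :=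
  (indep_tup hmeas hindep hident t N).measure_inter_preimage_eq_mul A B hA hB

end Law

section HitEvents

/-- set of tuples whose partial sums hit `-m` by time `N` -/
def Bset (m N : ℕ) : Set (Fin N → ℤ) :=
  {u | ∃ n, 1 ≤ n ∧ n ≤ N ∧ psum u n = -(m : ℤ)}

lemma mBset (m N : ℕ) : MeasurableSet (Bset m N) := by
  have : Bset m N = ⋃ n, ⋃ _h : 1 ≤ n ∧ n ≤ N, {u : Fin N → ℤ | psum u n = -(m : ℤ)} := by
    ext u; simp [Bset]; tauto
  rw [this]
  exact MeasurableSet.iUnion fun n => MeasurableSet.iUnion fun _ =>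
    (mpsum n) (measurableSet_singleton _)

lemma HitLe_eq_preimage (t m N : ℕ) : HitLe X t m N = tup X t N ⁻¹' (Bset m N) := by
  ext ω
  simp only [HitLe, Set.mem_preimage, Bset, Set.mem_setOf_eq]
  constructor
  · rintro ⟨n, h1, h2, h3⟩
    exact ⟨n, h1, h2, by rw [psum_tup h2]; exact h3⟩
  · rintro ⟨n, h1, h2, h3⟩
    exact ⟨n, h1, h2, by rw [← psum_tup h2]; exact h3⟩

lemma Hit_eq_iUnion (t m : ℕ) : Hit X t m = ⋃ N, HitLe X t m N := by
  ext ω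
  simp only [Hit, HitLe, Set.mem_iUnion, Set.mem_setOf_eq]
  constructor
  · rintro ⟨n, h1, h2⟩; exact ⟨n, n, h1, le_rfl, h2⟩
  · rintro ⟨N, n, h1, _, h2⟩; exact ⟨n, h1, h2⟩

lemma HitLe_mono (t m : ℕ) : Monotone (fun N => HitLe X t m N) := by
  intro N M h ω
  rintro ⟨n, h1, h2, h3⟩
  exact ⟨n, h1, h2.trans h, h3⟩

section Law2

variable (hmeas : ∀ n, Measurable (X n))
variable (hindep : iIndepFun X ℙ)
variable (hident : ∀ n, IdentDistrib (X n) (X 0) ℙ ℙ)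
include hmeas hindep hident

lemma law_hit (t m : ℕ) : ℙ (Hit X t m) = ℙ (Hit X 0 m) := by
  rw [Hit_eq_iUnion, Hit_eq_iUnion]
  rw [Directed.measure_iUnion (HitLe_mono t m).directed_le,
    Directed.measure_iUnion (HitLe_mono 0 m).directed_le]
  congr 1
  funext N
  rw [HitLe_eq_preimage, HitLe_eq_preimage,
    measure_tup_preimage hmeas hindep hident t N (mBset m N)]

lemma indep_hit (t m : ℕ) {A : Set (Fin t → ℤ)} (hA : MeasurableSet A) :
    ℙ (tup X 0 t ⁻¹' A ∩ Hit X t m) = ℙ (tup X 0 t ⁻¹' A) * ℙ (Hit X 0 m) := by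
  have hpt : ∀ N, ℙ (tup X 0 t ⁻¹' A ∩ HitLe X t m N)
      = ℙ (tup X 0 t ⁻¹' A) * ℙ (HitLe X 0 m N) := by
    intro N
    rw [HitLe_eq_preimage t m N, indep_event_tup hmeas hindep hident t N hA (mBset m N),
      measure_tup_preimage hmeas hindep hident t N (mBset m N), ← HitLe_eq_preimage]
  have hmono : Monotone (fun N => tup X 0 t ⁻¹' A ∩ HitLe X t m N) := fun N M h =>
    Set.inter_subset_inter_right _ (HitLe_mono t m h)
  rw [Hit_eq_iUnion t m, Set.inter_iUnion, Directed.measure_iUnion hmono.directed_le]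
  simp_rw [hpt]
  rw [← ENNReal.mul_iSup, ← Directed.measure_iUnion (HitLe_mono 0 m).directed_le, ← Hit_eq_iUnion]

end Law2

end HitEvents

section Decomp

omit [MeasureSpace Ω] [IsProbabilityMeasure (ℙ : Measure Ω)] in
/-- discrete IVT for downward skip-free sequences -/
lemma int_ivt (f : ℕ → ℤ) (h0 : f 0 = 0) (hstep : ∀ n, f n - 1 ≤ f (n + 1))
    (a : ℤ) (ha : a ≤ 0) : ∀ n, f n ≤ a → ∃ t, t ≤ n ∧ f t = a := by
  intro n
  induction n with
  | zero => intro h; exact ⟨0, le_rfl, by omega⟩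
  | succ n ih =>
    intro h
    by_cases hn : f n ≤ a
    · obtain ⟨t, ht, hft⟩ := ih hn
      exact ⟨t, ht.trans (Nat.le_succ n), hft⟩
    · push_neg at hn
      have : f (n + 1) = a := le_antisymm h (by have := hstep n; omega)
      exact ⟨n + 1, le_rfl, this⟩

variable (X)

/-- first hitting of `-m` at time `t` -/
def Fst (m t : ℕ) : Set Ω :=
  {ω | S X 0 t ω = -(m : ℤ) ∧ ∀ s < t, S X 0 s ω ≠ -(m : ℤ)}

variable {X}

def Aset (m t : ℕ) : Set (Fin t → ℤ) :=
  {u | psum u t = -(m : ℤ) ∧ ∀ s < t, psum u s ≠ -(m : ℤ)}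

lemma mAset (m t : ℕ) : MeasurableSet (Aset m t) := by
  have : Aset m t = {u : Fin t → ℤ | psum u t = -(m : ℤ)} ∩
      ⋂ s, ⋂ _h : s < t, {u : Fin t → ℤ | psum u s = -(m : ℤ)}ᶜ := by
    ext u; simp [Aset]
  rw [this]
  exact ((mpsum t) (measurableSet_singleton _)).inter
    (MeasurableSet.iInter fun s => MeasurableSet.iInter fun _ =>
      ((mpsum s) (measurableSet_singleton _)).compl)

lemma Fst_eq_preimage (m t : ℕ) : Fst X m t = tup X 0 t ⁻¹' (Aset m t) := by
  ext ω
  simp only [Fst, Aset, Set.mem_preimage, Set.mem_setOf_eq]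
  rw [psum_tup le_rfl]
  constructor
  · rintro ⟨h1, h2⟩
    exact ⟨h1, fun s hs => by rw [psum_tup hs.le]; exact h2 s hs⟩
  · rintro ⟨h1, h2⟩
    exact ⟨h1, fun s hs => by rw [← psum_tup hs.le]; exact h2 s hs⟩

lemma Fst_disjoint (m : ℕ) : Pairwise (Function.onFun Disjoint (Fst X m)) := by
  intro t t' htt'
  rw [Function.onFun, Set.disjoint_left]
  rintro ω ⟨h1, h2⟩ ⟨h1', h2'⟩
  rcases lt_or_gt_of_ne htt' with h | h
  · exact h2' t h h1
  · exact h2 t' h h1'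

lemma Fst_iUnion {m : ℕ} (hm : 1 ≤ m) : ⋃ t, Fst X m t = Hit X 0 m := by
  ext ω
  simp only [Set.mem_iUnion, Hit, Set.mem_setOf_eq]
  constructor
  · rintro ⟨t, h1, _⟩
    refine ⟨t, ?_, h1⟩
    rcases Nat.eq_zero_or_pos t with rfl | h
    · exfalso; simp [S] at h1; omega
    · exact h
  · rintro ⟨n, _, h2⟩
    have hex : ∃ t, S X 0 t ω = -(m : ℤ) := ⟨n, h2⟩
    refine ⟨Nat.find hex, Nat.find_spec hex, fun s hs => Nat.find_min hex hs⟩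

lemma S_add (t n : ℕ) (ω : Ω) : S X 0 (t + n) ω = S X 0 t ω + S X t n ω := by
  induction n with
  | zero => simp [S]
  | succ n ih =>
    have h1 : t + (n + 1) = (t + n) + 1 := rfl
    rw [h1]
    unfold S at *
    rw [Finset.sum_range_succ, Finset.sum_range_succ, ih]
    simp [add_assoc]

lemma decomp {m : ℕ} (hm : 1 ≤ m) :
    Hit X 0 (m + 1) ∩ {ω | ∀ i, -1 ≤ X i ω}
      = (⋃ t, (Fst X m t ∩ Hit X t 1)) ∩ {ω | ∀ i, -1 ≤ X i ω} := by
  ext ω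
  simp only [Set.mem_inter_iff, Set.mem_iUnion, Set.mem_setOf_eq, Hit, Fst]
  constructor
  · rintro ⟨⟨n, hn1, hSn⟩, hG⟩
    refine ⟨?_, hG⟩
    have hstep : ∀ j, S X 0 j ω - 1 ≤ S X 0 (j + 1) ω := by
      intro j
      have := hG j
      have h1 : S X 0 (j + 1) ω = S X 0 j ω + X j ω := by
        unfold S; rw [Finset.sum_range_succ]; simp
      omega
    have hS0 : S X 0 0 ω = 0 := by simp [S]
    have hSnm : S X 0 n ω ≤ -(m : ℤ) := by rw [hSn]; push_cast; omega
    have hex : ∃ t, S X 0 t ω = -(m : ℤ) := by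
      obtain ⟨t, _, ht⟩ := int_ivt (fun j => S X 0 j ω) hS0 hstep (-(m : ℤ)) (by omega) n hSnm
      exact ⟨t, ht⟩
    set t₀ := Nat.find hex with ht₀
    have hfind := Nat.find_spec hex
    refine ⟨t₀, ⟨hfind, fun s hs => Nat.find_min hex hs⟩, ?_⟩
    -- n > t₀
    obtain ⟨t', ht'n, ht'⟩ := int_ivt (fun j => S X 0 j ω) hS0 hstep (-(m : ℤ)) (by omega) n hSnm
    have htn : t₀ ≤ n := le_trans (Nat.find_min' hex ht') ht'n
    have hne : n ≠ t₀ := by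
      intro h; rw [h, hfind] at hSn; omega
    have hlt : t₀ < n := lt_of_le_of_ne htn (Ne.symm hne)
    refine ⟨n - t₀, by omega, ?_⟩
    have := S_add (X := X) t₀ (n - t₀) ω
    rw [Nat.add_sub_cancel' hlt.le] at this
    rw [hSn, hfind] at this
    push_cast at this ⊢
    omega
  · rintro ⟨⟨t, ⟨hft, _⟩, ⟨n', hn'1, hS⟩⟩, hG⟩
    refine ⟨⟨t + n', by omega, ?_⟩, hG⟩
    rw [S_add, hft, hS]
    push_cast
    ring

lemma one_step_set (k : ℕ) :
    Hit X 0 1 ∩ {ω | X 0 ω = (k : ℤ)} = {ω | X 0 ω = (k : ℤ)} ∩ Hit X 1 (k + 1) := by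
  ext ω
  simp only [Set.mem_inter_iff, Set.mem_setOf_eq, Hit]
  constructor
  · rintro ⟨⟨n, hn1, hSn⟩, hX0⟩
    refine ⟨hX0, ?_⟩
    have hS1 : S X 0 1 ω = (k : ℤ) := by simp [S, hX0]
    have hn2 : 2 ≤ n := by
      by_contra hcon
      have hn : n = 1 := by omega
      rw [hn] at hSn
      rw [hSn] at hS1
      omega
    refine ⟨n - 1, by omega, ?_⟩
    have := S_add (X := X) 1 (n - 1) ω
    rw [Nat.add_sub_cancel' (by omega : 1 ≤ n)] at this
    rw [hSn, hS1] at this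
    push_cast at this ⊢
    omega
  · rintro ⟨hX0, ⟨n', hn'1, hS⟩⟩
    refine ⟨⟨1 + n', by omega, ?_⟩, hX0⟩
    rw [S_add, hS]
    have hS1 : S X 0 1 ω = (k : ℤ) := by simp [S, hX0]
    rw [hS1]
    push_cast
    ring

end Decomp

section Prob

variable (hmeas : ∀ n, Measurable (X n))
variable (hindep : iIndepFun X ℙ)
variable (hident : ∀ n, IdentDistrib (X n) (X 0) ℙ ℙ)
variable (hskip : ∀ᵐ ω ∂ℙ, -1 ≤ X 0 ω)

include hmeas hident hskip in
lemma meas_lt_neg_one (i : ℕ) : ℙ (X i ⁻¹' {z : ℤ | z < -1}) = 0 := by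
  have hms : MeasurableSet {z : ℤ | z < -1} := measurableSet_Iio
  rw [← Measure.map_apply (hmeas i) hms, (hident i).map_eq,
    Measure.map_apply (hmeas 0) hms]
  rw [ae_iff] at hskip
  convert hskip using 2
  ext ω; simp

include hmeas hident hskip in
lemma aeG : ℙ ({ω | ∀ i, -1 ≤ X i ω}ᶜ) = 0 := by
  have : {ω | ∀ i, -1 ≤ X i ω}ᶜ = ⋃ i, X i ⁻¹' {z : ℤ | z < -1} := by
    ext ω; simp [not_le]
  rw [this]
  exact measure_iUnion_null fun i => meas_lt_neg_one hmeas hident hskip i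

include hmeas in
lemma mFst (m t : ℕ) : MeasurableSet (Fst X m t) := by
  rw [Fst_eq_preimage]
  exact mtup hmeas 0 t (mAset m t)

include hmeas hindep hident hskip in
lemma hit_succ {m : ℕ} (hm : 1 ≤ m) :
    ℙ (Hit X 0 (m + 1)) = ℙ (Hit X 0 m) * ℙ (Hit X 0 1) := by
  have hG := aeG hmeas hident hskip
  rw [← measure_inter_conull (s := Hit X 0 (m + 1)) hG, decomp hm,
    measure_inter_conull hG]
  rw [measure_iUnion ((Fst_disjoint m).mono fun t t' h =>
      h.mono Set.inter_subset_left Set.inter_subset_left)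
    (fun t => (mFst hmeas m t).inter (mHit hmeas t 1))]
  have hterm : ∀ t, ℙ (Fst X m t ∩ Hit X t 1) = ℙ (Fst X m t) * ℙ (Hit X 0 1) := by
    intro t
    rw [Fst_eq_preimage]
    exact indep_hit hmeas hindep hident t 1 (mAset m t)
  simp_rw [hterm]
  rw [ENNReal.tsum_mul_right, ← measure_iUnion (Fst_disjoint m) (fun t => mFst hmeas m t),
    Fst_iUnion hm]

include hmeas hindep hident hskip in
lemma hit_pow (m : ℕ) : ℙ (Hit X 0 (m + 1)) = ℙ (Hit X 0 1) ^ (m + 1) := by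
  induction m with
  | zero => simp
  | succ m ih =>
    rw [hit_succ hmeas hindep hident hskip (by omega : 1 ≤ m + 1), ih]
    ring

lemma neg_one_subset_hit : {ω | X 0 ω = (-1 : ℤ)} ⊆ Hit X 0 1 := by
  intro ω h
  exact ⟨1, le_rfl, by simpa [S] using h⟩

include hmeas hindep hident hskip in
lemma one_step_prob (k : ℕ) :
    ℙ (Hit X 0 1 ∩ {ω | X 0 ω = (k : ℤ)})
      = ℙ {ω | X 0 ω = (k : ℤ)} * ℙ (Hit X 0 1) ^ (k + 1) := by
  rw [one_step_set]
  have hset : {ω | X 0 ω = (k : ℤ)} = tup X 0 1 ⁻¹' {u : Fin 1 → ℤ | u 0 = (k : ℤ)} := by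
    ext ω; simp [tup]
  have hA : MeasurableSet {u : Fin 1 → ℤ | u 0 = (k : ℤ)} :=
    (measurable_pi_apply 0) (measurableSet_singleton _)
  rw [hset, indep_hit hmeas hindep hident 1 (k + 1) hA, ← hset,
    hit_pow hmeas hindep hident hskip k]

include hmeas hindep hident hskip in
lemma fixed_point :
    ℙ (Hit X 0 1) = ℙ {ω | X 0 ω = (-1 : ℤ)}
      + ∑' k : ℕ, ℙ {ω | X 0 ω = (k : ℤ)} * ℙ (Hit X 0 1) ^ (k + 1) := by
  have hcover : Hit X 0 1 = ⋃ j : ℤ, (Hit X 0 1 ∩ X 0 ⁻¹' {j}) := by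
    ext ω
    simp only [Set.mem_iUnion, Set.mem_inter_iff, Set.mem_preimage, Set.mem_singleton_iff]
    exact ⟨fun h => ⟨X 0 ω, h, rfl⟩, fun ⟨j, h, _⟩ => h⟩
  have hdisj : Pairwise (Function.onFun Disjoint (fun j : ℤ => Hit X 0 1 ∩ X 0 ⁻¹' {j})) := by
    intro j j' hjj'
    rw [Function.onFun, Set.disjoint_left]
    rintro ω ⟨_, h1⟩ ⟨_, h2⟩
    simp only [Set.mem_preimage, Set.mem_singleton_iff] at h1 h2
    exact hjj' (h1 ▸ h2 ▸ rfl)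
  have hmeasj : ∀ j : ℤ, MeasurableSet (Hit X 0 1 ∩ X 0 ⁻¹' {j}) := fun j =>
    (mHit hmeas 0 1).inter ((hmeas 0) (measurableSet_singleton j))
  nth_rewrite 1 [hcover]
  rw [measure_iUnion hdisj hmeasj]
  rw [ENNReal.tsum_eq_add_tsum_ite (-1 : ℤ)]
  congr 1
  · have : Hit X 0 1 ∩ X 0 ⁻¹' {(-1 : ℤ)} = {ω | X 0 ω = (-1 : ℤ)} := by
      apply Set.inter_eq_self_of_subset_right
      exact neg_one_subset_hit
    rw [this]
  · have hinj : Function.Injective (fun k : ℕ => (k : ℤ)) := fun a b h => by simpa using h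
    refine ((Function.Injective.tsum_eq hinj ?_).symm).trans (tsum_congr ?_)
    · intro j hj
      simp only [Function.mem_support, ne_eq, ite_eq_left_iff, not_forall] at hj
      obtain ⟨hj1, hj2⟩ := hj
      rcases le_or_gt 0 j with h | h
      · exact ⟨j.toNat, by simp [Int.toNat_of_nonneg h]⟩
      · exfalso
        apply hj2
        apply measure_mono_null (Set.inter_subset_right.trans ?_)
          (meas_lt_neg_one hmeas hident hskip 0)
        intro ω hω
        simp only [Set.mem_preimage, Set.mem_singleton_iff] at hω
        simp only [Set.mem_preimage, Set.mem_setOf_eq, hω]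
        omega
    · intro k
      rw [if_neg (by omega : ¬ ((k : ℤ) = -1))]
      have : X 0 ⁻¹' {(k : ℤ)} = {ω | X 0 ω = (k : ℤ)} := rfl
      rw [this, one_step_prob hmeas hindep hident hskip k]

end Prob

section CLT1

variable (hmeas : ∀ n, Measurable (X n))
variable (hindep : iIndepFun X ℙ)
variable (hident : ∀ n, IdentDistrib (X n) (X 0) ℙ ℙ)
variable (hskip : ∀ᵐ ω ∂ℙ, -1 ≤ X 0 ω)

lemma hit_antitone :
    Antitone (fun m => Hit X 0 (m + 1) ∩ {ω | ∀ i, -1 ≤ X i ω}) := by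
  apply antitone_nat_of_succ_le
  intro m ω hω
  obtain ⟨⟨n, hn1, hSn⟩, hG⟩ := hω
  refine ⟨?_, hG⟩
  have hstep : ∀ j, S X 0 j ω - 1 ≤ S X 0 (j + 1) ω := by
    intro j
    have := hG j
    have h1 : S X 0 (j + 1) ω = S X 0 j ω + X j ω := by
      unfold S; rw [Finset.sum_range_succ]; simp
    omega
  have hS0 : S X 0 0 ω = 0 := by simp [S]
  have hSnm : S X 0 n ω ≤ -((m : ℤ) + 1) := by rw [hSn]; push_cast; omega
  obtain ⟨t, htn, ht⟩ := int_ivt (fun j => S X 0 j ω) hS0 hstep (-((m : ℤ) + 1))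
    (by omega) n hSnm
  refine ⟨t, ?_, by rw [ht]; push_cast; ring⟩
  rcases Nat.eq_zero_or_pos t with rfl | h
  · exfalso; rw [hS0] at ht; omega
  · exact h

include hmeas hindep hident hskip in
lemma c_lt_one (hint : Integrable (fun ω => (X 0 ω : ℝ)) ℙ)
    (hmean : 0 < ∫ ω, (X 0 ω : ℝ) ∂ℙ) : ℙ (Hit X 0 1) < 1 := by
  set G := {ω | ∀ i, -1 ≤ X i ω} with hGdef
  set D := fun m => Hit X 0 (m + 1) ∩ G with hDdef
  have hDmeas : ∀ m, MeasurableSet (D m) := by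
    intro m
    apply (mHit hmeas 0 (m + 1)).inter
    have : G = ⋂ i, X i ⁻¹' {z : ℤ | -1 ≤ z} := by ext ω; simp [hGdef]
    rw [this]
    exact MeasurableSet.iInter fun i => (hmeas i) measurableSet_Ici
  have hDval : ∀ m, ℙ (D m) = ℙ (Hit X 0 1) ^ (m + 1) := by
    intro m
    rw [hDdef]
    simp only
    rw [measure_inter_conull (aeG hmeas hident hskip), hit_pow hmeas hindep hident hskip]
  -- SLLN
  have hindep' : Pairwise (Function.onFun (IndepFun · · ℙ) (fun n ω => (X n ω : ℝ))) := by
    intro i j hij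
    exact (hindep.indepFun hij).comp measurable_from_top measurable_from_top
  have hident' : ∀ i, IdentDistrib (fun ω => (X i ω : ℝ)) (fun ω => (X 0 ω : ℝ)) ℙ ℙ :=
    fun i => (hident i).comp measurable_from_top
  have hSLLN := strong_law_ae (fun n ω => (X n ω : ℝ)) hint hindep' hident'
  -- the intersection of the D m is null
  have hnull : ℙ (⋂ m, D m) = 0 := by
    apply measure_mono_null ?_ (ae_iff.1 hSLLN)
    intro ω hω
    simp only [Set.mem_setOf_eq]
    intro hT
    have hG : ω ∈ G := (Set.mem_iInter.1 hω 0).2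
    have hcast : ∀ n : ℕ, (∑ i ∈ Finset.range n, (X i ω : ℝ)) = ((S X 0 n ω : ℤ) : ℝ) := by
      intro n
      rw [S]
      push_cast
      apply Finset.sum_congr rfl
      intro i _
      norm_num
    have hev := hT.eventually (eventually_gt_nhds hmean)
    obtain ⟨N₀, hN₀⟩ := Filter.eventually_atTop.1 hev
    have hpos : ∀ n, max N₀ 1 ≤ n → 0 < S X 0 n ω := by
      intro n hn
      have h1 := hN₀ n (le_trans (le_max_left _ _) hn)
      rw [smul_eq_mul, hcast n] at h1
      have hninv : (0 : ℝ) < (n : ℝ)⁻¹ := by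
        have : (1 : ℕ) ≤ n := le_trans (le_max_right _ _) hn
        positivity
      by_contra hcon
      push_neg at hcon
      have : ((S X 0 n ω : ℤ) : ℝ) ≤ 0 := by exact_mod_cast hcon
      nlinarith
    set K := (Finset.range (max N₀ 1 + 1)).sup (fun n => (S X 0 n ω).natAbs) with hK
    obtain ⟨⟨n, hn1, hSn⟩, _⟩ := Set.mem_iInter.1 hω K
    rcases le_or_gt n (max N₀ 1) with h | h
    · have hle : (S X 0 n ω).natAbs ≤ K :=
        Finset.le_sup (f := fun n => (S X 0 n ω).natAbs) (Finset.mem_range.2 (by omega))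
      have heq : (S X 0 n ω).natAbs = K + 1 := by rw [hSn]; omega
      omega
    · have := hpos n h.le
      rw [hSn] at this
      omega
  have htend := tendsto_measure_iInter_atTop (μ := (ℙ : Measure Ω)) (s := D)
    (fun m => (hDmeas m).nullMeasurableSet) (hit_antitone) ⟨0, measure_ne_top _ _⟩
  rw [hnull] at htend
  simp_rw [Function.comp_def, hDval] at htend
  rcases lt_or_eq_of_le (prob_le_one (μ := (ℙ : Measure Ω)) (s := Hit X 0 1)) with h | h
  · exact h
  · exfalso
    rw [h] at htend
    simp only [one_pow] at htend
    exact one_ne_zero (tendsto_nhds_unique htend tendsto_const_nhds).symm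

end CLT1

section Dist

variable (hmeas : ∀ n, Measurable (X n))
variable (hident : ∀ n, IdentDistrib (X n) (X 0) ℙ ℙ)
variable (hskip : ∀ᵐ ω ∂ℙ, -1 ≤ X 0 ω)

include hmeas hident hskip in
lemma total_mass :
    ℙ {ω | X 0 ω = (-1 : ℤ)} + ∑' k : ℕ, ℙ {ω | X 0 ω = (k : ℤ)} = 1 := by
  have hcover : (Set.univ : Set Ω) = ⋃ j : ℤ, X 0 ⁻¹' {j} := by
    ext ω; simp
  have hdisj : Pairwise (Function.onFun Disjoint (fun j : ℤ => X 0 ⁻¹' {j})) := by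
    intro j j' hjj'
    rw [Function.onFun, Set.disjoint_left]
    rintro ω h1 h2
    simp only [Set.mem_preimage, Set.mem_singleton_iff] at h1 h2
    exact hjj' (h1 ▸ h2 ▸ rfl)
  have hmeasj : ∀ j : ℤ, MeasurableSet (X 0 ⁻¹' {j}) := fun j =>
    (hmeas 0) (measurableSet_singleton j)
  have h1 : (1 : ℝ≥0∞) = ∑' j : ℤ, ℙ (X 0 ⁻¹' {j}) := by
    rw [← measure_iUnion hdisj hmeasj, ← hcover, measure_univ]
  rw [h1, ENNReal.tsum_eq_add_tsum_ite (-1 : ℤ)]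
  have hinj : Function.Injective (fun k : ℕ => (k : ℤ)) := fun a b h => by simpa using h
  congr 1
  refine (tsum_congr ?_).trans (Function.Injective.tsum_eq hinj ?_)
  · intro k
    rw [if_neg (by omega : ¬ ((k : ℤ) = -1))]
    rfl
  · intro j hj
    simp only [Function.mem_support, ne_eq, ite_eq_left_iff, not_forall] at hj
    obtain ⟨hj1, hj2⟩ := hj
    rcases le_or_gt 0 j with h | h
    · exact ⟨j.toNat, by simp [Int.toNat_of_nonneg h]⟩
    · exfalso
      apply hj2
      apply measure_mono_null ?_ (meas_lt_neg_one hmeas hident hskip 0)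
      intro ω hω
      simp only [Set.mem_preimage, Set.mem_singleton_iff] at hω
      simp only [Set.mem_preimage, Set.mem_setOf_eq, hω]
      omega

include hmeas in
lemma abs_summable (hint : Integrable (fun ω => (X 0 ω : ℝ)) ℙ) :
    Summable (fun j : ℤ => |(j : ℝ)| * (ℙ {ω | X 0 ω = j}).toReal) := by
  have hfin : ∑' j : ℤ, (‖(j : ℝ)‖₊ : ℝ≥0∞) * ℙ {ω | X 0 ω = j} ≠ ⊤ := by
    have h1 : ∑' j : ℤ, (‖(j : ℝ)‖₊ : ℝ≥0∞) * ℙ {ω | X 0 ω = j}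
        = ∫⁻ j : ℤ, (‖(j : ℝ)‖₊ : ℝ≥0∞) ∂(Measure.map (X 0) ℙ) := by
      rw [lintegral_countable' (fun j : ℤ => (‖(j : ℝ)‖₊ : ℝ≥0∞))]
      apply tsum_congr
      intro j
      rw [Measure.map_apply (hmeas 0) (measurableSet_singleton j)]
      rfl
    have h2 : ∫⁻ j : ℤ, (‖(j : ℝ)‖₊ : ℝ≥0∞) ∂(Measure.map (X 0) ℙ)
        = ∫⁻ ω, (‖(X 0 ω : ℝ)‖₊ : ℝ≥0∞) ∂ℙ := by
      rw [lintegral_map measurable_from_top (hmeas 0)]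
    rw [h1, h2]
    exact hint.hasFiniteIntegral.ne
  have := ENNReal.summable_toReal hfin
  apply Summable.congr this
  intro j
  rw [ENNReal.toReal_mul, ENNReal.coe_toReal, coe_nnnorm, Real.norm_eq_abs]

include hmeas hskip in
lemma exists_pos_step (hint : Integrable (fun ω => (X 0 ω : ℝ)) ℙ)
    (hmean : 0 < ∫ ω, (X 0 ω : ℝ) ∂ℙ) :
    ∃ k : ℕ, 1 ≤ k ∧ ℙ {ω | X 0 ω = (k : ℤ)} ≠ 0 := by
  by_contra hcon
  push_neg at hcon
  have hae : ∀ᵐ ω ∂ℙ, (X 0 ω : ℝ) ≤ 0 := by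
    rw [ae_iff]
    have : {ω | ¬ (X 0 ω : ℝ) ≤ 0} = ⋃ k : ℕ, {ω | X 0 ω = ((k : ℤ) + 1)} := by
      ext ω
      simp only [Set.mem_setOf_eq, not_le, Set.mem_iUnion]
      constructor
      · intro h
        have h0 : 0 < X 0 ω := by exact_mod_cast h
        exact ⟨(X 0 ω - 1).toNat, by omega⟩
      · rintro ⟨k, hk⟩
        have : (0 : ℤ) < X 0 ω := by omega
        exact_mod_cast this
    rw [this]
    apply measure_iUnion_null
    intro k
    have : ((k : ℤ) + 1) = ((k + 1 : ℕ) : ℤ) := by push_cast; ring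
    rw [this]
    exact hcon (k + 1) (by omega)
  have := integral_nonpos_of_ae hae
  linarith

end Dist

omit [MeasureSpace Ω] [IsProbabilityMeasure (ℙ : Measure Ω)] in
lemma arith (p : ℕ → ℝ) (q c : ℝ) (hp : ∀ k, 0 ≤ p k) (hq : 0 < q)
    (hc0 : 0 < c) (hc1 : c < 1)
    (hsum_p : Summable p) (hkp : Summable (fun k : ℕ => (k : ℝ) * p k))
    (htm : q + ∑' k, p k = 1)
    (hS1 : Summable (fun k => p k * c ^ (k + 1)))
    (hfp : c = q + ∑' k, p k * c ^ (k + 1))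
    (k₀ : ℕ) (hk₀1 : 1 ≤ k₀) (hpk₀ : 0 < p k₀) :
    Summable (fun k : ℕ => (k : ℝ) * p k * c ^ k) ∧
      (∑' k : ℕ, (k : ℝ) * p k * c ^ k) < q / c := by
  have hcpow0 : ∀ k : ℕ, 0 ≤ c ^ k := fun k => pow_nonneg hc0.le k
  have hcpow1 : ∀ k : ℕ, c ^ k ≤ 1 := fun k => pow_le_one₀ hc0.le hc1.le
  -- summability facts
  have hsum3 : Summable (fun k : ℕ => p k * c ^ k) := by
    apply Summable.of_nonneg_of_le (fun k => mul_nonneg (hp k) (hcpow0 k))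
      (fun k => ?_) hsum_p
    calc p k * c ^ k ≤ p k * 1 := by
          apply mul_le_mul_of_nonneg_left (hcpow1 k) (hp k)
      _ = p k := mul_one _
  have hsum_target : Summable (fun k : ℕ => (k : ℝ) * p k * c ^ k) := by
    apply Summable.of_nonneg_of_le
      (fun k => mul_nonneg (mul_nonneg (Nat.cast_nonneg k) (hp k)) (hcpow0 k)) (fun k => ?_) hkp
    calc (k : ℝ) * p k * c ^ k ≤ (k : ℝ) * p k * 1 := by
          apply mul_le_mul_of_nonneg_left (hcpow1 k) (mul_nonneg (Nat.cast_nonneg k) (hp k))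
      _ = (k : ℝ) * p k := mul_one _
  have hsumg : Summable (fun k : ℕ => ((k : ℝ) + 1) * p k * c ^ k) := by
    apply (hsum_target.add hsum3).congr
    intro k; ring
  have hsumkp1 : Summable (fun k : ℕ => ((k : ℝ) + 1) * p k) := by
    apply (hkp.add hsum_p).congr
    intro k; ring
  have hsumh : Summable (fun k : ℕ => p k * ∑ j ∈ Finset.range (k + 1), c ^ j) := by
    apply Summable.of_nonneg_of_le (fun k => ?_) (fun k => ?_) hsumkp1
    · apply mul_nonneg (hp k)
      exact Finset.sum_nonneg fun j _ => hcpow0 j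
    · calc p k * ∑ j ∈ Finset.range (k + 1), c ^ j
          ≤ p k * ∑ j ∈ Finset.range (k + 1), (1 : ℝ) := by
            apply mul_le_mul_of_nonneg_left ?_ (hp k)
            exact Finset.sum_le_sum fun j _ => hcpow1 j
        _ = ((k : ℝ) + 1) * p k := by
            simp [Finset.sum_const, Finset.card_range]
            ring
  -- termwise comparison
  have hle : ∀ k : ℕ, ((k : ℝ) + 1) * p k * c ^ k ≤ p k * ∑ j ∈ Finset.range (k + 1), c ^ j := by
    intro k
    have h1 : ((k : ℝ) + 1) * c ^ k ≤ ∑ j ∈ Finset.range (k + 1), c ^ j := by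
      have : ∑ j ∈ Finset.range (k + 1), c ^ k ≤ ∑ j ∈ Finset.range (k + 1), c ^ j :=
        Finset.sum_le_sum fun j hj =>
          pow_le_pow_of_le_one hc0.le hc1.le (by simpa using Nat.lt_succ_iff.1 (Finset.mem_range.1 hj))
      simpa [Finset.sum_const, Finset.card_range, add_comm] using this
    calc ((k : ℝ) + 1) * p k * c ^ k = p k * (((k : ℝ) + 1) * c ^ k) := by ring
      _ ≤ p k * ∑ j ∈ Finset.range (k + 1), c ^ j := mul_le_mul_of_nonneg_left h1 (hp k)
  have hstrict : ((k₀ : ℝ) + 1) * p k₀ * c ^ k₀ < p k₀ * ∑ j ∈ Finset.range (k₀ + 1), c ^ j := by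
    have h1 : ((k₀ : ℝ) + 1) * c ^ k₀ < ∑ j ∈ Finset.range (k₀ + 1), c ^ j := by
      have hlt : ∑ j ∈ Finset.range (k₀ + 1), c ^ k₀ < ∑ j ∈ Finset.range (k₀ + 1), c ^ j := by
        apply Finset.sum_lt_sum
        · intro j hj
          exact pow_le_pow_of_le_one hc0.le hc1.le
            (by simpa using Nat.lt_succ_iff.1 (Finset.mem_range.1 hj))
        · refine ⟨0, Finset.mem_range.2 (by omega), ?_⟩
          simpa using pow_lt_one₀ hc0.le hc1 (by omega : k₀ ≠ 0)
      simpa [Finset.sum_const, Finset.card_range, add_comm] using hlt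
    calc ((k₀ : ℝ) + 1) * p k₀ * c ^ k₀ = p k₀ * (((k₀ : ℝ) + 1) * c ^ k₀) := by ring
      _ < p k₀ * ∑ j ∈ Finset.range (k₀ + 1), c ^ j := by
          exact (mul_lt_mul_iff_right₀ hpk₀).2 h1
  have hglt : (∑' k : ℕ, ((k : ℝ) + 1) * p k * c ^ k)
      < ∑' k : ℕ, p k * ∑ j ∈ Finset.range (k + 1), c ^ j :=
    Summable.tsum_lt_tsum hle hstrict hsumg hsumh
  -- the RHS sums to 1
  have hcne1 : c ≠ 1 := hc1.ne
  have hhval : (∑' k : ℕ, p k * ∑ j ∈ Finset.range (k + 1), c ^ j) = 1 := by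
    have hre : ∀ k : ℕ, p k * ∑ j ∈ Finset.range (k + 1), c ^ j
        = (p k * c ^ (k + 1) - p k) * (c - 1)⁻¹ := by
      intro k
      rw [geom_sum_eq hcne1]
      field_simp
    calc (∑' k : ℕ, p k * ∑ j ∈ Finset.range (k + 1), c ^ j)
        = ∑' k : ℕ, (p k * c ^ (k + 1) - p k) * (c - 1)⁻¹ := tsum_congr hre
      _ = (∑' k : ℕ, (p k * c ^ (k + 1) - p k)) * (c - 1)⁻¹ := tsum_mul_right
      _ = ((∑' k : ℕ, p k * c ^ (k + 1)) - ∑' k : ℕ, p k) * (c - 1)⁻¹ := by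
          rw [Summable.tsum_sub hS1 hsum_p]
      _ = 1 := by
          have h1 : (∑' k : ℕ, p k * c ^ (k + 1)) = c - q := by linarith
          have h2 : (∑' k : ℕ, p k) = 1 - q := by linarith
          rw [h1, h2, show c - q - (1 - q) = c - 1 by ring,
            mul_inv_cancel₀ (sub_ne_zero.2 hcne1)]
  have hglt1 : (∑' k : ℕ, ((k : ℝ) + 1) * p k * c ^ k) < 1 := by
    exact hglt.trans_eq hhval
  -- identify the target sum
  have htsplit : (∑' k : ℕ, ((k : ℝ) + 1) * p k * c ^ k)
      = (∑' k : ℕ, (k : ℝ) * p k * c ^ k) + ∑' k : ℕ, p k * c ^ k := by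
    rw [← Summable.tsum_add hsum_target hsum3]
    apply tsum_congr; intro k; ring
  have hqc : q / c = 1 - ∑' k : ℕ, p k * c ^ k := by
    have h3 : (∑' k : ℕ, p k * c ^ (k + 1)) = (∑' k : ℕ, p k * c ^ k) * c := by
      rw [← tsum_mul_right]
      apply tsum_congr; intro k; ring
    have h4 : q = c - (∑' k : ℕ, p k * c ^ k) * c := by
      rw [← h3]; linarith
    rw [h4]
    field_simp
  refine ⟨hsum_target, ?_⟩
  rw [hqc]
  have := hglt1
  rw [htsplit] at this
  linarith

end TiltedWalkAux

open TiltedWalkAux in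
/-- If `E[X_0] > 0`, the tilted step distribution `k ↦ P[X_0 = k]·c^k` has strictly
negative mean: `∑_{k=0}^∞ k · P[X_0 = k] · c^k` is summable and strictly less than
`P[X_0 = -1] / c`. -/
theorem tilted_walk_negative_mean
    {Ω : Type*} [MeasureSpace Ω] [IsProbabilityMeasure (ℙ : Measure Ω)]
    (X : ℕ → Ω → ℤ) (hmeas : ∀ n, Measurable (X n))
    (hindep : iIndepFun X ℙ)
    (hident : ∀ n, IdentDistrib (X n) (X 0) ℙ ℙ)
    (hskip : ∀ᵐ ω ∂ℙ, -1 ≤ X 0 ω)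
    (hneg : 0 < ℙ {ω | X 0 ω = -1})
    (hint : Integrable (fun ω => (X 0 ω : ℝ)) ℙ)
    (hmean : 0 < ∫ ω, (X 0 ω : ℝ) ∂ℙ)
    (c : ℝ)
    (hc : c = (ℙ {ω | ∃ n : ℕ, 1 ≤ n ∧ (∑ i ∈ Finset.range n, X i ω) = -1}).toReal) :
    Summable (fun k : ℕ => (k : ℝ) * (ℙ {ω | X 0 ω = (k : ℤ)}).toReal * c ^ k) ∧
      (∑' k : ℕ, (k : ℝ) * (ℙ {ω | X 0 ω = (k : ℤ)}).toReal * c ^ k) <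
        (ℙ {ω | X 0 ω = -1}).toReal / c := by
  have hhit_eq : {ω | ∃ n : ℕ, 1 ≤ n ∧ (∑ i ∈ Finset.range n, X i ω) = -1} = Hit X 0 1 := by
    ext ω; simp [Hit, S]
  have hcC : c = (ℙ (Hit X 0 1)).toReal := by rw [hc, hhit_eq]
  have hCne : ℙ (Hit X 0 1) ≠ ⊤ := measure_ne_top _ _
  have hQC : ℙ {ω | X 0 ω = -1} ≤ ℙ (Hit X 0 1) := measure_mono neg_one_subset_hit
  have hC0 : ℙ (Hit X 0 1) ≠ 0 := (lt_of_lt_of_le hneg hQC).ne'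
  have hC1 : ℙ (Hit X 0 1) < 1 := c_lt_one hmeas hindep hident hskip hint hmean
  have hc0 : 0 < c := by rw [hcC]; exact ENNReal.toReal_pos hC0 hCne
  have hclt1 : c < 1 := by
    rw [hcC]
    have h := (ENNReal.toReal_lt_toReal hCne ENNReal.one_ne_top).2 hC1
    simpa using h
  have hqpos : 0 < (ℙ {ω | X 0 ω = -1}).toReal :=
    ENNReal.toReal_pos hneg.ne' (measure_ne_top _ _)
  -- total mass
  have htmE := total_mass hmeas hident hskip
  have htsum_ne : (∑' k : ℕ, ℙ {ω | X 0 ω = (k : ℤ)}) ≠ ⊤ := by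
    intro h
    rw [h] at htmE
    simp at htmE
  have hSump : Summable (fun k : ℕ => (ℙ {ω | X 0 ω = (k : ℤ)}).toReal) :=
    ENNReal.summable_toReal htsum_ne
  have htm_real : (ℙ {ω | X 0 ω = -1}).toReal
      + ∑' k : ℕ, (ℙ {ω | X 0 ω = (k : ℤ)}).toReal = 1 := by
    have h := congrArg ENNReal.toReal htmE
    rw [ENNReal.toReal_add (measure_ne_top _ _) htsum_ne,
      ENNReal.tsum_toReal_eq (fun k => measure_ne_top _ _)] at h
    simpa using h
  -- summability of k * p k
  have hinj : Function.Injective (fun k : ℕ => (k : ℤ)) := fun a b h => by simpa using h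
  have hkp : Summable (fun k : ℕ => (k : ℝ) * (ℙ {ω | X 0 ω = (k : ℤ)}).toReal) := by
    have h := (abs_summable hmeas hint).comp_injective hinj
    apply h.congr
    intro k
    simp [Function.comp]
  -- fixed point, real version
  have hfpE := fixed_point hmeas hindep hident hskip
  have hT2le : (∑' k : ℕ, ℙ {ω | X 0 ω = (k : ℤ)} * ℙ (Hit X 0 1) ^ (k + 1))
      ≤ ℙ (Hit X 0 1) := by
    conv_rhs => rw [hfpE]
    exact le_add_self
  have hT2ne : (∑' k : ℕ, ℙ {ω | X 0 ω = (k : ℤ)} * ℙ (Hit X 0 1) ^ (k + 1)) ≠ ⊤ :=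
    ne_top_of_le_ne_top hCne hT2le
  have htermne : ∀ k : ℕ, ℙ {ω | X 0 ω = (k : ℤ)} * ℙ (Hit X 0 1) ^ (k + 1) ≠ ⊤ :=
    fun k => ENNReal.mul_ne_top (measure_ne_top _ _) (ENNReal.pow_ne_top hCne)
  have h5 : ∀ k : ℕ, (ℙ {ω | X 0 ω = (k : ℤ)} * ℙ (Hit X 0 1) ^ (k + 1)).toReal
      = (ℙ {ω | X 0 ω = (k : ℤ)}).toReal * c ^ (k + 1) := by
    intro k
    rw [ENNReal.toReal_mul, ENNReal.toReal_pow, hcC]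
  have hS1 : Summable (fun k : ℕ => (ℙ {ω | X 0 ω = (k : ℤ)}).toReal * c ^ (k + 1)) := by
    have h := ENNReal.summable_toReal hT2ne
    exact h.congr h5
  have hfp_real : c = (ℙ {ω | X 0 ω = -1}).toReal
      + ∑' k : ℕ, (ℙ {ω | X 0 ω = (k : ℤ)}).toReal * c ^ (k + 1) := by
    have h := congrArg ENNReal.toReal hfpE
    rw [ENNReal.toReal_add (measure_ne_top _ _) hT2ne,
      ENNReal.tsum_toReal_eq htermne] at h
    refine hcC.trans (h.trans ?_)
    congr 1
    exact tsum_congr h5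
  obtain ⟨k₀, hk₀1, hk₀⟩ := exists_pos_step hmeas hskip hint hmean
  have hpk₀pos : 0 < (ℙ {ω | X 0 ω = (k₀ : ℤ)}).toReal :=
    ENNReal.toReal_pos hk₀ (measure_ne_top _ _)
  exact arith (fun k : ℕ => (ℙ {ω | X 0 ω = (k : ℤ)}).toReal) (ℙ {ω | X 0 ω = -1}).toReal c
    (fun k => ENNReal.toReal_nonneg) hqpos hc0 hclt1 hSump hkp htm_real hS1 hfp_real
    k₀ hk₀1 hpk₀pos
end
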